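/- arXiv:2209.09049 — 3 statements merged into one kernel-verified Lean document; each statement's English description precedes it below -/
import Mathlib

section
/- For every graph G in the support of D_r^{MIS} and every maximal independent set Γ of G, at least one of the following holds: (1) Γ ∩ σ(P[U]) is a maximal independent set of the subgraph of G induced on σ(P[U]); (2) Γ ∩ σ(P[V]) is a maximal independent set of the subgraph of G induced on σ(P[V]); here P[U] and P[V] denote the sets of principal vertices of the two half-instances on U and V, and σ is the applied vertex permutation. More generally, this holds for any graph whose vertex set is partitioned into P_U, F_U, P_V, F_V such that the set of edges between P_U ∪ F_U and P_V ∪ F_V is exactly all pairs in F_U × F_V. -/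
/-! ### Graph notions -/

/-- `S` is a maximal independent set of `G`. -/
def IsMIS {V : Type*} (G : SimpleGraph V) (S : Set V) : Prop :=
  (∀ u ∈ S, ∀ v ∈ S, ¬ G.Adj u v) ∧ ∀ v, v ∉ S → ∃ u ∈ S, G.Adj u v

/-- `S` is a maximal independent set of the subgraph of `G` induced on `A`. -/
def IsMISOn {V : Type*} (G : SimpleGraph V) (A S : Set V) : Prop :=
  S ⊆ A ∧ (∀ u ∈ S, ∀ v ∈ S, ¬ G.Adj u v) ∧ ∀ v ∈ A, v ∉ S → ∃ u ∈ S, G.Adj u v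

/-- A finite set of pairwise disjoint (vertex-)pairs. -/
def IsDisjointPairs {V : Type*} (M : Finset (Sym2 V)) : Prop :=
  (∀ e ∈ M, ¬ e.IsDiag) ∧ ∀ e ∈ M, ∀ f ∈ M, e ≠ f → ∀ v : V, v ∈ e → v ∉ f

/-- The number of pairs of `M` that are actual edges of `G`. -/
noncomputable def matchedCount {V : Type*} (G : SimpleGraph V) (M : Finset (Sym2 V)) : ℝ :=
  ((M : Set (Sym2 V)) ∩ G.edgeSet).ncard

/-- The maximum size of a matching of `G`. -/
noncomputable def matchingNumber {V : Type*} [Fintype V] (G : SimpleGraph V) : ℕ :=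
  sSup {m | ∃ M : Finset (Sym2 V),
    IsDisjointPairs M ∧ (M : Set (Sym2 V)) ⊆ G.edgeSet ∧ M.card = m}


/-!
Since `FU × FV` is complete bipartite, the independent set `Γ` misses `FU` or `FV`; say it
misses `FV`. Every neighbour of a vertex of `PV` lies in `PV ∪ FV`, so a vertex of `PV` outside
`Γ` is dominated by `Γ` through a vertex of `PV`, and `Γ ∩ PV` stays maximal in `PV`.
-/

namespace IsMIS

variable {V : Type*} {G : SimpleGraph V} {Γ : Set V}

theorem isMISOn_inter_of_disjoint (hΓ : IsMIS G Γ) {P F : Set V} (hΓF : Disjoint Γ F)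
    (hP : ∀ v ∈ P, ∀ u, G.Adj u v → u ∈ P ∪ F) : IsMISOn G P (Γ ∩ P) := by
  refine ⟨Set.inter_subset_right, fun u hu v hv => hΓ.1 u hu.1 v hv.1, fun v hv hvΓP => ?_⟩
  obtain ⟨u, huΓ, huv⟩ := hΓ.2 v fun hvΓ => hvΓP ⟨hvΓ, hv⟩
  have huP : u ∈ P := (hP v hv u huv).resolve_right (Set.disjoint_left.mp hΓF huΓ)
  exact ⟨u, ⟨huΓ, huP⟩, huv⟩

theorem disjoint_or_disjoint_of_forall_adj (hΓ : IsMIS G Γ) {A B : Set V}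
    (hAB : ∀ a ∈ A, ∀ b ∈ B, G.Adj a b) : Disjoint Γ A ∨ Disjoint Γ B := by
  by_contra! h
  obtain ⟨a, haΓ, haA⟩ := Set.not_disjoint_iff.mp h.1
  obtain ⟨b, hbΓ, hbB⟩ := Set.not_disjoint_iff.mp h.2
  exact hΓ.1 a haΓ b hbΓ (hAB a haA b hbB)

end IsMIS

theorem mis_solve_half_general {V : Type*} (G : SimpleGraph V) (PU FU PV FV : Set V)
    (hUnion : PU ∪ FU ∪ PV ∪ FV = Set.univ)
    (h1 : Disjoint PU FU) (h6 : Disjoint PV FV)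
    (hcross : ∀ u ∈ PU ∪ FU, ∀ v ∈ PV ∪ FV, (G.Adj u v ↔ u ∈ FU ∧ v ∈ FV))
    (Γ : Set V) (hΓ : IsMIS G Γ) :
    IsMISOn G PU (Γ ∩ PU) ∨ IsMISOn G PV (Γ ∩ PV) := by
  have side : ∀ u, u ∈ PU ∪ FU ∨ u ∈ PV ∪ FV := fun u => by
    rw [← Set.mem_union, ← Set.union_assoc, hUnion]
    exact Set.mem_univ u
  have hU : ∀ v ∈ PU, ∀ u, G.Adj u v → u ∈ PU ∪ FU := fun v hv u huv =>
    (side u).resolve_right fun hu =>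
      Set.disjoint_left.mp h1 hv ((hcross v (Or.inl hv) u hu).1 huv.symm).1
  have hV : ∀ v ∈ PV, ∀ u, G.Adj u v → u ∈ PV ∪ FV := fun v hv u huv =>
    (side u).resolve_left fun hu =>
      Set.disjoint_left.mp h6 hv ((hcross u hu v (Or.inl hv)).1 huv).2
  rcases hΓ.disjoint_or_disjoint_of_forall_adj
      (fun a ha b hb => (hcross a (Or.inr ha) b (Or.inr hb)).2 ⟨ha, hb⟩) with hFU | hFV
  · exact Or.inl (hΓ.isMISOn_inter_of_disjoint hFU hU)
  · exact Or.inr (hΓ.isMISOn_inter_of_disjoint hFV hV)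

/-- Let `G` be a graph whose vertex set is partitioned into four sets
`PU, FU, PV, FV` (principal/fooling vertices of the two half-instances) such that the
edges between the `U`-side `PU ∪ FU` and the `V`-side `PV ∪ FV` are exactly all pairs in
`FU × FV`.  Then every maximal independent set `Γ` of `G` restricts to a maximal
independent set of the induced subgraph on `PU`, or to one of the induced subgraph on
`PV`.  In particular this holds for every graph in the support of `D_r^MIS`, with
`PU, PV` the principal vertices of the two half-instances (after applying the vertex
permutation `σ`). -/
theorem mis_solve_half {V : Type*} (G : SimpleGraph V) (PU FU PV FV : Set V)
    (hUnion : PU ∪ FU ∪ PV ∪ FV = Set.univ)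
    (h1 : Disjoint PU FU) (h2 : Disjoint PU PV) (h3 : Disjoint PU FV)
    (h4 : Disjoint FU PV) (h5 : Disjoint FU FV) (h6 : Disjoint PV FV)
    (hcross : ∀ u ∈ PU ∪ FU, ∀ v ∈ PV ∪ FV, (G.Adj u v ↔ u ∈ FU ∧ v ∈ FV))
    (Γ : Set V) (hΓ : IsMIS G Γ) :
    IsMISOn G PU (Γ ∩ PU) ∨ IsMISOn G PV (Γ ∩ PV) :=
  mis_solve_half_general G PU FU PV FV hUnion h1 h6 hcross Γ hΓ
end

section
/- For each i ∈ [p_r] and each fixed value of (B_i, M^{(1)}_{P,i}, Σ), the conditional distribution of T_i given (B_i, M^{(1)}_{P,i}, Σ) is exactly the product, over the vertices u ∈ Σ(P_i), of the conditional distributions of T_i(u) given (B_i(u), M^{(1)}_{P,i}, Σ). -/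
/-! ### Finite probability and information-theory helpers -/

open Classical in
noncomputable def probEvent {Ω : Type*} [Fintype Ω] (p : Ω → ℝ) (E : Ω → Prop) : ℝ :=
  ∑ ω, if E ω then p ω else 0

noncomputable def condProb {Ω : Type*} [Fintype Ω] (p : Ω → ℝ) (E F : Ω → Prop) : ℝ :=
  probEvent p (fun ω => E ω ∧ F ω) / probEvent p F

open Classical in
noncomputable def entropy {Ω A : Type*} [Fintype Ω] (p : Ω → ℝ) (X : Ω → A) : ℝ :=
  ∑ a ∈ Finset.univ.image X, Real.negMulLog (probEvent p (fun ω => X ω = a))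

noncomputable def condEntropy {Ω A B : Type*} [Fintype Ω] (p : Ω → ℝ)
    (X : Ω → A) (Y : Ω → B) : ℝ :=
  entropy p (fun ω => (X ω, Y ω)) - entropy p Y

/-- Conditional mutual information `I(X;Y|Z) = H(X|Z) - H(X|(Y,Z))`. -/
noncomputable def condMI {Ω A B C : Type*} [Fintype Ω] (p : Ω → ℝ)
    (X : Ω → A) (Y : Ω → B) (Z : Ω → C) : ℝ :=
  condEntropy p X Z - condEntropy p X (fun ω => (Y ω, Z ω))

/-! ### The recursive hard distribution for MIS -/

/-- `misN k r` is the number `n_r` of vertices of the `r`-round hard MIS distribution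
with bandwidth parameter `k`. -/
def misN (k : ℕ) : ℕ → ℕ
  | 0 => 2 * k
  | r + 1 =>
    2 * ((misN k r - 1) * (k ^ 6 * misN k r ^ 3) +
      misN k r * (k ^ 6 * misN k r ^ 3 * (k ^ 6 * misN k r ^ 3)))

/-- The number `f̂_{r+1}` of fooling blocks of a half-instance. -/
def misFhat (k r : ℕ) : ℕ := k ^ 6 * misN k r ^ 3

/-- The number `p̂_{r+1}` of principal blocks of a half-instance. -/
def misPhat (k r : ℕ) : ℕ := k ^ 6 * misN k r ^ 3 * misFhat k r

/-- The number `n̂_{r+1}` of vertices of a half-instance. -/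
def misNhat (k r : ℕ) : ℕ := (misN k r - 1) * misFhat k r + misN k r * misPhat k r

theorem misN_succ (k r : ℕ) : misN k (r + 1) = 2 * misNhat k r := rfl

/-- The sample space of the hard distribution `D_r^MIS`: a sample consists of,
for each of the two halves, an independent `D_{r-1}^MIS` sample for each principal
block and an independent `D_{r-1}^MIS` sample for each pair of a principal vertex and
a fooling block, together with a permutation of all vertices.  At level `0`, a sample
is the set of surviving edges of the fixed perfect matching. -/
def misS (k : ℕ) : ℕ → Type
  | 0 => Finset (Fin k)
  | r + 1 =>
    ((Fin (misPhat k r) → misS k r) ×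
      ((Fin (misPhat k r) × Fin (misN k r) × Fin (misFhat k r)) → misS k r)) ×
    ((Fin (misPhat k r) → misS k r) ×
      ((Fin (misPhat k r) × Fin (misN k r) × Fin (misFhat k r)) → misS k r)) ×
    Equiv.Perm (Fin (misN k (r + 1)))

instance misS.instFintype (k : ℕ) : ∀ r, Fintype (misS k r)
  | 0 => inferInstanceAs (Fintype (Finset (Fin k)))
  | r + 1 =>
    letI := misS.instFintype k r
    inferInstanceAs (Fintype
      (((Fin (misPhat k r) → misS k r) ×
        ((Fin (misPhat k r) × Fin (misN k r) × Fin (misFhat k r)) → misS k r)) ×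
      ((Fin (misPhat k r) → misS k r) ×
        ((Fin (misPhat k r) × Fin (misN k r) × Fin (misFhat k r)) → misS k r)) ×
      Equiv.Perm (Fin (misN k (r + 1)))))

/-- The probability mass function of `D_r^MIS` on the sample space `misS k r`:
all constituents are independent, each matching edge of a base-level instance survives
with probability `1/2`, and the final permutation is uniform. -/
noncomputable def misQ (k : ℕ) : ∀ r, misS k r → ℝ
  | 0, _ => (1 / 2 : ℝ) ^ k
  | r + 1, s =>
    ((∏ i, misQ k r (s.1.1 i)) * ∏ x, misQ k r (s.1.2 x)) *
    ((∏ i, misQ k r (s.2.1.1 i)) * ∏ x, misQ k r (s.2.1.2 x)) *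
    (1 / (Nat.factorial (misN k (r + 1)) : ℝ))

theorem pvert_lt {p n nh : ℕ} {i a : ℕ} (hi : i < p) (ha : a < n) (h : p * n ≤ nh) :
    i * n + a < nh := by
  have h1 : i * n + a < (i + 1) * n := by rw [Nat.add_mul, Nat.one_mul]; omega
  have h2 : (i + 1) * n ≤ p * n := Nat.mul_le_mul_right _ hi
  omega

/-- The (pre-permutation) index of the `a`-th vertex of the `i`-th principal block of the
half-instance on side `side`. -/
def pVert (k r : ℕ) (side : Bool) (i : Fin (misPhat k r)) (a : Fin (misN k r)) :
    Fin (misN k (r + 1)) :=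
  ⟨(bif side then misNhat k r else 0) + (i.val * misN k r + a.val), by
    have h1 : i.val * misN k r + a.val < misNhat k r := by
      refine pvert_lt i.isLt a.isLt ?_
      unfold misNhat
      rw [Nat.mul_comm]
      exact Nat.le_add_left _ _
    have h2 : misN k (r + 1) = 2 * misNhat k r := misN_succ k r
    cases side <;> simp only [Bool.cond_false, Bool.cond_true] <;> omega⟩

/-- The (pre-permutation) index of the `b`-th vertex of the `j`-th fooling block of the
half-instance on side `side`. -/
def fVert (k r : ℕ) (side : Bool) (j : Fin (misFhat k r)) (b : Fin (misN k r - 1)) :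
    Fin (misN k (r + 1)) :=
  ⟨(bif side then misNhat k r else 0) +
    (misN k r * misPhat k r + (j.val * (misN k r - 1) + b.val)), by
    have h1 : j.val * (misN k r - 1) + b.val < misFhat k r * (misN k r - 1) :=
      pvert_lt j.isLt b.isLt (le_refl _)
    have h2 : misNhat k r = misN k r * misPhat k r + misFhat k r * (misN k r - 1) := by
      unfold misNhat; ring
    have h3 : misN k (r + 1) = 2 * misNhat k r := misN_succ k r
    cases side <;> simp only [Bool.cond_false, Bool.cond_true] <;> omega⟩

/-- The edges (before applying the final permutation) of a level-`(r+1)` instance, given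
the graphs sampled in the principal blocks (`gP`) and the star instances between principal
vertices and fooling blocks (`gS`): edges inside a principal block, edges between a
principal vertex and a fooling block (the star instance is sampled on `F_j ∪ {u}`, with
`u` playing the role of vertex `0`), and all edges between the fooling vertices of the
two halves. -/
def misAdj (k r : ℕ)
    (gP : Bool → Fin (misPhat k r) → SimpleGraph (Fin (misN k r)))
    (gS : Bool → Fin (misPhat k r) × Fin (misN k r) × Fin (misFhat k r) →
      SimpleGraph (Fin (misN k r)))
    (u v : Fin (misN k (r + 1))) : Prop :=
  (∃ side i a b, (gP side i).Adj a b ∧ u = pVert k r side i a ∧ v = pVert k r side i b) ∨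
  (∃ side i a j b,
    (∃ (h0 : 0 < misN k r) (hb : b.val + 1 < misN k r),
      (gS side (i, a, j)).Adj ⟨0, h0⟩ ⟨b.val + 1, hb⟩) ∧
    u = pVert k r side i a ∧ v = fVert k r side j b) ∨
  (∃ jU bU jV bV, u = fVert k r false jU bU ∧ v = fVert k r true jV bV)

/-- The graph of `D_r^MIS` determined by a sample `s : misS k r`. -/
def misG (k : ℕ) : ∀ r, misS k r → SimpleGraph (Fin (misN k r))
  | 0, K => SimpleGraph.fromRel fun u v =>
      u.val / 2 = v.val / 2 ∧
        ∃ h : u.val / 2 < k, (⟨u.val / 2, h⟩ : Fin k) ∈ (show Finset (Fin k) from K)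
  | r + 1, s => SimpleGraph.fromRel fun u v =>
      misAdj k r
        (fun side i => misG k r ((bif side then s.2.1 else s.1).1 i))
        (fun side x => misG k r ((bif side then s.2.1 else s.1).2 x))
        ((s.2.2)⁻¹ u) ((s.2.2)⁻¹ v)
/-! ### Random variables of a deterministic protocol run on `D_r^MIS` -/

section RV

variable (k rp : ℕ)

/-- The total number `p_r = 2 p̂_r` of principal blocks. -/
def misP (k rp : ℕ) : ℕ := 2 * misPhat k rp

/-- The total number `f_r = 2 f̂_r` of fooling blocks. -/
def misF (k rp : ℕ) : ℕ := 2 * misFhat k rp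

/-- The random permutation `Σ`. -/
def sigmaRV (s : misS k (rp + 1)) : Equiv.Perm (Fin (misN k (rp + 1))) := s.2.2

/-- The pre-permutation position of the `a`-th vertex of the `i`-th principal block
(blocks of the `U`-half come first). -/
def blockVert (i : Fin (misP k rp)) (a : Fin (misN k rp)) : Fin (misN k (rp + 1)) :=
  if h : i.val < misPhat k rp then pVert k rp false ⟨i.val, h⟩ a
  else pVert k rp true ⟨i.val - misPhat k rp, by
    have h2 := i.isLt
    unfold misP at h2
    omega⟩ a

/-- The pre-permutation position of the `b`-th vertex of the `j`-th fooling block. -/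
def foolVert (j : Fin (misF k rp)) (b : Fin (misN k rp - 1)) : Fin (misN k (rp + 1)) :=
  if h : j.val < misFhat k rp then fVert k rp false ⟨j.val, h⟩ b
  else fVert k rp true ⟨j.val - misFhat k rp, by
    have h2 := j.isLt
    unfold misF at h2
    omega⟩ b

/-- `v` belongs to the `i`-th principal block `Σ(P_i)`. -/
def inBlock (i : Fin (misP k rp)) (σ : Equiv.Perm (Fin (misN k (rp + 1))))
    (v : Fin (misN k (rp + 1))) : Prop :=
  ∃ a, v = σ (blockVert k rp i a)

/-- `v` is a fooling vertex. -/
def isFool (σ : Equiv.Perm (Fin (misN k (rp + 1)))) (v : Fin (misN k (rp + 1))) : Prop :=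
  ∃ j b, v = σ (foolVert k rp j b)

/-- `v` is a principal vertex. -/
def isPrincipal (σ : Equiv.Perm (Fin (misN k (rp + 1)))) (v : Fin (misN k (rp + 1))) : Prop :=
  ∃ i a, v = σ (blockVert k rp i a)

open Classical in
/-- The set of vertices of the `i`-th principal block `Σ(P_i)`. -/
noncomputable def blockFinset (i : Fin (misP k rp)) (σ : Equiv.Perm (Fin (misN k (rp + 1)))) :
    Finset (Fin (misN k (rp + 1))) :=
  Finset.univ.filter (inBlock k rp i σ)

open Classical in
/-- The edge set of the sampled graph, as a random variable. -/
noncomputable def edgesRV (s : misS k (rp + 1)) : Finset (Sym2 (Fin (misN k (rp + 1)))) :=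
  Finset.univ.filter (· ∈ (misG k (rp + 1) s).edgeSet)

open Classical in
/-- `B_i` : the edges within the `i`-th principal block `Σ(P_i)`. -/
noncomputable def B_RV (i : Fin (misP k rp)) (s : misS k (rp + 1)) :
    Finset (Sym2 (Fin (misN k (rp + 1)))) :=
  (edgesRV k rp s).filter fun e => ∀ v, v ∈ e → inBlock k rp i (sigmaRV k rp s) v

open Classical in
/-- `T_i` : the edges between the `i`-th principal block `Σ(P_i)` and the fooling
vertices. -/
noncomputable def T_RV (i : Fin (misP k rp)) (s : misS k (rp + 1)) :
    Finset (Sym2 (Fin (misN k (rp + 1)))) :=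
  (edgesRV k rp s).filter fun e => ∃ u v, e = s(u, v) ∧
    inBlock k rp i (sigmaRV k rp s) u ∧ isFool k rp (sigmaRV k rp s) v

variable (msgf : Fin (misN k (rp + 1)) → Set (Fin (misN k (rp + 1))) →
  List (Fin (misN k (rp + 1)) → Fin (2 ^ k)) → Fin (2 ^ k))

/-- The blackboard of a deterministic bandwidth-`k` protocol, whose message function is
`msgf`, after `t` rounds on the graph sampled by `s`. -/
def detBB (s : misS k (rp + 1)) : ℕ → List (Fin (misN k (rp + 1)) → Fin (2 ^ k))
  | 0 => []
  | t + 1 =>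
    detBB s t ++
      [fun v => msgf v ((misG k (rp + 1) s).neighborSet v) (detBB s t)]

/-- The messages posted in round `t + 1` (`t` is the `0`-indexed round number). -/
def roundMsg (s : misS k (rp + 1)) (t : ℕ) : Fin (misN k (rp + 1)) → Fin (2 ^ k) :=
  fun v => msgf v ((misG k (rp + 1) s).neighborSet v) (detBB k rp msgf s t)

open Classical in
/-- `M^{(t+1)}_{P,i}` : the round-`(t+1)` messages of the vertices of `Σ(P_i)`. -/
noncomputable def MPi_RV (i : Fin (misP k rp)) (t : ℕ) (s : misS k (rp + 1)) :
    Fin (misN k (rp + 1)) → Option (Fin (2 ^ k)) :=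
  fun v => if inBlock k rp i (sigmaRV k rp s) v then some (roundMsg k rp msgf s t v) else none

open Classical in
/-- `M^{(t+1)}_{P,-i}` : the round-`(t+1)` messages of the principal vertices outside
`Σ(P_i)`. -/
noncomputable def MPneg_RV (i : Fin (misP k rp)) (t : ℕ) (s : misS k (rp + 1)) :
    Fin (misN k (rp + 1)) → Option (Fin (2 ^ k)) :=
  fun v => if isPrincipal k rp (sigmaRV k rp s) v ∧ ¬ inBlock k rp i (sigmaRV k rp s) v then
    some (roundMsg k rp msgf s t v) else none

open Classical in
/-- `M^{(t+1)}_P` : the round-`(t+1)` messages of all principal vertices. -/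
noncomputable def MP_RV (t : ℕ) (s : misS k (rp + 1)) :
    Fin (misN k (rp + 1)) → Option (Fin (2 ^ k)) :=
  fun v => if isPrincipal k rp (sigmaRV k rp s) v then some (roundMsg k rp msgf s t v) else none

open Classical in
/-- `M^{(t+1)}_F` : the round-`(t+1)` messages of all fooling vertices. -/
noncomputable def MF_RV (t : ℕ) (s : misS k (rp + 1)) :
    Fin (misN k (rp + 1)) → Option (Fin (2 ^ k)) :=
  fun v => if isFool k rp (sigmaRV k rp s) v then some (roundMsg k rp msgf s t v) else none

/-- `M^{(<t+1)}` : all messages posted in the first `t` rounds. -/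
def Mlt_RV (t : ℕ) (s : misS k (rp + 1)) :
    Fin t → Fin (misN k (rp + 1)) → Fin (2 ^ k) :=
  fun t' v => roundMsg k rp msgf s t'.val v

end RV



/-! ### Auxiliary lemmas for the proof -/

open Classical in
noncomputable def ind (P : Prop) : ℝ := if P then 1 else 0

lemma ind_def (P : Prop) [Decidable P] : ind P = if P then 1 else 0 := by
  unfold ind; congr

lemma ind_nonneg (P : Prop) : 0 ≤ ind P := by
  classical rw [ind_def]; split <;> norm_num

lemma ind_le_one (P : Prop) : ind P ≤ 1 := by
  classical rw [ind_def]; split <;> norm_num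

lemma ind_true {P : Prop} (h : P) : ind P = 1 := by
  classical rw [ind_def]; exact if_pos h
lemma ind_false {P : Prop} (h : ¬ P) : ind P = 0 := by
  classical rw [ind_def]; exact if_neg h

lemma ind_and (P Q : Prop) : ind (P ∧ Q) = ind P * ind Q := by
  by_cases hP : P <;> by_cases hQ : Q
  · rw [ind_true (And.intro hP hQ), ind_true hP, ind_true hQ]; ring
  · rw [ind_false (by tauto), ind_false hQ]; ring
  · rw [ind_false (by tauto), ind_false hP]; ring
  · rw [ind_false (by tauto), ind_false hP]; ring

lemma ind_congr {P Q : Prop} (h : P ↔ Q) : ind P = ind Q := by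
  by_cases hP : P
  · rw [ind_true hP, ind_true (h.mp hP)]
  · rw [ind_false hP, ind_false (fun hq => hP (h.mpr hq))]

lemma ind_forall {α : Type*} [Fintype α] (P : α → Prop) :
    ind (∀ a, P a) = ∏ a, ind (P a) := by
  by_cases h : ∀ a, P a
  · rw [ind_true h, eq_comm]
    exact Finset.prod_eq_one (fun a _ => ind_true (h a))
  · rw [ind_false h, eq_comm]
    push_neg at h
    obtain ⟨a, ha⟩ := h
    exact Finset.prod_eq_zero (Finset.mem_univ a) (ind_false ha)

lemma probEvent_eq_sum_ind {Ω : Type*} [Fintype Ω] (p : Ω → ℝ) (E : Ω → Prop) :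
    probEvent p E = ∑ ω, ind (E ω) * p ω := by
  unfold probEvent
  refine Finset.sum_congr rfl fun ω _ => ?_
  by_cases h : E ω
  · rw [if_pos h, ind_true h, one_mul]
  · rw [if_neg h, ind_false h, zero_mul]

lemma probEvent_congr {Ω : Type*} [Fintype Ω] (p : Ω → ℝ) {E F : Ω → Prop}
    (h : ∀ ω, E ω ↔ F ω) : probEvent p E = probEvent p F := by
  rw [probEvent_eq_sum_ind, probEvent_eq_sum_ind]
  exact Finset.sum_congr rfl fun ω _ => by rw [ind_congr (h ω)]

lemma probEvent_pos_elim {Ω : Type*} [Fintype Ω] {p : Ω → ℝ} {E : Ω → Prop}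
    (h : 0 < probEvent p E) : ∃ ω, E ω := by
  by_contra hc
  push_neg at hc
  have : probEvent p E = 0 := by
    unfold probEvent
    exact Finset.sum_eq_zero fun ω _ => if_neg (hc ω)
  simp [this] at h

lemma sum_pi_prod {J X : Type*} [Fintype J] [Fintype X] [DecidableEq J] (F : J → X → ℝ) :
    ∑ g : J → X, ∏ j, F j (g j) = ∏ j, ∑ x, F j x := by
  classical
  rw [Finset.prod_univ_sum]
  rw [← Fintype.piFinset_univ]

lemma sum_pi_margin {J X : Type*} [Fintype J] [Fintype X] [DecidableEq J]
    (w : X → ℝ) (hw : ∑ x, w x = 1) (j0 : J) (F : X → ℝ) :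
    ∑ g : J → X, (∏ j, w (g j)) * F (g j0) = ∑ x, w x * F x := by
  classical
  have step1 : ∀ g : J → X, (∏ j, w (g j)) * F (g j0)
      = ∏ j, (w (g j) * if j = j0 then F (g j) else 1) := by
    intro g
    rw [Finset.prod_mul_distrib]
    congr 1
    rw [Finset.prod_ite_eq' Finset.univ j0 (fun j => F (g j))]
    simp
  simp_rw [step1]
  rw [sum_pi_prod (fun j x => w x * if j = j0 then F x else 1)]
  have step2 : ∀ j : J, (∑ x, w x * if j = j0 then F x else 1)
      = if j = j0 then ∑ x, w x * F x else 1 := by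
    intro j
    split_ifs with h <;> simp [hw]
  simp_rw [step2]
  rw [Finset.prod_ite_eq' Finset.univ j0 (fun _ => ∑ x, w x * F x)]
  simp

lemma sum_curry {α β X : Type*} [Fintype α] [Fintype β] [Fintype X] [DecidableEq α] [DecidableEq β]
    (f : (α × β → X) → ℝ) :
    ∑ g : α × β → X, f g = ∑ h : α → β → X, f (fun p => h p.1 p.2) := by
  rw [← Equiv.sum_comp (Equiv.curry α β X).symm f]
  rfl


lemma misQ_pos (k : ℕ) : ∀ r (s : misS k r), 0 < misQ k r s
  | 0, _ => by unfold misQ; positivity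
  | r + 1, s => by
    have ih := misQ_pos k r
    have hfac : (0:ℝ) < (1 / (Nat.factorial (misN k (r+1)) : ℝ)) := by
      have := Nat.factorial_pos (misN k (r+1))
      positivity
    have h1 : (0:ℝ) < ∏ i, misQ k r (s.1.1 i) := Finset.prod_pos fun _ _ => ih _
    have h2 : (0:ℝ) < ∏ x, misQ k r (s.1.2 x) := Finset.prod_pos fun _ _ => ih _
    have h3 : (0:ℝ) < ∏ i, misQ k r (s.2.1.1 i) := Finset.prod_pos fun _ _ => ih _
    have h4 : (0:ℝ) < ∏ x, misQ k r (s.2.1.2 x) := Finset.prod_pos fun _ _ => ih _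
    unfold misQ
    positivity

lemma misQ_nonneg (k r : ℕ) (s : misS k r) : 0 ≤ misQ k r s := (misQ_pos k r s).le

lemma sum_triple {A B C : Type*} [Fintype A] [Fintype B] [Fintype C] (f : A × B × C → ℝ) :
    ∑ x, f x = ∑ a, ∑ b, ∑ c, f (a, b, c) := by
  rw [Fintype.sum_prod_type]
  exact Finset.sum_congr rfl fun a _ => by rw [Fintype.sum_prod_type]

lemma misQ_sum (k : ℕ) : ∀ r, ∑ s : misS k r, misQ k r s = 1
  | 0 => by
    have : ∑ s : misS k 0, misQ k 0 s = ∑ s : Finset (Fin k), ((1:ℝ)/2)^k := rfl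
    rw [this, Finset.sum_const, Finset.card_univ, Fintype.card_finset]
    simp only [Fintype.card_fin, nsmul_eq_mul]
    rw [one_div, inv_pow, Nat.cast_pow, Nat.cast_ofNat, mul_inv_cancel₀]
    positivity
  | r + 1 => by
    have ih := misQ_sum k r
    have hpi : ∀ (J : Type) [Fintype J] [DecidableEq J],
        ∑ g : J → misS k r, ∏ j, misQ k r (g j) = 1 := by
      intro J _ _
      rw [sum_pi_prod (fun _ x => misQ k r x)]
      simp [ih]
    have hH : ∀ h : (Fin (misPhat k r) → misS k r) ×
        ((Fin (misPhat k r) × Fin (misN k r) × Fin (misFhat k r)) → misS k r),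
        True := fun _ => trivial
    have e1 := sum_triple (f := misQ k (r + 1))
    refine Eq.trans e1 ?_
    simp only [misQ]
    have inner : ∀ a b : (Fin (misPhat k r) → misS k r) ×
        ((Fin (misPhat k r) × Fin (misN k r) × Fin (misFhat k r)) → misS k r),
        ∑ _c : Equiv.Perm (Fin (misN k (r+1))),
        ((∏ i, misQ k r (a.1 i)) * ∏ x, misQ k r (a.2 x)) *
        ((∏ i, misQ k r (b.1 i)) * ∏ x, misQ k r (b.2 x)) *
        (1 / (Nat.factorial (misN k (r + 1)) : ℝ)) =
        ((∏ i, misQ k r (a.1 i)) * ∏ x, misQ k r (a.2 x)) *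
        ((∏ i, misQ k r (b.1 i)) * ∏ x, misQ k r (b.2 x)) := by
      intro a b
      rw [Finset.sum_const, Finset.card_univ, Fintype.card_perm, nsmul_eq_mul]
      have hne : ((Nat.factorial (misN k (r+1)) : ℝ)) ≠ 0 := by
        exact_mod_cast (Nat.factorial_pos _).ne'
      rw [Fintype.card_fin, mul_one_div, mul_div_cancel₀ _ hne]
    simp_rw [inner]
    rw [← Finset.sum_mul_sum]
    rw [show (∑ a : (Fin (misPhat k r) → misS k r) ×
        ((Fin (misPhat k r) × Fin (misN k r) × Fin (misFhat k r)) → misS k r),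
        (∏ i, misQ k r (a.1 i)) * ∏ x, misQ k r (a.2 x)) = 1 from ?_]
    · norm_num
    · rw [Fintype.sum_prod_type]
      simp_rw [← Finset.sum_mul_sum]
      rw [hpi, hpi, one_mul]


noncomputable def Wq (k rp : ℕ) (E : (Fin (misFhat k rp) → misS k rp) → Prop) : ℝ :=
  ∑ y : Fin (misFhat k rp) → misS k rp, ind (E y) * ∏ j, misQ k rp (y j)

lemma Wq_nonneg (k rp : ℕ) (E : (Fin (misFhat k rp) → misS k rp) → Prop) : 0 ≤ Wq k rp E :=
  Finset.sum_nonneg fun y _ => mul_nonneg (ind_nonneg _)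
    (Finset.prod_nonneg fun j _ => misQ_nonneg k rp (y j))

lemma Wq_congr (k rp : ℕ) {E F : (Fin (misFhat k rp) → misS k rp) → Prop}
    (h : ∀ y, E y ↔ F y) : Wq k rp E = Wq k rp F :=
  Finset.sum_congr rfl fun y _ => by rw [ind_congr (h y)]

lemma sum_pi_one (k rp : ℕ) (J : Type) [Fintype J] [DecidableEq J] :
    ∑ g : J → misS k rp, ∏ j, misQ k rp (g j) = 1 := by
  rw [sum_pi_prod (fun _ x => misQ k rp x)]
  simp [misQ_sum k rp]

lemma mis_star_sum (k rp : ℕ) (i' : Fin (misPhat k rp))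
    (EY : Fin (misN k rp) → (Fin (misFhat k rp) → misS k rp) → Prop) :
    ∑ gS : (Fin (misPhat k rp) × Fin (misN k rp) × Fin (misFhat k rp)) → misS k rp,
      ind (∀ a, EY a (fun j => gS (i', a, j))) * ∏ j, misQ k rp (gS j)
    = ∏ a, Wq k rp (EY a) := by
  classical
  rw [sum_curry (fun gS => ind (∀ a, EY a (fun j => gS (i', a, j))) * ∏ j, misQ k rp (gS j))]
  have e2 : ∀ h : Fin (misPhat k rp) → (Fin (misN k rp) × Fin (misFhat k rp)) → misS k rp,
      ind (∀ a, EY a fun j => h i' (a, j)) *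
        ∏ p : Fin (misPhat k rp) × (Fin (misN k rp) × Fin (misFhat k rp)), misQ k rp (h p.1 p.2)
      = (∏ i, ∏ p : Fin (misN k rp) × Fin (misFhat k rp), misQ k rp (h i p)) *
        (fun t : (Fin (misN k rp) × Fin (misFhat k rp)) → misS k rp =>
          ind (∀ a, EY a fun j => t (a, j))) (h i') := by
    intro h
    rw [Fintype.prod_prod_type (f := fun p : Fin (misPhat k rp) ×
      (Fin (misN k rp) × Fin (misFhat k rp)) => misQ k rp (h p.1 p.2))]
    ring
  simp_rw [e2]
  rw [sum_pi_margin (fun t : (Fin (misN k rp) × Fin (misFhat k rp)) → misS k rp =>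
      ∏ p, misQ k rp (t p)) (sum_pi_one k rp _) i'
      (fun t => ind (∀ a, EY a fun j => t (a, j)))]
  rw [sum_curry (fun t : (Fin (misN k rp) × Fin (misFhat k rp)) → misS k rp =>
      (∏ p, misQ k rp (t p)) * ind (∀ a, EY a fun j => t (a, j)))]
  have e3 : ∀ y : Fin (misN k rp) → Fin (misFhat k rp) → misS k rp,
      (∏ p : Fin (misN k rp) × Fin (misFhat k rp), misQ k rp (y p.1 p.2)) *
        ind (∀ a, EY a fun j => y a j)
      = ∏ a, (ind (EY a (y a)) * ∏ j, misQ k rp (y a j)) := by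
    intro y
    rw [Fintype.prod_prod_type (f := fun p : Fin (misN k rp) × Fin (misFhat k rp) =>
      misQ k rp (y p.1 p.2))]
    rw [ind_forall (fun a => EY a (y a))]
    rw [Finset.prod_mul_distrib]
    ring
  simp_rw [e3]
  rw [sum_pi_prod (fun a (y : Fin (misFhat k rp) → misS k rp) =>
    ind (EY a y) * ∏ j, misQ k rp (y j))]
  rfl

lemma half_sum (k rp : ℕ) (i' : Fin (misPhat k rp))
    (EX : misS k rp → Prop)
    (EY : Fin (misN k rp) → misS k rp → (Fin (misFhat k rp) → misS k rp) → Prop) :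
    ∑ h : (Fin (misPhat k rp) → misS k rp) ×
      ((Fin (misPhat k rp) × Fin (misN k rp) × Fin (misFhat k rp)) → misS k rp),
      ind (EX (h.1 i') ∧ ∀ a, EY a (h.1 i') (fun j => h.2 (i', a, j))) *
        ((∏ i, misQ k rp (h.1 i)) * ∏ j, misQ k rp (h.2 j))
    = ∑ x, misQ k rp x * (ind (EX x) * ∏ a, Wq k rp (EY a x)) := by
  classical
  rw [Fintype.sum_prod_type]
  have e1 : ∀ (gP : Fin (misPhat k rp) → misS k rp)
      (gS : (Fin (misPhat k rp) × Fin (misN k rp) × Fin (misFhat k rp)) → misS k rp),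
      ind (EX (gP i') ∧ ∀ a, EY a (gP i') (fun j => gS (i', a, j))) *
        ((∏ i, misQ k rp (gP i)) * ∏ j, misQ k rp (gS j))
      = (ind (EX (gP i')) * ∏ i, misQ k rp (gP i)) *
        (ind (∀ a, EY a (gP i') (fun j => gS (i', a, j))) * ∏ j, misQ k rp (gS j)) := by
    intro gP gS
    rw [ind_and]
    ring
  simp_rw [e1, ← Finset.mul_sum]
  have e2 : ∀ gP : Fin (misPhat k rp) → misS k rp,
      (ind (EX (gP i')) * ∏ i, misQ k rp (gP i)) *
        (∑ gS : (Fin (misPhat k rp) × Fin (misN k rp) × Fin (misFhat k rp)) → misS k rp,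
          ind (∀ a, EY a (gP i') (fun j => gS (i', a, j))) * ∏ j, misQ k rp (gS j))
      = (∏ i, misQ k rp (gP i)) *
        (fun x => ind (EX x) * ∏ a, Wq k rp (EY a x)) (gP i') := by
    intro gP
    rw [mis_star_sum k rp i' (fun a => EY a (gP i'))]
    ring
  simp_rw [e2]
  rw [sum_pi_margin (misQ k rp) (misQ_sum k rp) i'
    (fun x => ind (EX x) * ∏ a, Wq k rp (EY a x))]

lemma half_one (k rp : ℕ) :
    ∑ h : (Fin (misPhat k rp) → misS k rp) ×
      ((Fin (misPhat k rp) × Fin (misN k rp) × Fin (misFhat k rp)) → misS k rp),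
      (∏ i, misQ k rp (h.1 i)) * ∏ j, misQ k rp (h.2 j) = 1 := by
  rw [Fintype.sum_prod_type]
  simp_rw [← Finset.sum_mul_sum]
  rw [sum_pi_one, sum_pi_one, one_mul]

lemma master (k rp : ℕ) (side : Bool) (i' : Fin (misPhat k rp))
    (σ0 : Equiv.Perm (Fin (misN k (rp + 1)))) (c : Prop)
    (EX : misS k rp → Prop)
    (EY : Fin (misN k rp) → misS k rp → (Fin (misFhat k rp) → misS k rp) → Prop) :
    probEvent (misQ k (rp + 1)) (fun s =>
      sigmaRV k rp s = σ0 ∧ c ∧ EX ((bif side then s.2.1 else s.1).1 i') ∧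
        ∀ a, EY a ((bif side then s.2.1 else s.1).1 i')
          (fun j => (bif side then s.2.1 else s.1).2 (i', a, j)))
    = ind c * (1 / (Nat.factorial (misN k (rp + 1)) : ℝ)) *
      ∑ x, misQ k rp x * (ind (EX x) * ∏ a, Wq k rp (EY a x)) := by
  classical
  rw [probEvent_eq_sum_ind]
  have e1 := sum_triple (f := fun s : misS k (rp + 1) =>
    ind (sigmaRV k rp s = σ0 ∧ c ∧ EX ((bif side then s.2.1 else s.1).1 i') ∧
        ∀ a, EY a ((bif side then s.2.1 else s.1).1 i')
          (fun j => (bif side then s.2.1 else s.1).2 (i', a, j))) * misQ k (rp + 1) s)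
  refine Eq.trans e1 ?_
  cases side
  · have e2 : ∀ (h1 h2 : (Fin (misPhat k rp) → misS k rp) ×
        ((Fin (misPhat k rp) × Fin (misN k rp) × Fin (misFhat k rp)) → misS k rp))
        (σ : Equiv.Perm (Fin (misN k (rp + 1)))),
        ind (sigmaRV k rp (h1, h2, σ) = σ0 ∧ c ∧
            EX ((bif false then (h1, h2, σ).2.1 else (h1, h2, σ).1).1 i') ∧
            ∀ a, EY a ((bif false then (h1, h2, σ).2.1 else (h1, h2, σ).1).1 i')
              (fun j => (bif false then (h1, h2, σ).2.1 else (h1, h2, σ).1).2 (i', a, j))) *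
          misQ k (rp + 1) (h1, h2, σ)
        = if σ = σ0 then
            ((ind c * (1 / (Nat.factorial (misN k (rp + 1)) : ℝ))) *
            (ind ((EX (h1.1 i') ∧ ∀ a, EY a (h1.1 i') (fun j => h1.2 (i', a, j)))) *
              ((∏ i, misQ k rp (h1.1 i)) * ∏ x, misQ k rp (h1.2 x)))) *
            ((∏ i, misQ k rp (h2.1 i)) * ∏ x, misQ k rp (h2.2 x))
          else 0 := by
      intro h1 h2 σ
      have hq : misQ k (rp + 1) (h1, h2, σ)
          = ((∏ i, misQ k rp (h1.1 i)) * ∏ x, misQ k rp (h1.2 x)) *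
            ((∏ i, misQ k rp (h2.1 i)) * ∏ x, misQ k rp (h2.2 x)) *
            (1 / (Nat.factorial (misN k (rp + 1)) : ℝ)) := rfl
      rw [hq]
      simp only [sigmaRV, Bool.cond_false]
      by_cases hσ : σ = σ0
      · rw [if_pos hσ, ind_congr (show (σ = σ0 ∧ c ∧ EX (h1.1 i') ∧
          ∀ a, EY a (h1.1 i') (fun j => h1.2 (i', a, j))) ↔
          (c ∧ (EX (h1.1 i') ∧ ∀ a, EY a (h1.1 i') (fun j => h1.2 (i', a, j)))) by
            constructor
            · rintro ⟨-, hc, h⟩; exact ⟨hc, h⟩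
            · rintro ⟨hc, h⟩; exact ⟨hσ, hc, h⟩),
          ind_and]
        ring
      · rw [if_neg hσ, ind_false (fun hh => hσ hh.1), zero_mul]
    simp_rw [e2]
    simp_rw [Finset.sum_ite_eq' Finset.univ σ0, Finset.mem_univ, if_true]
    rw [← Finset.sum_mul_sum]
    rw [half_one, mul_one, ← Finset.mul_sum, half_sum]
  · have e2 : ∀ (h1 h2 : (Fin (misPhat k rp) → misS k rp) ×
        ((Fin (misPhat k rp) × Fin (misN k rp) × Fin (misFhat k rp)) → misS k rp))
        (σ : Equiv.Perm (Fin (misN k (rp + 1)))),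
        ind (sigmaRV k rp (h1, h2, σ) = σ0 ∧ c ∧
            EX ((bif true then (h1, h2, σ).2.1 else (h1, h2, σ).1).1 i') ∧
            ∀ a, EY a ((bif true then (h1, h2, σ).2.1 else (h1, h2, σ).1).1 i')
              (fun j => (bif true then (h1, h2, σ).2.1 else (h1, h2, σ).1).2 (i', a, j))) *
          misQ k (rp + 1) (h1, h2, σ)
        = if σ = σ0 then
            ((∏ i, misQ k rp (h1.1 i)) * ∏ x, misQ k rp (h1.2 x)) *
            ((ind c * (1 / (Nat.factorial (misN k (rp + 1)) : ℝ))) *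
            (ind ((EX (h2.1 i') ∧ ∀ a, EY a (h2.1 i') (fun j => h2.2 (i', a, j)))) *
              ((∏ i, misQ k rp (h2.1 i)) * ∏ x, misQ k rp (h2.2 x))))
          else 0 := by
      intro h1 h2 σ
      have hq : misQ k (rp + 1) (h1, h2, σ)
          = ((∏ i, misQ k rp (h1.1 i)) * ∏ x, misQ k rp (h1.2 x)) *
            ((∏ i, misQ k rp (h2.1 i)) * ∏ x, misQ k rp (h2.2 x)) *
            (1 / (Nat.factorial (misN k (rp + 1)) : ℝ)) := rfl
      rw [hq]
      simp only [sigmaRV, Bool.cond_true]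
      by_cases hσ : σ = σ0
      · rw [if_pos hσ, ind_congr (show (σ = σ0 ∧ c ∧ EX (h2.1 i') ∧
          ∀ a, EY a (h2.1 i') (fun j => h2.2 (i', a, j))) ↔
          (c ∧ (EX (h2.1 i') ∧ ∀ a, EY a (h2.1 i') (fun j => h2.2 (i', a, j)))) by
            constructor
            · rintro ⟨-, hc, h⟩; exact ⟨hc, h⟩
            · rintro ⟨hc, h⟩; exact ⟨hσ, hc, h⟩),
          ind_and]
        ring
      · rw [if_neg hσ, ind_false (fun hh => hσ hh.1), zero_mul]
    simp_rw [e2]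
    simp_rw [Finset.sum_ite_eq' Finset.univ σ0, Finset.mem_univ, if_true]
    rw [← Finset.sum_mul_sum]
    rw [half_one, one_mul, ← Finset.mul_sum, half_sum]


lemma block_cancel {i1 i2 a1 a2 n : ℕ} (ha1 : a1 < n) (ha2 : a2 < n)
    (h : i1 * n + a1 = i2 * n + a2) : i1 = i2 ∧ a1 = a2 := by
  rcases Nat.lt_trichotomy i1 i2 with hlt | heq | hgt
  · have h2 := Nat.mul_le_mul_right n (Nat.succ_le_of_lt hlt)
    rw [Nat.succ_mul] at h2
    omega
  · subst heq; omega
  · have h2 := Nat.mul_le_mul_right n (Nat.succ_le_of_lt hgt)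
    rw [Nat.succ_mul] at h2
    omega

lemma pv_block_lt (k r : ℕ) (i : Fin (misPhat k r)) (a : Fin (misN k r)) :
    i.val * misN k r + a.val < misN k r * misPhat k r := by
  refine pvert_lt i.isLt a.isLt ?_
  rw [Nat.mul_comm]

lemma pv_lt_nhat (k r : ℕ) (i : Fin (misPhat k r)) (a : Fin (misN k r)) :
    i.val * misN k r + a.val < misNhat k r := by
  have h := pv_block_lt k r i a
  have : misN k r * misPhat k r ≤ misNhat k r := by
    unfold misNhat
    exact Nat.le_add_left _ _
  omega

lemma fv_lt_nhat (k r : ℕ) (j : Fin (misFhat k r)) (b : Fin (misN k r - 1)) :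
    misN k r * misPhat k r + (j.val * (misN k r - 1) + b.val) < misNhat k r := by
  have h1 : j.val * (misN k r - 1) + b.val < misFhat k r * (misN k r - 1) :=
    pvert_lt j.isLt b.isLt (le_refl _)
  have h2 : misNhat k r = misN k r * misPhat k r + misFhat k r * (misN k r - 1) := by
    unfold misNhat; ring
  omega

lemma pVert_val (k r : ℕ) (side : Bool) (i : Fin (misPhat k r)) (a : Fin (misN k r)) :
    (pVert k r side i a).val
      = (bif side then misNhat k r else 0) + (i.val * misN k r + a.val) := rfl

lemma fVert_val (k r : ℕ) (side : Bool) (j : Fin (misFhat k r)) (b : Fin (misN k r - 1)) :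
    (fVert k r side j b).val
      = (bif side then misNhat k r else 0) +
        (misN k r * misPhat k r + (j.val * (misN k r - 1) + b.val)) := rfl

lemma pVert_inj {k r : ℕ} {s1 s2 : Bool} {i1 i2 : Fin (misPhat k r)}
    {a1 a2 : Fin (misN k r)} (h : pVert k r s1 i1 a1 = pVert k r s2 i2 a2) :
    s1 = s2 ∧ i1 = i2 ∧ a1 = a2 := by
  have hv := congrArg Fin.val h
  rw [pVert_val, pVert_val] at hv
  have hb1 := pv_lt_nhat k r i1 a1
  have hb2 := pv_lt_nhat k r i2 a2
  cases s1 <;> cases s2 <;>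
    simp only [Bool.cond_false, Bool.cond_true, Nat.zero_add] at hv
  · have := block_cancel (i1 := i1.val) (i2 := i2.val) a1.isLt a2.isLt (by omega)
    exact ⟨rfl, Fin.ext this.1, Fin.ext this.2⟩
  · exact absurd hv (by omega)
  · exact absurd hv (by omega)
  · have := block_cancel (i1 := i1.val) (i2 := i2.val) a1.isLt a2.isLt (by omega)
    exact ⟨rfl, Fin.ext this.1, Fin.ext this.2⟩

lemma fVert_inj {k r : ℕ} {s1 s2 : Bool} {j1 j2 : Fin (misFhat k r)}
    {b1 b2 : Fin (misN k r - 1)} (h : fVert k r s1 j1 b1 = fVert k r s2 j2 b2) :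
    s1 = s2 ∧ j1 = j2 ∧ b1 = b2 := by
  have hv := congrArg Fin.val h
  rw [fVert_val, fVert_val] at hv
  have hb1 := fv_lt_nhat k r j1 b1
  have hb2 := fv_lt_nhat k r j2 b2
  cases s1 <;> cases s2 <;>
    simp only [Bool.cond_false, Bool.cond_true, Nat.zero_add] at hv
  · have := block_cancel (i1 := j1.val) (i2 := j2.val) b1.isLt b2.isLt (by omega)
    exact ⟨rfl, Fin.ext this.1, Fin.ext this.2⟩
  · exact absurd hv (by omega)
  · exact absurd hv (by omega)
  · have := block_cancel (i1 := j1.val) (i2 := j2.val) b1.isLt b2.isLt (by omega)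
    exact ⟨rfl, Fin.ext this.1, Fin.ext this.2⟩

lemma pVert_ne_fVert {k r : ℕ} (s1 s2 : Bool) (i : Fin (misPhat k r))
    (a : Fin (misN k r)) (j : Fin (misFhat k r)) (b : Fin (misN k r - 1)) :
    pVert k r s1 i a ≠ fVert k r s2 j b := by
  intro h
  have hv := congrArg Fin.val h
  rw [pVert_val, fVert_val] at hv
  have hb1 := pv_block_lt k r i a
  have hb2 := fv_lt_nhat k r j b
  have hb3 := pv_lt_nhat k r i a
  cases s1 <;> cases s2 <;>
    simp only [Bool.cond_false, Bool.cond_true, Nat.zero_add] at hv <;> omega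


variable {k rp : ℕ}

def bSide (k rp : ℕ) (i : Fin (misP k rp)) : Bool := decide (misPhat k rp ≤ i.val)

def bIdx (k rp : ℕ) (i : Fin (misP k rp)) : Fin (misPhat k rp) :=
  if h : i.val < misPhat k rp then ⟨i.val, h⟩
  else ⟨i.val - misPhat k rp, by
    have h2 := i.isLt
    unfold misP at h2
    omega⟩

lemma blockVert_eq (i : Fin (misP k rp)) (a : Fin (misN k rp)) :
    blockVert k rp i a = pVert k rp (bSide k rp i) (bIdx k rp i) a := by
  unfold blockVert bSide bIdx
  by_cases h : i.val < misPhat k rp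
  · rw [dif_pos h, dif_pos h]
    have : decide (misPhat k rp ≤ i.val) = false := decide_eq_false (by omega)
    rw [this]
  · rw [dif_neg h, dif_neg h]
    have : decide (misPhat k rp ≤ i.val) = true := decide_eq_true (by omega)
    rw [this]

lemma blockVert_inj (i : Fin (misP k rp)) {a1 a2 : Fin (misN k rp)}
    (h : blockVert k rp i a1 = blockVert k rp i a2) : a1 = a2 := by
  rw [blockVert_eq, blockVert_eq] at h
  exact (pVert_inj h).2.2

lemma isFool_iff (σ0 : Equiv.Perm (Fin (misN k (rp + 1)))) (v : Fin (misN k (rp + 1))) :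
    isFool k rp σ0 v ↔ ∃ (sd : Bool) (j : Fin (misFhat k rp)) (b : Fin (misN k rp - 1)),
      v = σ0 (fVert k rp sd j b) := by
  constructor
  · rintro ⟨j, b, rfl⟩
    unfold foolVert
    by_cases h : j.val < misFhat k rp
    · rw [dif_pos h]; exact ⟨false, _, b, rfl⟩
    · rw [dif_neg h]; exact ⟨true, _, b, rfl⟩
  · rintro ⟨sd, j, b, rfl⟩
    cases sd
    · refine ⟨⟨j.val, by have := j.isLt; unfold misF; omega⟩, b, ?_⟩
      unfold foolVert
      rw [dif_pos j.isLt]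
    · refine ⟨⟨misFhat k rp + j.val, by have := j.isLt; unfold misF; omega⟩, b, ?_⟩
      unfold foolVert
      rw [dif_neg (show ¬ ((⟨misFhat k rp + j.val, by have := j.isLt; unfold misF; omega⟩ :
        Fin (misF k rp)).val < misFhat k rp) by simp)]
      congr 2
      exact Fin.ext (by simp)

lemma not_fool_block (σ0 : Equiv.Perm (Fin (misN k (rp + 1)))) (i : Fin (misP k rp))
    (a : Fin (misN k rp)) : ¬ isFool k rp σ0 (σ0 (blockVert k rp i a)) := by
  rw [isFool_iff]
  rintro ⟨sd, j, b, hv⟩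
  have := σ0.injective hv
  rw [blockVert_eq] at this
  exact pVert_ne_fVert _ _ _ _ _ _ this


variable {k rp : ℕ}

/-- star adjacency predicate -/
def starAdj (k rp : ℕ) (x : misS k rp) (b : Fin (misN k rp - 1)) : Prop :=
  ∃ (h0 : 0 < misN k rp) (hb : b.val + 1 < misN k rp),
    (misG k rp x).Adj ⟨0, h0⟩ ⟨b.val + 1, hb⟩

lemma adj_iff (i : Fin (misP k rp)) (σ0 : Equiv.Perm (Fin (misN k (rp + 1))))
    (s : misS k (rp + 1)) (hσ : s.2.2 = σ0) (a : Fin (misN k rp))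
    (w : Fin (misN k (rp + 1))) :
    (misG k (rp + 1) s).Adj (σ0 (blockVert k rp i a)) w ↔
      (∃ b, (misG k rp ((bif bSide k rp i then s.2.1 else s.1).1 (bIdx k rp i))).Adj a b ∧
        w = σ0 (pVert k rp (bSide k rp i) (bIdx k rp i) b)) ∨
      (∃ j b, starAdj k rp ((bif bSide k rp i then s.2.1 else s.1).2 (bIdx k rp i, a, j)) b ∧
        w = σ0 (fVert k rp (bSide k rp i) j b)) := by
  have hpre : (s.2.2)⁻¹ (σ0 (blockVert k rp i a)) = pVert k rp (bSide k rp i) (bIdx k rp i) a := by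
    rw [hσ, ← blockVert_eq]
    exact σ0.symm_apply_apply _
  rw [show misG k (rp+1) s = SimpleGraph.fromRel (fun u v =>
      misAdj k rp
        (fun side i => misG k rp ((bif side then s.2.1 else s.1).1 i))
        (fun side x => misG k rp ((bif side then s.2.1 else s.1).2 x))
        ((s.2.2)⁻¹ u) ((s.2.2)⁻¹ v)) from rfl, SimpleGraph.fromRel_adj]
  constructor
  · rintro ⟨hne, hR | hR⟩
    · rw [hpre] at hR
      unfold misAdj at hR
      rcases hR with ⟨sd2, i2, a2, b2, hadj, hu, hv⟩ |
        ⟨sd2, i2, a2, j2, b2, hstar, hu, hv⟩ | ⟨jU, bU, jV, bV, hu, hv⟩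
      · obtain ⟨hs, hi, ha⟩ := pVert_inj hu
        subst hs; subst hi; subst ha
        refine Or.inl ⟨b2, hadj, ?_⟩
        rw [← hv, hσ]
        exact (σ0.apply_symm_apply _).symm
      · obtain ⟨hs, hi, ha⟩ := pVert_inj hu
        subst hs; subst hi; subst ha
        refine Or.inr ⟨j2, b2, hstar, ?_⟩
        rw [← hv, hσ]
        exact (σ0.apply_symm_apply _).symm
      · exact absurd hu (pVert_ne_fVert _ _ _ _ _ _)
    · rw [hpre] at hR
      unfold misAdj at hR
      rcases hR with ⟨sd2, i2, a2, b2, hadj, hu, hv⟩ |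
        ⟨sd2, i2, a2, j2, b2, hstar, hu, hv⟩ | ⟨jU, bU, jV, bV, hu, hv⟩
      · obtain ⟨hs, hi, ha⟩ := pVert_inj hv
        subst hs; subst hi; subst ha
        refine Or.inl ⟨a2, hadj.symm, ?_⟩
        rw [← hu, hσ]
        exact (σ0.apply_symm_apply _).symm
      · exact absurd hv (pVert_ne_fVert _ _ _ _ _ _)
      · exact absurd hv (pVert_ne_fVert _ _ _ _ _ _)
  · rintro (⟨b, hadj, rfl⟩ | ⟨j, b, hstar, rfl⟩)
    · refine ⟨?_, Or.inl ?_⟩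
      · intro h
        have h2 := σ0.injective h
        rw [blockVert_eq] at h2
        exact hadj.ne (pVert_inj h2).2.2
      · refine Or.inl ⟨bSide k rp i, bIdx k rp i, a, b, hadj, hpre, ?_⟩
        rw [hσ, ← Equiv.Perm.mul_apply, inv_mul_cancel, Equiv.Perm.one_apply]
    · refine ⟨?_, Or.inl ?_⟩
      · intro h
        have h2 := σ0.injective h
        rw [blockVert_eq] at h2
        exact pVert_ne_fVert _ _ _ _ _ _ h2
      · refine Or.inr (Or.inl ⟨bSide k rp i, bIdx k rp i, a, j, b, hstar, hpre, ?_⟩)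
        rw [hσ, ← Equiv.Perm.mul_apply, inv_mul_cancel, Equiv.Perm.one_apply]


variable {k rp : ℕ}

open Classical in
/-- block edges determined by the block sample -/
noncomputable def bE (k rp : ℕ) (i : Fin (misP k rp))
    (σ0 : Equiv.Perm (Fin (misN k (rp + 1)))) (x : misS k rp) :
    Finset (Sym2 (Fin (misN k (rp + 1)))) :=
  Finset.univ.filter (fun e => ∃ a b : Fin (misN k rp), (misG k rp x).Adj a b ∧
    e = s(σ0 (blockVert k rp i a), σ0 (blockVert k rp i b)))

open Classical in
/-- star edges at block vertex `a` determined by the star samples of `a` -/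
noncomputable def tE (k rp : ℕ) (i : Fin (misP k rp))
    (σ0 : Equiv.Perm (Fin (misN k (rp + 1)))) (a : Fin (misN k rp))
    (y : Fin (misFhat k rp) → misS k rp) :
    Finset (Sym2 (Fin (misN k (rp + 1)))) :=
  Finset.univ.filter (fun e => ∃ (j : Fin (misFhat k rp)) (b : Fin (misN k rp - 1)),
    starAdj k rp (y j) b ∧
    e = s(σ0 (blockVert k rp i a), σ0 (fVert k rp (bSide k rp i) j b)))

lemma adj_iff' (i : Fin (misP k rp)) (σ0 : Equiv.Perm (Fin (misN k (rp + 1))))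
    (s : misS k (rp + 1)) (hσ : s.2.2 = σ0) (a : Fin (misN k rp))
    (w : Fin (misN k (rp + 1))) :
    (misG k (rp + 1) s).Adj (σ0 (blockVert k rp i a)) w ↔
      (∃ b, (misG k rp ((bif bSide k rp i then s.2.1 else s.1).1 (bIdx k rp i))).Adj a b ∧
        w = σ0 (blockVert k rp i b)) ∨
      (∃ j b, starAdj k rp ((bif bSide k rp i then s.2.1 else s.1).2 (bIdx k rp i, a, j)) b ∧
        w = σ0 (fVert k rp (bSide k rp i) j b)) := by
  rw [adj_iff i σ0 s hσ a w]
  constructor <;> rintro (⟨b, h1, h2⟩ | ⟨j, b, h1, h2⟩)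
  · exact Or.inl ⟨b, h1, by rw [h2, blockVert_eq]⟩
  · exact Or.inr ⟨j, b, h1, h2⟩
  · exact Or.inl ⟨b, h1, by rw [h2, blockVert_eq]⟩
  · exact Or.inr ⟨j, b, h1, h2⟩

lemma mem_edgesRV (s : misS k (rp + 1)) (e : Sym2 (Fin (misN k (rp + 1)))) :
    e ∈ edgesRV k rp s ↔ e ∈ (misG k (rp + 1) s).edgeSet := by
  unfold edgesRV
  simp [Finset.mem_filter]

lemma inBlock_sigma (i : Fin (misP k rp)) (σ0 : Equiv.Perm (Fin (misN k (rp + 1))))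
    (s : misS k (rp + 1)) (hσ : s.2.2 = σ0) (v : Fin (misN k (rp + 1))) :
    inBlock k rp i (sigmaRV k rp s) v ↔ ∃ a, v = σ0 (blockVert k rp i a) := by
  unfold inBlock sigmaRV
  rw [hσ]

lemma bridge_B (i : Fin (misP k rp)) (σ0 : Equiv.Perm (Fin (misN k (rp + 1))))
    (s : misS k (rp + 1)) (hσ : s.2.2 = σ0) :
    B_RV k rp i s = bE k rp i σ0 ((bif bSide k rp i then s.2.1 else s.1).1 (bIdx k rp i)) := by
  ext e
  unfold B_RV bE
  simp only [Finset.mem_filter, mem_edgesRV]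
  constructor
  · rintro ⟨hedge, hblk⟩
    refine ⟨Finset.mem_univ _, ?_⟩
    induction e with
    | _ u v =>
      obtain ⟨a, ha⟩ := (inBlock_sigma i σ0 s hσ u).mp (hblk u (Sym2.mem_mk_left u v))
      obtain ⟨b, hb⟩ := (inBlock_sigma i σ0 s hσ v).mp (hblk v (Sym2.mem_mk_right u v))
      subst ha; subst hb
      rw [SimpleGraph.mem_edgeSet] at hedge
      rcases (adj_iff' i σ0 s hσ a _).mp hedge with ⟨b2, hadj, hw⟩ | ⟨j, b2, hstar, hw⟩
      · obtain rfl : b = b2 := blockVert_inj i (σ0.injective hw)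
        exact ⟨a, b, hadj, rfl⟩
      · exfalso
        rw [blockVert_eq] at hw
        exact pVert_ne_fVert _ _ _ _ _ _ (σ0.injective hw)
  · rintro ⟨-, a, b, hadj, rfl⟩
    refine ⟨?_, ?_⟩
    · rw [SimpleGraph.mem_edgeSet]
      exact (adj_iff' i σ0 s hσ a _).mpr (Or.inl ⟨b, hadj, rfl⟩)
    · intro v hv
      rw [inBlock_sigma i σ0 s hσ]
      rcases Sym2.mem_iff.mp hv with h | h
      · exact ⟨a, h⟩
      · exact ⟨b, h⟩

lemma bridge_T (i : Fin (misP k rp)) (σ0 : Equiv.Perm (Fin (misN k (rp + 1))))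
    (s : misS k (rp + 1)) (hσ : s.2.2 = σ0) (a : Fin (misN k rp)) :
    (T_RV k rp i s).filter (fun e => σ0 (blockVert k rp i a) ∈ e)
      = tE k rp i σ0 a (fun j => (bif bSide k rp i then s.2.1 else s.1).2 (bIdx k rp i, a, j)) := by
  ext e
  unfold T_RV tE
  simp only [Finset.mem_filter, mem_edgesRV]
  constructor
  · rintro ⟨⟨hedge, u, v, rfl, hu, hv⟩, hmem⟩
    refine ⟨Finset.mem_univ _, ?_⟩
    obtain ⟨a2, rfl⟩ := (inBlock_sigma i σ0 s hσ u).mp hu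
    rw [show sigmaRV k rp s = σ0 from hσ, isFool_iff] at hv
    obtain ⟨sd, j, b, rfl⟩ := hv
    rcases Sym2.mem_iff.mp hmem with h | h
    · obtain rfl : a = a2 := blockVert_inj i (σ0.injective h)
      rw [SimpleGraph.mem_edgeSet] at hedge
      rcases (adj_iff' i σ0 s hσ a _).mp hedge with ⟨b2, hadj, hw⟩ | ⟨j2, b2, hstar, hw⟩
      · exfalso
        rw [blockVert_eq] at hw
        exact pVert_ne_fVert _ _ _ _ _ _ (σ0.injective hw).symm
      · exact ⟨j2, b2, hstar, by rw [hw]⟩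
    · exfalso
      rw [blockVert_eq] at h
      exact pVert_ne_fVert _ _ _ _ _ _ (σ0.injective h)
  · rintro ⟨-, j, b, hstar, rfl⟩
    refine ⟨⟨?_, σ0 (blockVert k rp i a), σ0 (fVert k rp (bSide k rp i) j b), rfl, ?_, ?_⟩, ?_⟩
    · rw [SimpleGraph.mem_edgeSet]
      exact (adj_iff' i σ0 s hσ a _).mpr (Or.inr ⟨j, b, hstar, rfl⟩)
    · rw [inBlock_sigma i σ0 s hσ]
      exact ⟨a, rfl⟩
    · rw [show sigmaRV k rp s = σ0 from hσ, isFool_iff]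
      exact ⟨_, j, b, rfl⟩
    · exact Sym2.mem_mk_left _ _

/-- the message a block vertex sends in round 1, as a function of its incident
block edges and star edges -/
noncomputable def msgF (k rp : ℕ)
    (msgf : Fin (misN k (rp + 1)) → Set (Fin (misN k (rp + 1))) →
      List (Fin (misN k (rp + 1)) → Fin (2 ^ k)) → Fin (2 ^ k))
    (u : Fin (misN k (rp + 1))) (Bu Tu : Finset (Sym2 (Fin (misN k (rp + 1))))) :
    Fin (2 ^ k) :=
  msgf u {w | s(u, w) ∈ Bu ∪ Tu} []

lemma nb_eq (i : Fin (misP k rp)) (σ0 : Equiv.Perm (Fin (misN k (rp + 1))))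
    (s : misS k (rp + 1)) (hσ : s.2.2 = σ0) (a : Fin (misN k rp)) :
    (misG k (rp + 1) s).neighborSet (σ0 (blockVert k rp i a)) =
      {w | s(σ0 (blockVert k rp i a), w) ∈
        ((bE k rp i σ0 ((bif bSide k rp i then s.2.1 else s.1).1 (bIdx k rp i))).filter
          (fun e => σ0 (blockVert k rp i a) ∈ e)) ∪
        tE k rp i σ0 a (fun j => (bif bSide k rp i then s.2.1 else s.1).2 (bIdx k rp i, a, j))} := by
  ext w
  rw [SimpleGraph.mem_neighborSet, adj_iff' i σ0 s hσ a w]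
  simp only [Set.mem_setOf_eq, Finset.mem_union, Finset.mem_filter]
  unfold bE tE
  simp only [Finset.mem_filter, Finset.mem_univ, true_and]
  constructor
  · rintro (⟨b, hadj, rfl⟩ | ⟨j, b, hstar, rfl⟩)
    · exact Or.inl ⟨⟨a, b, hadj, rfl⟩, Sym2.mem_mk_left _ _⟩
    · exact Or.inr ⟨j, b, hstar, rfl⟩
  · rintro (⟨⟨a2, b2, hadj, he⟩, -⟩ | ⟨j, b, hstar, he⟩)
    · rcases Sym2.eq_iff.mp he with ⟨h1, h2⟩ | ⟨h1, h2⟩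
      · obtain rfl : a = a2 := blockVert_inj i (σ0.injective h1)
        exact Or.inl ⟨b2, hadj, h2⟩
      · obtain rfl : a = b2 := blockVert_inj i (σ0.injective h1)
        exact Or.inl ⟨a2, hadj.symm, h2⟩
    · rcases Sym2.eq_iff.mp he with ⟨h1, h2⟩ | ⟨h1, h2⟩
      · exact Or.inr ⟨j, b, hstar, h2⟩
      · exfalso
        rw [blockVert_eq] at h1
        exact pVert_ne_fVert _ _ _ _ _ _ (σ0.injective h1)

lemma msg_eq (i : Fin (misP k rp)) (σ0 : Equiv.Perm (Fin (misN k (rp + 1))))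
    (msgf : Fin (misN k (rp + 1)) → Set (Fin (misN k (rp + 1))) →
      List (Fin (misN k (rp + 1)) → Fin (2 ^ k)) → Fin (2 ^ k))
    (s : misS k (rp + 1)) (hσ : s.2.2 = σ0) (a : Fin (misN k rp)) :
    roundMsg k rp msgf s 0 (σ0 (blockVert k rp i a)) =
      msgF k rp msgf (σ0 (blockVert k rp i a))
        ((bE k rp i σ0 ((bif bSide k rp i then s.2.1 else s.1).1 (bIdx k rp i))).filter
          (fun e => σ0 (blockVert k rp i a) ∈ e))
        (tE k rp i σ0 a (fun j => (bif bSide k rp i then s.2.1 else s.1).2 (bIdx k rp i, a, j))) := by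
  unfold roundMsg msgF
  rw [nb_eq i σ0 s hσ a]
  rfl

lemma blockFinset_eq (i : Fin (misP k rp)) (σ0 : Equiv.Perm (Fin (misN k (rp + 1)))) :
    blockFinset k rp i σ0 = Finset.image (fun a => σ0 (blockVert k rp i a)) Finset.univ := by
  ext v
  unfold blockFinset inBlock
  simp only [Finset.mem_filter, Finset.mem_univ, true_and, Finset.mem_image]
  constructor
  · rintro ⟨a, rfl⟩; exact ⟨a, rfl⟩
  · rintro ⟨a, rfl⟩; exact ⟨a, rfl⟩

lemma prod_block (i : Fin (misP k rp)) (σ0 : Equiv.Perm (Fin (misN k (rp + 1))))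
    (F : Fin (misN k (rp + 1)) → ℝ) :
    ∏ u ∈ blockFinset k rp i σ0, F u = ∏ a, F (σ0 (blockVert k rp i a)) := by
  rw [blockFinset_eq, Finset.prod_image]
  intro a1 _ a2 _ h
  exact blockVert_inj i (σ0.injective h)

lemma forall_block (i : Fin (misP k rp)) (σ0 : Equiv.Perm (Fin (misN k (rp + 1))))
    (P : Fin (misN k (rp + 1)) → Prop) :
    (∀ u ∈ blockFinset k rp i σ0, P u) ↔ ∀ a, P (σ0 (blockVert k rp i a)) := by
  rw [blockFinset_eq]
  constructor
  · intro h a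
    exact h _ (Finset.mem_image_of_mem _ (Finset.mem_univ a))
  · rintro h u hu
    obtain ⟨a, -, rfl⟩ := Finset.mem_image.mp hu
    exact h a

lemma MPi_iff (i : Fin (misP k rp)) (σ0 : Equiv.Perm (Fin (misN k (rp + 1))))
    (msgf : Fin (misN k (rp + 1)) → Set (Fin (misN k (rp + 1))) →
      List (Fin (misN k (rp + 1)) → Fin (2 ^ k)) → Fin (2 ^ k))
    (m1 : Fin (misN k (rp + 1)) → Option (Fin (2 ^ k)))
    (s : misS k (rp + 1)) (hσ : s.2.2 = σ0) :
    MPi_RV k rp msgf i 0 s = m1 ↔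
      ((∀ v, ¬ inBlock k rp i σ0 v → m1 v = none) ∧
        ∀ a, some (roundMsg k rp msgf s 0 (σ0 (blockVert k rp i a)))
          = m1 (σ0 (blockVert k rp i a))) := by
  have hsig : sigmaRV k rp s = σ0 := hσ
  constructor
  · intro h
    constructor
    · intro v hv
      rw [← congrFun h v]
      unfold MPi_RV
      rw [if_neg]
      rwa [hsig]
    · intro a
      rw [← congrFun h (σ0 (blockVert k rp i a))]
      unfold MPi_RV
      rw [hsig, if_pos (show inBlock k rp i σ0 (σ0 (blockVert k rp i a)) from
        Exists.intro a rfl)]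
  · rintro ⟨h1, h2⟩
    funext v
    unfold MPi_RV
    rw [hsig]
    by_cases hb : inBlock k rp i σ0 v
    · rw [if_pos hb]
      obtain ⟨a, rfl⟩ := hb
      exact h2 a
    · rw [if_neg hb]
      exact (h1 v hb).symm


/-- principal-block sample -/
def XC (k rp : ℕ) (i : Fin (misP k rp)) (s : misS k (rp + 1)) : misS k rp :=
  (bif bSide k rp i then s.2.1 else s.1).1 (bIdx k rp i)

/-- star samples of block vertex `a` -/
def YC (k rp : ℕ) (i : Fin (misP k rp)) (a : Fin (misN k rp)) (s : misS k (rp + 1)) :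
    Fin (misFhat k rp) → misS k rp :=
  fun j => (bif bSide k rp i then s.2.1 else s.1).2 (bIdx k rp i, a, j)

def uV {k rp : ℕ} (i : Fin (misP k rp)) (σ0 : Equiv.Perm (Fin (misN k (rp + 1))))
    (a : Fin (misN k rp)) : Fin (misN k (rp + 1)) := σ0 (blockVert k rp i a)

section Defs

variable (k rp : ℕ)
  (msgf : Fin (misN k (rp + 1)) → Set (Fin (misN k (rp + 1))) →
    List (Fin (misN k (rp + 1)) → Fin (2 ^ k)) → Fin (2 ^ k))
  (i : Fin (misP k rp)) (B : Finset (Sym2 (Fin (misN k (rp + 1)))))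
  (m1 : Fin (misN k (rp + 1)) → Option (Fin (2 ^ k)))
  (σ0 : Equiv.Perm (Fin (misN k (rp + 1))))
  (Tf : Fin (misN k (rp + 1)) → Finset (Sym2 (Fin (misN k (rp + 1)))))

/-- consistency of `m1` outside the block -/
def cP : Prop := ∀ v, ¬ inBlock k rp i σ0 v → m1 v = none

/-- message event, conditional version (depends on block sample `x`) -/
def EYM (a : Fin (misN k rp)) (x : misS k rp) (y : Fin (misFhat k rp) → misS k rp) : Prop :=
  some (msgF k rp msgf (uV i σ0 a)
    ((bE k rp i σ0 x).filter (fun e => uV i σ0 a ∈ e)) (tE k rp i σ0 a y)) = m1 (uV i σ0 a)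

/-- message event with block edges pinned to `B` -/
def Mev (a : Fin (misN k rp)) (y : Fin (misFhat k rp) → misS k rp) : Prop :=
  some (msgF k rp msgf (uV i σ0 a)
    (B.filter (fun e => uV i σ0 a ∈ e)) (tE k rp i σ0 a y)) = m1 (uV i σ0 a)

/-- star-edges event -/
def TevP (a : Fin (misN k rp)) (y : Fin (misFhat k rp) → misS k rp) : Prop :=
  tE k rp i σ0 a y = Tf (uV i σ0 a)

noncomputable def Wm (a : Fin (misN k rp)) : ℝ := Wq k rp (Mev k rp msgf i B m1 σ0 a)

noncomputable def Wmt (a : Fin (misN k rp)) : ℝ :=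
  Wq k rp (fun y => Mev k rp msgf i B m1 σ0 a y ∧ TevP k rp i σ0 Tf a y)

noncomputable def Vx (a : Fin (misN k rp)) (x : misS k rp) : ℝ :=
  Wq k rp (EYM k rp msgf i m1 σ0 a x)

noncomputable def AX : ℝ := ∑ x, misQ k rp x * ind (bE k rp i σ0 x = B)

noncomputable def Sx (a : Fin (misN k rp)) : ℝ :=
  ∑ x, misQ k rp x *
    (ind ((bE k rp i σ0 x).filter (fun e => uV i σ0 a ∈ e)
        = B.filter (fun e => uV i σ0 a ∈ e)) *
      ∏ a' ∈ Finset.univ.erase a, Vx k rp msgf i m1 σ0 a' x)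

noncomputable def invN : ℝ := 1 / (Nat.factorial (misN k (rp + 1)) : ℝ)

end Defs

section Main

variable {k rp : ℕ}
  (msgf : Fin (misN k (rp + 1)) → Set (Fin (misN k (rp + 1))) →
    List (Fin (misN k (rp + 1)) → Fin (2 ^ k)) → Fin (2 ^ k))
  (i : Fin (misP k rp)) (B : Finset (Sym2 (Fin (misN k (rp + 1)))))
  (m1 : Fin (misN k (rp + 1)) → Option (Fin (2 ^ k)))
  (σ0 : Equiv.Perm (Fin (misN k (rp + 1))))
  (Tf : Fin (misN k (rp + 1)) → Finset (Sym2 (Fin (misN k (rp + 1)))))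

lemma den_eq :
    probEvent (misQ k (rp + 1)) (fun s =>
      B_RV k rp i s = B ∧ MPi_RV k rp msgf i 0 s = m1 ∧ sigmaRV k rp s = σ0)
    = ind (cP k rp i m1 σ0) * invN k rp *
      ((∏ a, Wm k rp msgf i B m1 σ0 a) * AX k rp i B σ0) := by
  classical
  have hmaster := master k rp (bSide k rp i) (bIdx k rp i) σ0 (cP k rp i m1 σ0)
    (fun x => bE k rp i σ0 x = B) (EYM k rp msgf i m1 σ0)
  have hiff : ∀ s : misS k (rp + 1),
      (B_RV k rp i s = B ∧ MPi_RV k rp msgf i 0 s = m1 ∧ sigmaRV k rp s = σ0) ↔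
      (sigmaRV k rp s = σ0 ∧ cP k rp i m1 σ0 ∧ bE k rp i σ0 (XC k rp i s) = B ∧
        ∀ a, EYM k rp msgf i m1 σ0 a (XC k rp i s) (YC k rp i a s)) := by
    intro s
    unfold XC YC
    constructor
    · rintro ⟨hB, hM, hσ⟩
      have hσ' : s.2.2 = σ0 := hσ
      obtain ⟨hc, hmsg⟩ := (MPi_iff i σ0 msgf m1 s hσ').mp hM
      refine ⟨hσ, hc, ?_, ?_⟩
      · rw [← bridge_B i σ0 s hσ']; exact hB
      · intro a
        have h2 := hmsg a
        rw [msg_eq i σ0 msgf s hσ' a] at h2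
        exact h2
    · rintro ⟨hσ, hc, hBE, hEY⟩
      have hσ' : s.2.2 = σ0 := hσ
      refine ⟨?_, ?_, hσ⟩
      · rw [bridge_B i σ0 s hσ']; exact hBE
      · rw [MPi_iff i σ0 msgf m1 s hσ']
        refine ⟨hc, fun a => ?_⟩
        rw [msg_eq i σ0 msgf s hσ' a]
        exact hEY a
  refine Eq.trans (Eq.trans (probEvent_congr _ hiff) hmaster) ?_
  congr 1
  rw [AX, Finset.mul_sum]
  refine Finset.sum_congr rfl fun x _ => ?_
  by_cases hx : bE k rp i σ0 x = B
  · have hw : ∀ a, Wq k rp (EYM k rp msgf i m1 σ0 a x) = Wm k rp msgf i B m1 σ0 a := by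
      intro a
      unfold Wm Mev EYM
      rw [hx]
    simp_rw [hw]
    ring
  · rw [ind_false hx]
    ring

lemma num_eq :
    probEvent (misQ k (rp + 1)) (fun s =>
      (∀ u ∈ blockFinset k rp i σ0, (T_RV k rp i s).filter (fun e => u ∈ e) = Tf u) ∧
      B_RV k rp i s = B ∧ MPi_RV k rp msgf i 0 s = m1 ∧ sigmaRV k rp s = σ0)
    = ind (cP k rp i m1 σ0) * invN k rp *
      ((∏ a, Wmt k rp msgf i B m1 σ0 Tf a) * AX k rp i B σ0) := by
  classical
  have hmaster := master k rp (bSide k rp i) (bIdx k rp i) σ0 (cP k rp i m1 σ0)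
    (fun x => bE k rp i σ0 x = B)
    (fun a x y => EYM k rp msgf i m1 σ0 a x y ∧ TevP k rp i σ0 Tf a y)
  have hiff : ∀ s : misS k (rp + 1),
      ((∀ u ∈ blockFinset k rp i σ0, (T_RV k rp i s).filter (fun e => u ∈ e) = Tf u) ∧
        B_RV k rp i s = B ∧ MPi_RV k rp msgf i 0 s = m1 ∧ sigmaRV k rp s = σ0) ↔
      (sigmaRV k rp s = σ0 ∧ cP k rp i m1 σ0 ∧ bE k rp i σ0 (XC k rp i s) = B ∧
        ∀ a, EYM k rp msgf i m1 σ0 a (XC k rp i s) (YC k rp i a s) ∧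
          TevP k rp i σ0 Tf a (YC k rp i a s)) := by
    intro s
    unfold XC YC
    constructor
    · rintro ⟨hT, hB, hM, hσ⟩
      have hσ' : s.2.2 = σ0 := hσ
      obtain ⟨hc, hmsg⟩ := (MPi_iff i σ0 msgf m1 s hσ').mp hM
      refine ⟨hσ, hc, ?_, fun a => ⟨?_, ?_⟩⟩
      · rw [← bridge_B i σ0 s hσ']; exact hB
      · have h2 := hmsg a
        rw [msg_eq i σ0 msgf s hσ' a] at h2
        exact h2
      · have h3 := (forall_block i σ0 _).mp hT a
        rw [bridge_T i σ0 s hσ' a] at h3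
        exact h3
    · rintro ⟨hσ, hc, hBE, hEY⟩
      have hσ' : s.2.2 = σ0 := hσ
      refine ⟨?_, ?_, ?_, hσ⟩
      · rw [forall_block i σ0]
        intro a
        rw [bridge_T i σ0 s hσ' a]
        exact (hEY a).2
      · rw [bridge_B i σ0 s hσ']; exact hBE
      · rw [MPi_iff i σ0 msgf m1 s hσ']
        refine ⟨hc, fun a => ?_⟩
        rw [msg_eq i σ0 msgf s hσ' a]
        exact (hEY a).1
  refine Eq.trans (Eq.trans (probEvent_congr _ hiff) hmaster) ?_
  congr 1
  rw [AX, Finset.mul_sum]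
  refine Finset.sum_congr rfl fun x _ => ?_
  by_cases hx : bE k rp i σ0 x = B
  · have hw : ∀ a, Wq k rp (fun y => EYM k rp msgf i m1 σ0 a x y ∧ TevP k rp i σ0 Tf a y)
        = Wmt k rp msgf i B m1 σ0 Tf a := by
      intro a
      unfold Wmt Mev EYM
      rw [hx]
    simp_rw [hw]
    ring
  · rw [ind_false hx]
    ring

lemma dena_eq (a : Fin (misN k rp)) :
    probEvent (misQ k (rp + 1)) (fun s =>
      (B_RV k rp i s).filter (fun e => σ0 (blockVert k rp i a) ∈ e)
          = B.filter (fun e => σ0 (blockVert k rp i a) ∈ e) ∧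
        MPi_RV k rp msgf i 0 s = m1 ∧ sigmaRV k rp s = σ0)
    = ind (cP k rp i m1 σ0) * invN k rp *
      (Wm k rp msgf i B m1 σ0 a * Sx k rp msgf i B m1 σ0 a) := by
  classical
  have hmaster := master k rp (bSide k rp i) (bIdx k rp i) σ0 (cP k rp i m1 σ0)
    (fun x => (bE k rp i σ0 x).filter (fun e => σ0 (blockVert k rp i a) ∈ e)
      = B.filter (fun e => σ0 (blockVert k rp i a) ∈ e))
    (EYM k rp msgf i m1 σ0)
  have hiff : ∀ s : misS k (rp + 1),
      ((B_RV k rp i s).filter (fun e => σ0 (blockVert k rp i a) ∈ e)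
          = B.filter (fun e => σ0 (blockVert k rp i a) ∈ e) ∧
        MPi_RV k rp msgf i 0 s = m1 ∧ sigmaRV k rp s = σ0) ↔
      (sigmaRV k rp s = σ0 ∧ cP k rp i m1 σ0 ∧
        (bE k rp i σ0 (XC k rp i s)).filter (fun e => σ0 (blockVert k rp i a) ∈ e)
          = B.filter (fun e => σ0 (blockVert k rp i a) ∈ e) ∧
        ∀ a', EYM k rp msgf i m1 σ0 a' (XC k rp i s) (YC k rp i a' s)) := by
    intro s
    unfold XC YC
    constructor
    · rintro ⟨hB, hM, hσ⟩
      have hσ' : s.2.2 = σ0 := hσ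
      obtain ⟨hc, hmsg⟩ := (MPi_iff i σ0 msgf m1 s hσ').mp hM
      refine ⟨hσ, hc, ?_, fun a' => ?_⟩
      · rw [← bridge_B i σ0 s hσ']; exact hB
      · have h2 := hmsg a'
        rw [msg_eq i σ0 msgf s hσ' a'] at h2
        exact h2
    · rintro ⟨hσ, hc, hBE, hEY⟩
      have hσ' : s.2.2 = σ0 := hσ
      refine ⟨?_, ?_, hσ⟩
      · rw [bridge_B i σ0 s hσ']; exact hBE
      · rw [MPi_iff i σ0 msgf m1 s hσ']
        refine ⟨hc, fun a' => ?_⟩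
        rw [msg_eq i σ0 msgf s hσ' a']
        exact hEY a'
  refine Eq.trans (Eq.trans (probEvent_congr _ hiff) hmaster) ?_
  congr 1
  rw [Sx, Finset.mul_sum]
  refine Finset.sum_congr rfl fun x _ => ?_
  by_cases hx : (bE k rp i σ0 x).filter (fun e => σ0 (blockVert k rp i a) ∈ e)
      = B.filter (fun e => σ0 (blockVert k rp i a) ∈ e)
  · have hV : ∀ a', Wq k rp (EYM k rp msgf i m1 σ0 a' x) = Vx k rp msgf i m1 σ0 a' x :=
      fun a' => rfl
    simp_rw [hV]
    rw [← Finset.mul_prod_erase Finset.univ _ (Finset.mem_univ a)]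
    have hVa : Vx k rp msgf i m1 σ0 a x = Wm k rp msgf i B m1 σ0 a := by
      unfold Vx EYM Wm Mev uV
      rw [hx]
    rw [hVa, ind_true hx]
    rw [ind_true (show (bE k rp i σ0 x).filter (fun e => uV i σ0 a ∈ e)
      = B.filter (fun e => uV i σ0 a ∈ e) from hx)]
    ring
  · rw [ind_false hx, ind_false (show ¬ ((bE k rp i σ0 x).filter (fun e => uV i σ0 a ∈ e)
      = B.filter (fun e => uV i σ0 a ∈ e)) from hx)]
    ring

lemma numa_eq (a : Fin (misN k rp)) :
    probEvent (misQ k (rp + 1)) (fun s =>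
      (T_RV k rp i s).filter (fun e => σ0 (blockVert k rp i a) ∈ e)
          = Tf (σ0 (blockVert k rp i a)) ∧
      ((B_RV k rp i s).filter (fun e => σ0 (blockVert k rp i a) ∈ e)
          = B.filter (fun e => σ0 (blockVert k rp i a) ∈ e) ∧
        MPi_RV k rp msgf i 0 s = m1 ∧ sigmaRV k rp s = σ0))
    = ind (cP k rp i m1 σ0) * invN k rp *
      (Wmt k rp msgf i B m1 σ0 Tf a * Sx k rp msgf i B m1 σ0 a) := by
  classical
  have hmaster := master k rp (bSide k rp i) (bIdx k rp i) σ0 (cP k rp i m1 σ0)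
    (fun x => (bE k rp i σ0 x).filter (fun e => σ0 (blockVert k rp i a) ∈ e)
      = B.filter (fun e => σ0 (blockVert k rp i a) ∈ e))
    (fun a' x y => EYM k rp msgf i m1 σ0 a' x y ∧
      (a' = a → tE k rp i σ0 a' y = Tf (σ0 (blockVert k rp i a))))
  have hiff : ∀ s : misS k (rp + 1),
      ((T_RV k rp i s).filter (fun e => σ0 (blockVert k rp i a) ∈ e)
          = Tf (σ0 (blockVert k rp i a)) ∧
        ((B_RV k rp i s).filter (fun e => σ0 (blockVert k rp i a) ∈ e)
            = B.filter (fun e => σ0 (blockVert k rp i a) ∈ e) ∧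
          MPi_RV k rp msgf i 0 s = m1 ∧ sigmaRV k rp s = σ0)) ↔
      (sigmaRV k rp s = σ0 ∧ cP k rp i m1 σ0 ∧
        (bE k rp i σ0 (XC k rp i s)).filter (fun e => σ0 (blockVert k rp i a) ∈ e)
          = B.filter (fun e => σ0 (blockVert k rp i a) ∈ e) ∧
        ∀ a', EYM k rp msgf i m1 σ0 a' (XC k rp i s) (YC k rp i a' s) ∧
          (a' = a → tE k rp i σ0 a' (YC k rp i a' s) = Tf (σ0 (blockVert k rp i a)))) := by
    intro s
    unfold XC YC
    constructor
    · rintro ⟨hT, hB, hM, hσ⟩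
      have hσ' : s.2.2 = σ0 := hσ
      obtain ⟨hc, hmsg⟩ := (MPi_iff i σ0 msgf m1 s hσ').mp hM
      refine ⟨hσ, hc, ?_, fun a' => ⟨?_, ?_⟩⟩
      · rw [← bridge_B i σ0 s hσ']; exact hB
      · have h2 := hmsg a'
        rw [msg_eq i σ0 msgf s hσ' a'] at h2
        exact h2
      · rintro rfl
        rw [← bridge_T i σ0 s hσ' a']
        exact hT
    · rintro ⟨hσ, hc, hBE, hEY⟩
      have hσ' : s.2.2 = σ0 := hσ
      refine ⟨?_, ?_, ?_, hσ⟩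
      · rw [bridge_T i σ0 s hσ' a]
        exact (hEY a).2 rfl
      · rw [bridge_B i σ0 s hσ']; exact hBE
      · rw [MPi_iff i σ0 msgf m1 s hσ']
        refine ⟨hc, fun a' => ?_⟩
        rw [msg_eq i σ0 msgf s hσ' a']
        exact (hEY a').1
  refine Eq.trans (Eq.trans (probEvent_congr _ hiff) hmaster) ?_
  congr 1
  rw [Sx, Finset.mul_sum]
  refine Finset.sum_congr rfl fun x _ => ?_
  by_cases hx : (bE k rp i σ0 x).filter (fun e => σ0 (blockVert k rp i a) ∈ e)
      = B.filter (fun e => σ0 (blockVert k rp i a) ∈ e)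
  · rw [← Finset.mul_prod_erase Finset.univ _ (Finset.mem_univ a)]
    have hVa : Wq k rp (fun y => EYM k rp msgf i m1 σ0 a x y ∧
        (a = a → tE k rp i σ0 a y = Tf (σ0 (blockVert k rp i a))))
        = Wmt k rp msgf i B m1 σ0 Tf a := by
      have step1 : Wq k rp (fun y => EYM k rp msgf i m1 σ0 a x y ∧
          (a = a → tE k rp i σ0 a y = Tf (σ0 (blockVert k rp i a))))
          = Wq k rp (fun y => EYM k rp msgf i m1 σ0 a x y ∧
            tE k rp i σ0 a y = Tf (σ0 (blockVert k rp i a))) :=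
        Wq_congr k rp (fun y => and_congr Iff.rfl ⟨fun h => h rfl, fun h _ => h⟩)
      rw [step1]
      unfold Wmt Mev EYM TevP uV
      rw [hx]
    have hVo : ∀ a' ∈ Finset.univ.erase a,
        Wq k rp (fun y => EYM k rp msgf i m1 σ0 a' x y ∧
          (a' = a → tE k rp i σ0 a' y = Tf (σ0 (blockVert k rp i a))))
        = Vx k rp msgf i m1 σ0 a' x := by
      intro a' ha'
      have hne : a' ≠ a := (Finset.mem_erase.mp ha').1
      exact Wq_congr k rp (fun y =>
        ⟨fun h => h.1, fun h => ⟨h, fun hc => absurd hc hne⟩⟩)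
    rw [hVa, Finset.prod_congr rfl hVo, ind_true hx]
    rw [ind_true (show (bE k rp i σ0 x).filter (fun e => uV i σ0 a ∈ e)
      = B.filter (fun e => uV i σ0 a ∈ e) from hx)]
    ring
  · rw [ind_false hx, ind_false (show ¬ ((bE k rp i σ0 x).filter (fun e => uV i σ0 a ∈ e)
      = B.filter (fun e => uV i σ0 a ∈ e)) from hx)]
    ring

lemma pos_of_mul' {a b : ℝ} (ha : 0 ≤ a) (h : 0 < a * b) : 0 < a ∧ 0 < b := by
  rcases mul_pos_iff.mp h with ⟨h1, h2⟩ | ⟨h1, h2⟩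
  · exact ⟨h1, h2⟩
  · exact absurd h1 (not_lt.mpr ha)

end Main

open Classical in
theorem mis_product_distribution' (k rp : ℕ)
    (msgf : Fin (misN k (rp + 1)) → Set (Fin (misN k (rp + 1))) →
      List (Fin (misN k (rp + 1)) → Fin (2 ^ k)) → Fin (2 ^ k))
    (i : Fin (misP k rp))
    (B : Finset (Sym2 (Fin (misN k (rp + 1)))))
    (m1 : Fin (misN k (rp + 1)) → Option (Fin (2 ^ k)))
    (σ0 : Equiv.Perm (Fin (misN k (rp + 1))))
    (hpos : 0 < probEvent (misQ k (rp + 1)) fun s =>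
      B_RV k rp i s = B ∧ MPi_RV k rp msgf i 0 s = m1 ∧ sigmaRV k rp s = σ0)
    (Tf : Fin (misN k (rp + 1)) → Finset (Sym2 (Fin (misN k (rp + 1))))) :
    condProb (misQ k (rp + 1))
        (fun s => ∀ u ∈ blockFinset k rp i σ0,
          (T_RV k rp i s).filter (fun e => u ∈ e) = Tf u)
        (fun s => B_RV k rp i s = B ∧ MPi_RV k rp msgf i 0 s = m1 ∧ sigmaRV k rp s = σ0) =
      ∏ u ∈ blockFinset k rp i σ0,
        condProb (misQ k (rp + 1))
          (fun s => (T_RV k rp i s).filter (fun e => u ∈ e) = Tf u)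
          (fun s => (B_RV k rp i s).filter (fun e => u ∈ e) = B.filter (fun e => u ∈ e) ∧
            MPi_RV k rp msgf i 0 s = m1 ∧ sigmaRV k rp s = σ0) := by
  classical
  -- witness
  obtain ⟨s0, hB0, hM0, hσ0'⟩ := probEvent_pos_elim hpos
  have hσ0 : s0.2.2 = σ0 := hσ0'
  have hbE0 : bE k rp i σ0 (XC k rp i s0) = B := by
    rw [show XC k rp i s0
      = (bif bSide k rp i then s0.2.1 else s0.1).1 (bIdx k rp i) from rfl]
    rw [← bridge_B i σ0 s0 hσ0]
    exact hB0
  -- positivity of the pieces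
  have hpos' := hpos
  rw [den_eq msgf i B m1 σ0] at hpos'
  have hIN : 0 < invN k rp := by
    unfold invN
    have := Nat.factorial_pos (misN k (rp + 1))
    positivity
  have h1 := pos_of_mul' (mul_nonneg (ind_nonneg _) hIN.le) hpos'
  have h2 := pos_of_mul' (Finset.prod_nonneg fun a _ => Wq_nonneg k rp _) h1.2
  have hCI : 0 < ind (cP k rp i m1 σ0) * invN k rp := h1.1
  have hPWm : 0 < ∏ a, Wm k rp msgf i B m1 σ0 a := h2.1
  have hAX : 0 < AX k rp i B σ0 := h2.2
  have hWm : ∀ a, 0 < Wm k rp msgf i B m1 σ0 a := by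
    intro a
    rcases lt_or_eq_of_le (Wq_nonneg k rp (Mev k rp msgf i B m1 σ0 a)) with h | h
    · exact h
    · exact absurd (Finset.prod_eq_zero (Finset.mem_univ a) h.symm) hPWm.ne'
  have hVx0 : ∀ a, Vx k rp msgf i m1 σ0 a (XC k rp i s0) = Wm k rp msgf i B m1 σ0 a := by
    intro a
    unfold Vx EYM Wm Mev
    rw [hbE0]
  have hSx : ∀ a, 0 < Sx k rp msgf i B m1 σ0 a := by
    intro a
    unfold Sx
    refine Finset.sum_pos' (fun x _ => mul_nonneg (misQ_nonneg k rp x)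
      (mul_nonneg (ind_nonneg _) (Finset.prod_nonneg fun a' _ => Wq_nonneg k rp _)))
      ⟨XC k rp i s0, Finset.mem_univ _, ?_⟩
    have hind : ind ((bE k rp i σ0 (XC k rp i s0)).filter (fun e => uV i σ0 a ∈ e)
        = B.filter (fun e => uV i σ0 a ∈ e)) = 1 := ind_true (by rw [hbE0])
    rw [hind]
    have hprod : ∏ a' ∈ Finset.univ.erase a, Vx k rp msgf i m1 σ0 a' (XC k rp i s0)
        = ∏ a' ∈ Finset.univ.erase a, Wm k rp msgf i B m1 σ0 a' :=
      Finset.prod_congr rfl fun a' _ => hVx0 a'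
    rw [hprod]
    have := misQ_pos k rp (XC k rp i s0)
    have hp2 : 0 < ∏ a' ∈ Finset.univ.erase a, Wm k rp msgf i B m1 σ0 a' :=
      Finset.prod_pos fun a' _ => hWm a'
    positivity
  -- left-hand side
  have hLHS : condProb (misQ k (rp + 1))
      (fun s => ∀ u ∈ blockFinset k rp i σ0,
        (T_RV k rp i s).filter (fun e => u ∈ e) = Tf u)
      (fun s => B_RV k rp i s = B ∧ MPi_RV k rp msgf i 0 s = m1 ∧ sigmaRV k rp s = σ0)
      = (∏ a, Wmt k rp msgf i B m1 σ0 Tf a) / (∏ a, Wm k rp msgf i B m1 σ0 a) := by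
    unfold condProb
    rw [num_eq msgf i B m1 σ0 Tf, den_eq msgf i B m1 σ0]
    have e1 : ind (cP k rp i m1 σ0) * invN k rp *
        ((∏ a, Wmt k rp msgf i B m1 σ0 Tf a) * AX k rp i B σ0)
        = (ind (cP k rp i m1 σ0) * invN k rp * AX k rp i B σ0) *
          (∏ a, Wmt k rp msgf i B m1 σ0 Tf a) := by ring
    have e2 : ind (cP k rp i m1 σ0) * invN k rp *
        ((∏ a, Wm k rp msgf i B m1 σ0 a) * AX k rp i B σ0)
        = (ind (cP k rp i m1 σ0) * invN k rp * AX k rp i B σ0) *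
          (∏ a, Wm k rp msgf i B m1 σ0 a) := by ring
    rw [e1, e2, mul_div_mul_left]
    exact (mul_pos hCI hAX).ne'
  rw [hLHS]
  rw [← Finset.prod_div_distrib]
  -- right-hand side
  rw [prod_block i σ0 (fun u => condProb (misQ k (rp + 1))
    (fun s => (T_RV k rp i s).filter (fun e => u ∈ e) = Tf u)
    (fun s => (B_RV k rp i s).filter (fun e => u ∈ e) = B.filter (fun e => u ∈ e) ∧
      MPi_RV k rp msgf i 0 s = m1 ∧ sigmaRV k rp s = σ0))]
  refine Finset.prod_congr rfl fun a _ => ?_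
  unfold condProb
  rw [numa_eq msgf i B m1 σ0 Tf a, dena_eq msgf i B m1 σ0 a]
  have e1 : ind (cP k rp i m1 σ0) * invN k rp *
      (Wmt k rp msgf i B m1 σ0 Tf a * Sx k rp msgf i B m1 σ0 a)
      = (ind (cP k rp i m1 σ0) * invN k rp * Sx k rp msgf i B m1 σ0 a) *
        Wmt k rp msgf i B m1 σ0 Tf a := by ring
  have e2 : ind (cP k rp i m1 σ0) * invN k rp *
      (Wm k rp msgf i B m1 σ0 a * Sx k rp msgf i B m1 σ0 a)
      = (ind (cP k rp i m1 σ0) * invN k rp * Sx k rp msgf i B m1 σ0 a) *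
        Wm k rp msgf i B m1 σ0 a := by ring
  rw [e1, e2, mul_div_mul_left]
  exact (mul_pos hCI (hSx a)).ne'

open Classical in
/-- Run a deterministic protocol with bandwidth `k` (message function
`msgf`) on an input drawn from `D_r^MIS` (`r = rp + 1 ≥ 1`).  For each `i ∈ [p_r]` and
each fixed (realizable) value of `(B_i, M^{(1)}_{P,i}, Σ)`, the conditional distribution
of `T_i` given `(B_i, M^{(1)}_{P,i}, Σ)` is exactly the product, over the vertices
`u ∈ Σ(P_i)`, of the conditional distributions of `T_i(u)` given
`(B_i(u), M^{(1)}_{P,i}, Σ)`; equivalently, evaluating both distributions at any family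
of values `(Tf u)_{u ∈ Σ(P_i)}` gives the same probability. -/
theorem mis_product_distribution (k rp : ℕ)
    (msgf : Fin (misN k (rp + 1)) → Set (Fin (misN k (rp + 1))) →
      List (Fin (misN k (rp + 1)) → Fin (2 ^ k)) → Fin (2 ^ k))
    (i : Fin (misP k rp))
    (B : Finset (Sym2 (Fin (misN k (rp + 1)))))
    (m1 : Fin (misN k (rp + 1)) → Option (Fin (2 ^ k)))
    (σ0 : Equiv.Perm (Fin (misN k (rp + 1))))
    (hpos : 0 < probEvent (misQ k (rp + 1)) fun s =>
      B_RV k rp i s = B ∧ MPi_RV k rp msgf i 0 s = m1 ∧ sigmaRV k rp s = σ0)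
    (Tf : Fin (misN k (rp + 1)) → Finset (Sym2 (Fin (misN k (rp + 1))))) :
    condProb (misQ k (rp + 1))
        (fun s => ∀ u ∈ blockFinset k rp i σ0,
          (T_RV k rp i s).filter (fun e => u ∈ e) = Tf u)
        (fun s => B_RV k rp i s = B ∧ MPi_RV k rp msgf i 0 s = m1 ∧ sigmaRV k rp s = σ0) =
      ∏ u ∈ blockFinset k rp i σ0,
        condProb (misQ k (rp + 1))
          (fun s => (T_RV k rp i s).filter (fun e => u ∈ e) = Tf u)
          (fun s => (B_RV k rp i s).filter (fun e => u ∈ e) = B.filter (fun e => u ∈ e) ∧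
            MPi_RV k rp msgf i 0 s = m1 ∧ sigmaRV k rp s = σ0) := by
  exact mis_product_distribution' k rp msgf i B m1 σ0 hpos Tf
end

section
/- For each round t ∈ [r], the total information revealed by principal messages about the whole input, conditioned on the fooling messages of earlier rounds and the permutation, is bounded by the sum over principal blocks of the corresponding individual information terms: I(M^{(≤t)}_P; G | M^{(<t)}_F, Σ) ≤ Σ_{i∈[p_r]} I(M^{(<t)}_P, M^{(t)}_{P,i}; G_i | M^{(<t)}_F, Σ). -/
namespace MISIT
open Classical Real Finset

attribute [local instance 2000] Classical.propDecidable

variable {Ω : Type*} [Fintype Ω] {A B C : Type*}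

noncomputable def dst (p : Ω → ℝ) (X : Ω → A) (a : A) : ℝ :=
  probEvent p (fun ω => X ω = a)

lemma probEvent_nonneg {p : Ω → ℝ} (hp0 : ∀ ω, 0 ≤ p ω) (E : Ω → Prop) :
    0 ≤ probEvent p E := by
  refine Finset.sum_nonneg fun ω _ => ?_
  split
  · exact hp0 ω
  · exact le_rfl

lemma probEvent_mono {p : Ω → ℝ} (hp0 : ∀ ω, 0 ≤ p ω) {E F : Ω → Prop}
    (h : ∀ ω, E ω → F ω) : probEvent p E ≤ probEvent p F := by
  refine Finset.sum_le_sum fun ω _ => ?_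
  by_cases hE : E ω
  · simp [hE, h ω hE]
  · simp only [hE, if_false]
    split
    · exact hp0 ω
    · exact le_rfl

lemma dst_nonneg {p : Ω → ℝ} (hp0 : ∀ ω, 0 ≤ p ω) (X : Ω → A) (a : A) :
    0 ≤ dst p X a := probEvent_nonneg hp0 _

lemma sum_dst (p : Ω → ℝ) (X : Ω → A) :
    ∑ a ∈ Finset.univ.image X, dst p X a = ∑ ω, p ω := by
  unfold dst probEvent
  rw [Finset.sum_comm]
  refine Finset.sum_congr rfl fun ω _ => ?_
  rw [Finset.sum_ite_eq, if_pos (Finset.mem_image_of_mem X (Finset.mem_univ ω))]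

lemma dst_comp (p : Ω → ℝ) (X : Ω → A) (g : A → B) (b : B) :
    dst p (fun ω => g (X ω)) b
      = ∑ a ∈ (Finset.univ.image X).filter (fun a => g a = b), dst p X a := by
  unfold dst probEvent
  rw [Finset.sum_comm]
  refine Finset.sum_congr rfl fun ω _ => ?_
  by_cases h : g (X ω) = b
  · rw [if_pos h, Finset.sum_ite_eq, if_pos
      (Finset.mem_filter.2 ⟨Finset.mem_image_of_mem X (Finset.mem_univ ω), h⟩)]
  · rw [if_neg h, Finset.sum_eq_zero]
    intro a ha
    rcases Finset.mem_filter.1 ha with ⟨_, hga⟩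
    rw [if_neg]
    rintro rfl; exact h hga

lemma image_comp_eq (X : Ω → A) (g : A → B) :
    Finset.univ.image (fun ω => g (X ω)) = (Finset.univ.image X).image g := by
  rw [Finset.image_image]; rfl

lemma dst_comp_ge {p : Ω → ℝ} (hp0 : ∀ ω, 0 ≤ p ω) (X : Ω → A) (g : A → B) (a : A) :
    dst p X a ≤ dst p (fun ω => g (X ω)) (g a) :=
  probEvent_mono hp0 fun ω h => by simpa using congrArg g h

lemma negMulLog_add_le {a b : ℝ} (ha : 0 ≤ a) (hb : 0 ≤ b) :
    Real.negMulLog (a + b) ≤ Real.negMulLog a + Real.negMulLog b := by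
  rcases ha.eq_or_lt with rfl | ha'
  · simp
  rcases hb.eq_or_lt with rfl | hb'
  · simp
  simp only [Real.negMulLog]
  have h1 : Real.log a ≤ Real.log (a + b) := Real.log_le_log ha' (by linarith)
  have h2 : Real.log b ≤ Real.log (a + b) := Real.log_le_log hb' (by linarith)
  nlinarith

lemma negMulLog_sum_le {α : Type*} (s : Finset α) (f : α → ℝ) (hf : ∀ a ∈ s, 0 ≤ f a) :
    Real.negMulLog (∑ a ∈ s, f a) ≤ ∑ a ∈ s, Real.negMulLog (f a) := by
  induction s using Finset.cons_induction with
  | empty => simp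
  | cons a s ha ih =>
    rw [Finset.sum_cons, Finset.sum_cons]
    calc Real.negMulLog (f a + ∑ x ∈ s, f x)
        ≤ Real.negMulLog (f a) + Real.negMulLog (∑ x ∈ s, f x) :=
          negMulLog_add_le (hf a (Finset.mem_cons_self a s))
            (Finset.sum_nonneg fun x hx => hf x (Finset.mem_cons_of_mem hx))
      _ ≤ _ := by
          have := ih (fun x hx => hf x (Finset.mem_cons_of_mem hx))
          linarith

lemma entropy_comp_le {p : Ω → ℝ} (hp0 : ∀ ω, 0 ≤ p ω) (X : Ω → A) (g : A → B) :
    entropy p (fun ω => g (X ω)) ≤ entropy p X := by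
  show ∑ b ∈ Finset.univ.image (fun ω => g (X ω)),
      Real.negMulLog (dst p (fun ω => g (X ω)) b) ≤
    ∑ a ∈ Finset.univ.image X, Real.negMulLog (dst p X a)
  rw [image_comp_eq X g]
  rw [← Finset.sum_fiberwise_of_maps_to (g := g)
    (fun a ha => Finset.mem_image_of_mem g ha)
    (fun a => Real.negMulLog (dst p X a))]
  refine Finset.sum_le_sum fun b _ => ?_
  rw [dst_comp]
  exact negMulLog_sum_le _ _ fun a _ => dst_nonneg hp0 X a

lemma entropy_comp_injOn (p : Ω → ℝ) (X : Ω → A) (g : A → B)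
    (hg : ∀ ω ω', g (X ω) = g (X ω') → X ω = X ω') :
    entropy p (fun ω => g (X ω)) = entropy p X := by
  show ∑ b ∈ Finset.univ.image (fun ω => g (X ω)),
      Real.negMulLog (dst p (fun ω => g (X ω)) b) =
    ∑ a ∈ Finset.univ.image X, Real.negMulLog (dst p X a)
  rw [image_comp_eq X g, Finset.sum_image]
  · refine Finset.sum_congr rfl fun a ha => ?_
    rcases Finset.mem_image.1 ha with ⟨ω₀, _, rfl⟩
    congr 1
    unfold dst probEvent
    refine Finset.sum_congr rfl fun ω _ => ?_
    congr 1
    simp only [eq_iff_iff]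
    constructor
    · intro h; exact hg ω ω₀ h
    · intro h; rw [h]
  · intro a ha a' ha' h
    rcases Finset.mem_image.1 ha with ⟨ω, _, rfl⟩
    rcases Finset.mem_image.1 ha' with ⟨ω', _, rfl⟩
    exact hg ω ω' h

lemma entropy_eq_sum (p : Ω → ℝ) (X : Ω → A) :
    entropy p X = ∑ a ∈ Finset.univ.image X, -(dst p X a * Real.log (dst p X a)) := by
  show ∑ a ∈ Finset.univ.image X, Real.negMulLog (dst p X a) = _
  refine Finset.sum_congr rfl fun a _ => ?_
  simp [Real.negMulLog, neg_mul]

lemma entropy_comp_eq_sum (p : Ω → ℝ) (X : Ω → A) (g : A → B) :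
    entropy p (fun ω => g (X ω)) =
      ∑ a ∈ Finset.univ.image X,
        -(dst p X a * Real.log (dst p (fun ω => g (X ω)) (g a))) := by
  rw [entropy_eq_sum, image_comp_eq X g,
    ← Finset.sum_fiberwise_of_maps_to (g := g)
      (fun a ha => Finset.mem_image_of_mem g ha)
      (fun a => -(dst p X a * Real.log (dst p (fun ω => g (X ω)) (g a))))]
  refine Finset.sum_congr rfl fun b hb => ?_
  have hcg : ∀ a ∈ (Finset.univ.image X).filter (fun a => g a = b),
      -(dst p X a * Real.log (dst p (fun ω => g (X ω)) (g a)))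
        = -(dst p X a * Real.log (dst p (fun ω => g (X ω)) b)) := by
    intro a ha
    rw [(Finset.mem_filter.1 ha).2]
  rw [Finset.sum_congr rfl hcg, Finset.sum_neg_distrib, ← Finset.sum_mul, ← dst_comp]

lemma one_sub_inv_le_log {x : ℝ} (hx : 0 < x) : 1 - x⁻¹ ≤ Real.log x := by
  have := Real.log_le_sub_one_of_pos (inv_pos.2 hx)
  rw [Real.log_inv] at this
  linarith

def proj13 {A B C : Type*} : A × B × C → A × C := fun w => (w.1, w.2.2)
def proj23 {A B C : Type*} : A × B × C → B × C := fun w => w.2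
def projZ {A B C : Type*} : A × B × C → C := fun w => w.2.2

lemma entropy_submod_gen {p : Ω → ℝ} (hp0 : ∀ ω, 0 ≤ p ω) (hp1 : ∑ ω, p ω = 1)
    (W : Ω → A × B × C) :
    entropy p W + entropy p (fun ω => projZ (W ω)) ≤
      entropy p (fun ω => proj13 (W ω)) + entropy p (fun ω => proj23 (W ω)) := by
  have e13 := entropy_comp_eq_sum p W (proj13 (A := A) (B := B) (C := C))
  have e23 := entropy_comp_eq_sum p W (proj23 (A := A) (B := B) (C := C))
  have eZ := entropy_comp_eq_sum p W (projZ (A := A) (B := B) (C := C))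
  have eW := entropy_eq_sum p W
  set S : Finset (A × B × C) := Finset.univ.image W with hS
  have hmnn : ∀ w, 0 ≤ dst p W w := fun w => dst_nonneg hp0 W w
  set D : A × B × C → ℝ := fun w =>
    dst p W w * Real.log (dst p W w)
      + dst p W w * Real.log (dst p (fun ω => projZ (W ω)) (projZ w))
      - dst p W w * Real.log (dst p (fun ω => proj13 (W ω)) (proj13 w))
      - dst p W w * Real.log (dst p (fun ω => proj23 (W ω)) (proj23 w)) with hD
  have key : 0 ≤ ∑ w ∈ S, D w := by
    set Spos := S.filter (fun w => 0 < dst p W w) with hSpos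
    have hrestr : ∑ w ∈ S, D w = ∑ w ∈ Spos, D w := by
      rw [hSpos, Finset.sum_filter_of_ne]
      intro w _ hne
      rcases (hmnn w).eq_or_lt with h0 | h
      · exact absurd (show D w = 0 by rw [hD]; simp only [← h0]; ring) hne
      · exact h
    have hsum1 : ∑ w ∈ S, dst p W w = 1 := by rw [hS, sum_dst, hp1]
    have hsumpos : ∑ w ∈ Spos, dst p W w = 1 := by
      rw [hSpos, Finset.sum_filter_of_ne, hsum1]
      intro w _ hne
      exact (hmnn w).lt_of_ne (Ne.symm hne)
    have hpt : ∀ w ∈ Spos,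
        dst p W w - dst p (fun ω => proj13 (W ω)) (proj13 w)
            * dst p (fun ω => proj23 (W ω)) (proj23 w)
            / dst p (fun ω => projZ (W ω)) (projZ w) ≤ D w := by
      intro w hw
      have hwpos : 0 < dst p W w := (Finset.mem_filter.1 hw).2
      have h13 := dst_comp_ge hp0 W (proj13 (A := A) (B := B) (C := C)) w
      have h23 := dst_comp_ge hp0 W (proj23 (A := A) (B := B) (C := C)) w
      have hZ := dst_comp_ge hp0 W (projZ (A := A) (B := B) (C := C)) w
      set a := dst p W w
      set a13 := dst p (fun ω => proj13 (W ω)) (proj13 w)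
      set a23 := dst p (fun ω => proj23 (W ω)) (proj23 w)
      set aZ := dst p (fun ω => projZ (W ω)) (projZ w)
      have h13p : 0 < a13 := lt_of_lt_of_le hwpos h13
      have h23p : 0 < a23 := lt_of_lt_of_le hwpos h23
      have hZp : 0 < aZ := lt_of_lt_of_le hwpos hZ
      have hx : 0 < a * aZ / (a13 * a23) := by positivity
      have hlog := one_sub_inv_le_log hx
      have hlogeq : Real.log (a * aZ / (a13 * a23))
          = Real.log a + Real.log aZ - Real.log a13 - Real.log a23 := by
        rw [Real.log_div (by positivity) (by positivity),
          Real.log_mul (ne_of_gt hwpos) (ne_of_gt hZp),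
          Real.log_mul (ne_of_gt h13p) (ne_of_gt h23p)]
        ring
      have hinv : (a * aZ / (a13 * a23))⁻¹ = a13 * a23 / (a * aZ) := by
        rw [inv_div]
      rw [hlogeq, hinv] at hlog
      have hmul : a * (1 - a13 * a23 / (a * aZ)) ≤
          a * (Real.log a + Real.log aZ - Real.log a13 - Real.log a23) :=
        mul_le_mul_of_nonneg_left hlog (le_of_lt hwpos)
      have hexp : a * (1 - a13 * a23 / (a * aZ)) = a - a13 * a23 / aZ := by
        rw [mul_sub, mul_one, mul_div_assoc', mul_div_mul_left _ _ (ne_of_gt hwpos)]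
      rw [hexp] at hmul
      calc a - a13 * a23 / aZ
          ≤ a * (Real.log a + Real.log aZ - Real.log a13 - Real.log a23) := hmul
        _ = D w := by rw [hD]; ring
    set S13 := (Finset.univ.image (fun ω => proj13 (W ω))).filter
      (fun u => 0 < dst p (fun ω => proj13 (W ω)) u) with hS13
    set S23 := (Finset.univ.image (fun ω => proj23 (W ω))).filter
      (fun v => 0 < dst p (fun ω => proj23 (W ω)) v) with hS23
    set bigT := (S13 ×ˢ S23).filter (fun uv => uv.1.2 = uv.2.2) with hbigT
    have hcorr : ∑ w ∈ Spos,
        dst p (fun ω => proj13 (W ω)) (proj13 w)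
          * dst p (fun ω => proj23 (W ω)) (proj23 w)
          / dst p (fun ω => projZ (W ω)) (projZ w) ≤ 1 := by
      have hinj : Set.InjOn (fun w : A × B × C => (proj13 w, proj23 w)) ↑Spos := by
        intro w _ w' _ h
        have h1 : w.1 = w'.1 := congrArg (fun u : (A × C) × (B × C) => u.1.1) h
        have h2 : w.2 = w'.2 := congrArg (fun u : (A × C) × (B × C) => u.2) h
        exact Prod.ext h1 h2
      have hproj : ∀ w : A × B × C, projZ w = (proj13 w).2 := fun w => rfl
      have himg : ∑ w ∈ Spos,
          dst p (fun ω => proj13 (W ω)) (proj13 w)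
            * dst p (fun ω => proj23 (W ω)) (proj23 w)
            / dst p (fun ω => projZ (W ω)) (projZ w)
          = ∑ uv ∈ Spos.image (fun w => (proj13 w, proj23 w)),
              dst p (fun ω => proj13 (W ω)) uv.1
                * dst p (fun ω => proj23 (W ω)) uv.2
                / dst p (fun ω => projZ (W ω)) uv.1.2 := by
        rw [Finset.sum_image fun w hw w' hw' h => hinj hw hw' h]
        rfl
      have hsubset : Spos.image (fun w => (proj13 w, proj23 w)) ⊆ bigT := by
        intro uv huv
        rcases Finset.mem_image.1 huv with ⟨w, hw, rfl⟩
        have hwS := (Finset.mem_filter.1 hw).1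
        have hwpos := (Finset.mem_filter.1 hw).2
        rw [hS] at hwS
        rcases Finset.mem_image.1 hwS with ⟨ω, _, rfl⟩
        refine Finset.mem_filter.2 ⟨Finset.mem_product.2 ⟨?_, ?_⟩, rfl⟩
        · exact Finset.mem_filter.2 ⟨Finset.mem_image_of_mem _ (Finset.mem_univ ω),
            lt_of_lt_of_le hwpos (dst_comp_ge hp0 W _ _)⟩
        · exact Finset.mem_filter.2 ⟨Finset.mem_image_of_mem _ (Finset.mem_univ ω),
            lt_of_lt_of_le hwpos (dst_comp_ge hp0 W _ _)⟩
      have hnn : ∀ uv ∈ bigT, 0 ≤ dst p (fun ω => proj13 (W ω)) uv.1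
          * dst p (fun ω => proj23 (W ω)) uv.2
          / dst p (fun ω => projZ (W ω)) uv.1.2 := by
        intro uv _
        have h1 := dst_nonneg hp0 (fun ω => proj13 (W ω)) uv.1
        have h2 := dst_nonneg hp0 (fun ω => proj23 (W ω)) uv.2
        have h3 := dst_nonneg hp0 (fun ω => projZ (W ω)) uv.1.2
        positivity
      have hstep : ∑ w ∈ Spos,
          dst p (fun ω => proj13 (W ω)) (proj13 w)
            * dst p (fun ω => proj23 (W ω)) (proj23 w)
            / dst p (fun ω => projZ (W ω)) (projZ w)
          ≤ ∑ uv ∈ bigT,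
              dst p (fun ω => proj13 (W ω)) uv.1
                * dst p (fun ω => proj23 (W ω)) uv.2
                / dst p (fun ω => projZ (W ω)) uv.1.2 := by
        rw [himg]
        exact Finset.sum_le_sum_of_subset_of_nonneg hsubset fun uv h _ => hnn uv h
      have hbig : ∑ uv ∈ bigT,
          dst p (fun ω => proj13 (W ω)) uv.1
            * dst p (fun ω => proj23 (W ω)) uv.2
            / dst p (fun ω => projZ (W ω)) uv.1.2 ≤ 1 := by
        rw [hbigT, Finset.sum_filter, Finset.sum_product]
        have hub : ∀ u ∈ S13,
            (∑ v ∈ S23, if u.2 = v.2 then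
                dst p (fun ω => proj13 (W ω)) u
                  * dst p (fun ω => proj23 (W ω)) v
                  / dst p (fun ω => projZ (W ω)) u.2 else 0)
              ≤ dst p (fun ω => proj13 (W ω)) u := by
          intro u hu
          rw [hS13] at hu
          have hupos : 0 < dst p (fun ω => proj13 (W ω)) u :=
            (Finset.mem_filter.1 hu).2
          have hZu : dst p (fun ω => proj13 (W ω)) u
              ≤ dst p (fun ω => projZ (W ω)) u.2 := by
            have := dst_comp_ge hp0 (fun ω => proj13 (W ω)) Prod.snd u
            exact this
          have hZupos : 0 < dst p (fun ω => projZ (W ω)) u.2 :=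
            lt_of_lt_of_le hupos hZu
          have hfib : ∑ v ∈ (Finset.univ.image (fun ω => proj23 (W ω))).filter
              (fun v => Prod.snd v = u.2), dst p (fun ω => proj23 (W ω)) v
                = dst p (fun ω => projZ (W ω)) u.2 := by
            have h := dst_comp p (fun ω => proj23 (W ω)) Prod.snd u.2
            exact h.symm
          have hinner : (∑ v ∈ S23, if u.2 = v.2 then
              dst p (fun ω => proj13 (W ω)) u
                * dst p (fun ω => proj23 (W ω)) v
                / dst p (fun ω => projZ (W ω)) u.2 else 0)
              = (dst p (fun ω => proj13 (W ω)) u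
                  / dst p (fun ω => projZ (W ω)) u.2)
                * ∑ v ∈ S23.filter (fun v => Prod.snd v = u.2),
                    dst p (fun ω => proj23 (W ω)) v := by
            rw [Finset.mul_sum, ← Finset.sum_filter]
            refine Finset.sum_congr ?_ fun v hv => by ring
            ext v
            simp only [Finset.mem_filter, and_congr_right_iff]
            intro _
            exact ⟨Eq.symm, Eq.symm⟩
          rw [hinner]
          have hle : ∑ v ∈ S23.filter (fun v => Prod.snd v = u.2),
              dst p (fun ω => proj23 (W ω)) v
                ≤ dst p (fun ω => projZ (W ω)) u.2 := by
            rw [← hfib]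
            refine Finset.sum_le_sum_of_subset_of_nonneg ?_
              (fun v _ _ => dst_nonneg hp0 _ v)
            intro v hv
            rcases Finset.mem_filter.1 hv with ⟨hv1, hv2⟩
            rw [hS23] at hv1
            exact Finset.mem_filter.2 ⟨(Finset.mem_filter.1 hv1).1, hv2⟩
          calc (dst p (fun ω => proj13 (W ω)) u
                  / dst p (fun ω => projZ (W ω)) u.2)
                * ∑ v ∈ S23.filter (fun v => Prod.snd v = u.2),
                    dst p (fun ω => proj23 (W ω)) v
              ≤ (dst p (fun ω => proj13 (W ω)) u
                  / dst p (fun ω => projZ (W ω)) u.2)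
                * dst p (fun ω => projZ (W ω)) u.2 :=
                mul_le_mul_of_nonneg_left hle (by positivity)
            _ = dst p (fun ω => proj13 (W ω)) u := div_mul_cancel₀ _ (ne_of_gt hZupos)
        calc ∑ u ∈ S13, ∑ v ∈ S23, (if u.2 = v.2 then
                dst p (fun ω => proj13 (W ω)) u
                  * dst p (fun ω => proj23 (W ω)) v
                  / dst p (fun ω => projZ (W ω)) u.2 else 0)
            ≤ ∑ u ∈ S13, dst p (fun ω => proj13 (W ω)) u := Finset.sum_le_sum hub
          _ ≤ ∑ u ∈ Finset.univ.image (fun ω => proj13 (W ω)),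
                dst p (fun ω => proj13 (W ω)) u := by
              rw [hS13]
              exact Finset.sum_le_sum_of_subset_of_nonneg (Finset.filter_subset _ _)
                fun u _ _ => dst_nonneg hp0 _ u
          _ = 1 := by rw [sum_dst, hp1]
      exact le_trans hstep hbig
    calc (0:ℝ) = 1 - 1 := by ring
      _ ≤ (∑ w ∈ Spos, dst p W w) - ∑ w ∈ Spos,
            dst p (fun ω => proj13 (W ω)) (proj13 w)
              * dst p (fun ω => proj23 (W ω)) (proj23 w)
              / dst p (fun ω => projZ (W ω)) (projZ w) := by
          rw [hsumpos]; linarith [hcorr]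
      _ = ∑ w ∈ Spos, (dst p W w -
            dst p (fun ω => proj13 (W ω)) (proj13 w)
              * dst p (fun ω => proj23 (W ω)) (proj23 w)
              / dst p (fun ω => projZ (W ω)) (projZ w)) := by
          rw [Finset.sum_sub_distrib]
      _ ≤ ∑ w ∈ Spos, D w := Finset.sum_le_sum hpt
      _ = ∑ w ∈ S, D w := hrestr.symm
  have expand : ∑ w ∈ S, D w =
      (entropy p (fun ω => proj13 (W ω)) + entropy p (fun ω => proj23 (W ω)))
        - (entropy p W + entropy p (fun ω => projZ (W ω))) := by
    rw [e13, e23, eZ, eW, hD, hS]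
    rw [← Finset.sum_add_distrib, ← Finset.sum_add_distrib, ← Finset.sum_sub_distrib]
    refine Finset.sum_congr rfl fun w _ => by ring
  linarith [key, expand.le, expand.ge]

lemma entropy_submod {p : Ω → ℝ} (hp0 : ∀ ω, 0 ≤ p ω) (hp1 : ∑ ω, p ω = 1)
    (X : Ω → A) (Y : Ω → B) (Z : Ω → C) :
    entropy p (fun ω => (X ω, (Y ω, Z ω))) + entropy p Z ≤
      entropy p (fun ω => (X ω, Z ω)) + entropy p (fun ω => (Y ω, Z ω)) :=
  entropy_submod_gen hp0 hp1 (fun ω => (X ω, (Y ω, Z ω)))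

/-! ### Derived conditional-entropy lemmas -/

section Derived
variable {p : Ω → ℝ}

lemma entropy_comp' (p : Ω → ℝ) {V : Ω → A} {V' : Ω → B} (g : A → B)
    (hgV : ∀ ω, V' ω = g (V ω))
    (hg : ∀ ω ω', g (V ω) = g (V ω') → V ω = V ω') :
    entropy p V' = entropy p V := by
  rw [show V' = fun ω => g (V ω) from funext hgV]
  exact entropy_comp_injOn p V g hg

lemma entropy_comp_le' (hp0 : ∀ ω, 0 ≤ p ω) {V : Ω → A} {V' : Ω → B} (g : A → B)
    (hgV : ∀ ω, V' ω = g (V ω)) :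
    entropy p V' ≤ entropy p V := by
  rw [show V' = fun ω => g (V ω) from funext hgV]
  exact entropy_comp_le hp0 V g

lemma condEntropy_cond_reduce (hp0 : ∀ ω, 0 ≤ p ω) (hp1 : ∑ ω, p ω = 1)
    (X : Ω → A) (Y : Ω → B) (Z : Ω → C) :
    condEntropy p X (fun ω => (Y ω, Z ω)) ≤ condEntropy p X Z := by
  unfold condEntropy
  have h := entropy_submod hp0 hp1 X Y Z
  have h2 : entropy p (fun ω => (X ω, (Y ω, Z ω)))
      = entropy p (fun ω => (X ω, Y ω, Z ω)) := rfl
  linarith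

lemma condMI_nonneg (hp0 : ∀ ω, 0 ≤ p ω) (hp1 : ∑ ω, p ω = 1)
    (X : Ω → A) (Y : Ω → B) (Z : Ω → C) :
    0 ≤ condMI p X Y Z := by
  unfold condMI
  have := condEntropy_cond_reduce hp0 hp1 X Y Z
  linarith

lemma condEntropy_chain (p : Ω → ℝ) (X : Ω → A) (Y : Ω → B) (Z : Ω → C) :
    condEntropy p (fun ω => (X ω, Y ω)) Z
      = condEntropy p X Z + condEntropy p Y (fun ω => (X ω, Z ω)) := by
  unfold condEntropy
  have h : entropy p (fun ω => ((X ω, Y ω), Z ω))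
      = entropy p (fun ω => (Y ω, (X ω, Z ω))) := by
    refine entropy_comp' p (V := fun ω => (Y ω, (X ω, Z ω)))
      (fun w => ((w.2.1, w.1), w.2.2)) (fun ω => rfl) ?_
    intro ω ω' hh
    have h1 := congrArg (fun u : (A × B) × C => u.1.1) hh
    have h2 := congrArg (fun u : (A × B) × C => u.1.2) hh
    have h3 := congrArg (fun u : (A × B) × C => u.2) hh
    simp only at h1 h2 h3
    exact Prod.ext h2 (Prod.ext h1 h3)
  linarith

lemma condEntropy_eq_zero (p : Ω → ℝ) (X : Ω → A) (Z : Ω → C) (f : C → A)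
    (h : ∀ ω, X ω = f (Z ω)) : condEntropy p X Z = 0 := by
  unfold condEntropy
  have he : entropy p (fun ω => (X ω, Z ω)) = entropy p Z := by
    refine entropy_comp' p (V := Z) (fun c => (f c, c)) (fun ω => by rw [h ω]) ?_
    intro ω ω' hh
    exact congrArg Prod.snd hh
  linarith

lemma condEntropy_comp_le (hp0 : ∀ ω, 0 ≤ p ω) {X : Ω → A} {X' : Ω → B}
    (Z : Ω → C) (g : A → B) (h : ∀ ω, X' ω = g (X ω)) :
    condEntropy p X' Z ≤ condEntropy p X Z := by
  unfold condEntropy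
  have he : entropy p (fun ω => (X' ω, Z ω)) ≤ entropy p (fun ω => (X ω, Z ω)) :=
    entropy_comp_le' hp0 (V := fun ω => (X ω, Z ω))
      (fun w => (g w.1, w.2)) (fun ω => by rw [h ω])
  linarith

lemma condEntropy_congr_fst (p : Ω → ℝ) {X : Ω → A} {X' : Ω → B} (Z : Ω → C)
    (g : A → B) (g' : B → A) (h : ∀ ω, X' ω = g (X ω)) (h' : ∀ ω, X ω = g' (X' ω)) :
    condEntropy p X' Z = condEntropy p X Z := by
  unfold condEntropy
  have he : entropy p (fun ω => (X' ω, Z ω)) = entropy p (fun ω => (X ω, Z ω)) := by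
    refine entropy_comp' p (V := fun ω => (X ω, Z ω))
      (fun w => (g w.1, w.2)) (fun ω => by rw [h ω]) ?_
    intro ω ω' hh
    have h1 := congrArg (fun u : B × C => u.1) hh
    have h2 := congrArg (fun u : B × C => u.2) hh
    simp only at h1 h2
    show (X ω, Z ω) = (X ω', Z ω')
    refine Prod.ext ?_ h2
    show X ω = X ω'
    rw [h' ω, h' ω', h ω, h ω', h1]
  linarith

lemma condEntropy_congr_cond (p : Ω → ℝ) (X : Ω → A) {Z : Ω → C} {Z' : Ω → B}
    (g : C → B) (g' : B → C) (h : ∀ ω, Z' ω = g (Z ω)) (h' : ∀ ω, Z ω = g' (Z' ω)) :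
    condEntropy p X Z' = condEntropy p X Z := by
  unfold condEntropy
  have hinj : ∀ ω ω', g (Z ω) = g (Z ω') → Z ω = Z ω' := by
    intro ω ω' hh
    rw [h' ω, h' ω', h ω, h ω', hh]
  have he1 : entropy p Z' = entropy p Z :=
    entropy_comp' p (V := Z) g h hinj
  have he2 : entropy p (fun ω => (X ω, Z' ω)) = entropy p (fun ω => (X ω, Z ω)) := by
    refine entropy_comp' p (V := fun ω => (X ω, Z ω))
      (fun w => (w.1, g w.2)) (fun ω => by rw [h ω]) ?_
    intro ω ω' hh
    have h1 := congrArg (fun u : A × B => u.1) hh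
    have h2 := congrArg (fun u : A × B => u.2) hh
    simp only at h1 h2
    exact Prod.ext h1 (hinj ω ω' h2)
  linarith

/-- Conditioning on a finer variable gives smaller conditional entropy. -/
lemma condEntropy_le_of_det (hp0 : ∀ ω, 0 ≤ p ω) (hp1 : ∑ ω, p ω = 1)
    (X : Ω → A) {Z : Ω → C} {Z' : Ω → B} (f : B → C) (h : ∀ ω, Z ω = f (Z' ω)) :
    condEntropy p X Z' ≤ condEntropy p X Z := by
  have he : condEntropy p X Z' = condEntropy p X (fun ω => (Z' ω, Z ω)) := by
    refine condEntropy_congr_cond p X (Z := fun ω => (Z' ω, Z ω)) (Z' := Z') Prod.fst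
      (fun b => (b, f b)) (fun ω => rfl)
      (fun ω => by show (Z' ω, Z ω) = (Z' ω, f (Z' ω)); rw [← h ω])
  rw [he]
  exact condEntropy_cond_reduce hp0 hp1 X Z' Z

/-- Adding a determined component does not change conditional entropy. -/
lemma condEntropy_pair_det (p : Ω → ℝ) (Xa : Ω → A) (Xb : Ω → B) (Z : Ω → C)
    (f : A → C → B) (h : ∀ ω, Xb ω = f (Xa ω) (Z ω)) :
    condEntropy p (fun ω => (Xa ω, Xb ω)) Z = condEntropy p Xa Z := by
  rw [condEntropy_chain]
  rw [condEntropy_eq_zero p Xb (fun ω => (Xa ω, Z ω)) (fun w => f w.1 w.2)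
    (fun ω => by rw [h ω])]
  ring

/-- Subadditivity of conditional entropy for finite tuples. -/
lemma condEntropy_tuple_le (hp0 : ∀ ω, 0 ≤ p ω) (hp1 : ∑ ω, p ω = 1)
    {α : Type*} (n : ℕ) (X : Fin n → Ω → α) (Z : Ω → C) :
    condEntropy p (fun ω => fun i : Fin n => X i ω) Z
      ≤ ∑ i : Fin n, condEntropy p (X i) Z := by
  induction n with
  | zero =>
    rw [condEntropy_eq_zero p _ Z (fun _ => (fun i : Fin 0 => i.elim0))
      (fun ω => funext fun i => i.elim0)]
    simp
  | succ n ih =>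
    have hsplit : condEntropy p (fun ω => fun i : Fin (n + 1) => X i ω) Z
        = condEntropy p (fun ω =>
            ((X 0 ω), (fun i : Fin n => X i.succ ω))) Z := by
      refine condEntropy_congr_fst p Z
        (X' := fun ω => fun i : Fin (n + 1) => X i ω)
        (X := fun ω => ((X 0 ω), (fun i : Fin n => X i.succ ω)))
        (g := fun w : α × (Fin n → α) => Fin.cons w.1 w.2)
        (g' := fun f : Fin (n+1) → α => (f 0, fun i => f i.succ)) ?_ ?_
      · intro ω
        funext i
        refine Fin.cases ?_ ?_ i
        · simp
        · intro j; simp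
      · intro ω; rfl
    rw [hsplit, condEntropy_chain]
    have h1 : condEntropy p (fun ω => fun i : Fin n => X i.succ ω)
        (fun ω => (X 0 ω, Z ω)) ≤ condEntropy p (fun ω => fun i : Fin n => X i.succ ω) Z :=
      condEntropy_le_of_det hp0 hp1 _ Prod.snd (fun ω => rfl)
    have h2 := ih (fun i => X i.succ)
    rw [Fin.sum_univ_succ]
    linarith [h2]

/-- Splitting off the last component of a tuple. -/
lemma condEntropy_snoc (p : Ω → ℝ) {α : Type*} (n : ℕ) (X : Fin (n + 1) → Ω → α)
    (Z : Ω → C) :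
    condEntropy p (fun ω => fun i : Fin (n + 1) => X i ω) Z
      = condEntropy p (fun ω =>
          ((fun i : Fin n => X i.castSucc ω), X (Fin.last n) ω)) Z := by
  refine condEntropy_congr_fst p Z
    (X' := fun ω => fun i : Fin (n + 1) => X i ω)
    (X := fun ω => ((fun i : Fin n => X i.castSucc ω), X (Fin.last n) ω))
    (g := fun w : (Fin n → α) × α => Fin.snoc w.1 w.2)
    (g' := fun f : Fin (n+1) → α => (fun i => f i.castSucc, f (Fin.last n))) ?_ ?_
  · intro ω
    funext i
    refine Fin.lastCases ?_ ?_ i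
    · simp
    · intro j; simp
  · intro ω; rfl

end Derived


end MISIT


namespace MISIT
open Classical Real Finset

section Vertices

variable (k rp : ℕ)

lemma idx_lt {i a p n : ℕ} (hi : i < p) (ha : a < n) : i * n + a < p * n := by
  have h1 : i * n + a < (i + 1) * n := by
    have : (i + 1) * n = i * n + n := by ring
    omega
  have h2 : (i + 1) * n ≤ p * n := Nat.mul_le_mul_right n hi
  omega

lemma idx_inj {i j a b n : ℕ} (ha : a < n) (hb : b < n) (h : i * n + a = j * n + b) :
    i = j ∧ a = b := by
  rcases lt_trichotomy i j with hij | hij | hij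
  · exfalso
    have h1 : (i + 1) * n ≤ j * n := Nat.mul_le_mul_right n hij
    have h2 : (i + 1) * n = i * n + n := by ring
    omega
  · subst hij
    exact ⟨rfl, Nat.add_left_cancel h⟩
  · exfalso
    have h1 : (j + 1) * n ≤ i * n := Nat.mul_le_mul_right n hij
    have h2 : (j + 1) * n = j * n + n := by ring
    omega

lemma pVert_val (side : Bool) (i : Fin (misPhat k rp)) (a : Fin (misN k rp)) :
    (pVert k rp side i a).val
      = (bif side then misNhat k rp else 0) + (i.val * misN k rp + a.val) := rfl

lemma fVert_val (side : Bool) (j : Fin (misFhat k rp)) (b : Fin (misN k rp - 1)) :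
    (fVert k rp side j b).val
      = (bif side then misNhat k rp else 0) +
        (misN k rp * misPhat k rp + (j.val * (misN k rp - 1) + b.val)) := rfl

lemma pOff_lt_nhat (i : Fin (misPhat k rp)) (a : Fin (misN k rp)) :
    i.val * misN k rp + a.val < misN k rp * misPhat k rp :=
  (Nat.mul_comm (misPhat k rp) (misN k rp)) ▸ idx_lt i.isLt a.isLt

lemma nhat_eq : misNhat k rp
    = misN k rp * misPhat k rp + misFhat k rp * (misN k rp - 1) := by
  unfold misNhat; ring

lemma fOff_lt (j : Fin (misFhat k rp)) (b : Fin (misN k rp - 1)) :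
    j.val * (misN k rp - 1) + b.val < misFhat k rp * (misN k rp - 1) :=
  idx_lt j.isLt b.isLt

lemma pVert_inj {side side' : Bool} {i i' : Fin (misPhat k rp)}
    {a a' : Fin (misN k rp)}
    (h : pVert k rp side i a = pVert k rp side' i' a') :
    side = side' ∧ i = i' ∧ a = a' := by
  have hval := congrArg Fin.val h
  rw [pVert_val, pVert_val] at hval
  have h1 := pOff_lt_nhat k rp i a
  have h2 := pOff_lt_nhat k rp i' a'
  have hle : misN k rp * misPhat k rp ≤ misNhat k rp := by
    rw [nhat_eq]; omega
  have hside : side = side' := by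
    cases side <;> cases side' <;> simp only [Bool.cond_false, Bool.cond_true] at hval <;>
      first | rfl | omega
  subst hside
  have hoff : i.val * misN k rp + a.val = i'.val * misN k rp + a'.val := by
    cases side <;> simp only [Bool.cond_false, Bool.cond_true] at hval <;> omega
  obtain ⟨hi, ha⟩ := idx_inj a.isLt a'.isLt hoff
  exact ⟨rfl, Fin.ext hi, Fin.ext ha⟩

lemma fVert_inj {side side' : Bool} {j j' : Fin (misFhat k rp)}
    {b b' : Fin (misN k rp - 1)}
    (h : fVert k rp side j b = fVert k rp side' j' b') :
    side = side' ∧ j = j' ∧ b = b' := by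
  have hval := congrArg Fin.val h
  rw [fVert_val, fVert_val] at hval
  have h1 := fOff_lt k rp j b
  have h2 := fOff_lt k rp j' b'
  have hle : misN k rp * misPhat k rp + misFhat k rp * (misN k rp - 1)
      = misNhat k rp := (nhat_eq k rp).symm
  have hside : side = side' := by
    cases side <;> cases side' <;> simp only [Bool.cond_false, Bool.cond_true] at hval <;>
      first | rfl | omega
  subst hside
  have hoff : j.val * (misN k rp - 1) + b.val
      = j'.val * (misN k rp - 1) + b'.val := by
    cases side <;> simp only [Bool.cond_false, Bool.cond_true] at hval <;> omega
  obtain ⟨hj, hb⟩ := idx_inj b.isLt b'.isLt hoff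
  exact ⟨rfl, Fin.ext hj, Fin.ext hb⟩

lemma pVert_ne_fVert (side side' : Bool) (i : Fin (misPhat k rp))
    (a : Fin (misN k rp)) (j : Fin (misFhat k rp)) (b : Fin (misN k rp - 1)) :
    pVert k rp side i a ≠ fVert k rp side' j b := by
  intro h
  have hval := congrArg Fin.val h
  rw [pVert_val, fVert_val] at hval
  have h1 := pOff_lt_nhat k rp i a
  have h2 := fOff_lt k rp j b
  have hle : misN k rp * misPhat k rp + misFhat k rp * (misN k rp - 1)
      = misNhat k rp := (nhat_eq k rp).symm
  cases side <;> cases side' <;>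
    simp only [Bool.cond_false, Bool.cond_true] at hval <;> omega

/-- Encoding of a half-instance principal-block index as a global block index. -/
def encB (side : Bool) (i : Fin (misPhat k rp)) : Fin (misP k rp) :=
  ⟨(bif side then misPhat k rp else 0) + i.val, by
    have := i.isLt
    unfold misP
    cases side <;> simp only [Bool.cond_false, Bool.cond_true] <;> omega⟩

/-- Encoding of a half-instance fooling-block index as a global fooling index. -/
def encF (side : Bool) (j : Fin (misFhat k rp)) : Fin (misF k rp) :=
  ⟨(bif side then misFhat k rp else 0) + j.val, by
    have := j.isLt
    unfold misF
    cases side <;> simp only [Bool.cond_false, Bool.cond_true] <;> omega⟩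

lemma blockVert_encB (side : Bool) (i : Fin (misPhat k rp)) (a : Fin (misN k rp)) :
    blockVert k rp (encB k rp side i) a = pVert k rp side i a := by
  unfold blockVert encB
  cases side
  · simp only [Bool.cond_false]
    rw [dif_pos (by simpa using i.isLt)]
    congr 1
    apply Fin.ext
    simp
  · simp only [Bool.cond_true]
    rw [dif_neg (by omega)]
    congr 1
    apply Fin.ext
    simp

lemma foolVert_encF (side : Bool) (j : Fin (misFhat k rp)) (b : Fin (misN k rp - 1)) :
    foolVert k rp (encF k rp side j) b = fVert k rp side j b := by
  unfold foolVert encF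
  cases side
  · simp only [Bool.cond_false]
    rw [dif_pos (by simpa using j.isLt)]
    congr 1
    apply Fin.ext
    simp
  · simp only [Bool.cond_true]
    rw [dif_neg (by omega)]
    congr 1
    apply Fin.ext
    simp

lemma blockVert_eq_pVert (I : Fin (misP k rp)) (a : Fin (misN k rp)) :
    ∃ side i, I = encB k rp side i ∧
      blockVert k rp I a = pVert k rp side i a := by
  by_cases h : I.val < misPhat k rp
  · refine ⟨false, ⟨I.val, h⟩, ?_, ?_⟩
    · apply Fin.ext; simp [encB]
    · rw [← blockVert_encB]
      congr 1
      apply Fin.ext; simp [encB]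
  · have hI := I.isLt
    unfold misP at hI
    refine ⟨true, ⟨I.val - misPhat k rp, by omega⟩, ?_, ?_⟩
    · apply Fin.ext; simp [encB]; omega
    · rw [← blockVert_encB]
      congr 1
      apply Fin.ext; simp [encB]; omega

lemma foolVert_eq_fVert (J : Fin (misF k rp)) (b : Fin (misN k rp - 1)) :
    ∃ side j, J = encF k rp side j ∧
      foolVert k rp J b = fVert k rp side j b := by
  by_cases h : J.val < misFhat k rp
  · refine ⟨false, ⟨J.val, h⟩, ?_, ?_⟩
    · apply Fin.ext; simp [encF]
    · rw [← foolVert_encF]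
      congr 1
      apply Fin.ext; simp [encF]
  · have hJ := J.isLt
    unfold misF at hJ
    refine ⟨true, ⟨J.val - misFhat k rp, by omega⟩, ?_, ?_⟩
    · apply Fin.ext; simp [encF]; omega
    · rw [← foolVert_encF]
      congr 1
      apply Fin.ext; simp [encF]; omega

lemma blockVert_inj {I I' : Fin (misP k rp)} {a a' : Fin (misN k rp)}
    (h : blockVert k rp I a = blockVert k rp I' a') : I = I' ∧ a = a' := by
  obtain ⟨s, i, hI, he⟩ := blockVert_eq_pVert k rp I a
  obtain ⟨s', i', hI', he'⟩ := blockVert_eq_pVert k rp I' a'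
  rw [he, he'] at h
  obtain ⟨hs, hi, ha⟩ := pVert_inj k rp h
  subst hs; subst hi
  exact ⟨hI.trans hI'.symm, ha⟩

lemma foolVert_inj {J J' : Fin (misF k rp)} {b b' : Fin (misN k rp - 1)}
    (h : foolVert k rp J b = foolVert k rp J' b') : J = J' ∧ b = b' := by
  obtain ⟨s, j, hJ, he⟩ := foolVert_eq_fVert k rp J b
  obtain ⟨s', j', hJ', he'⟩ := foolVert_eq_fVert k rp J' b'
  rw [he, he'] at h
  obtain ⟨hs, hj, hb⟩ := fVert_inj k rp h
  subst hs; subst hj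
  exact ⟨hJ.trans hJ'.symm, hb⟩

lemma blockVert_ne_foolVert (I : Fin (misP k rp)) (a : Fin (misN k rp))
    (J : Fin (misF k rp)) (b : Fin (misN k rp - 1)) :
    blockVert k rp I a ≠ foolVert k rp J b := by
  obtain ⟨s, i, _, he⟩ := blockVert_eq_pVert k rp I a
  obtain ⟨s', j, _, he'⟩ := foolVert_eq_fVert k rp J b
  rw [he, he']
  exact pVert_ne_fVert k rp s s' i a j b

lemma vert_cover (v : Fin (misN k (rp + 1))) :
    (∃ I a, v = blockVert k rp I a) ∨ (∃ J b, v = foolVert k rp J b) := by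
  have hv : v.val < 2 * misNhat k rp := lt_of_lt_of_eq v.isLt (misN_succ k rp)
  set n := misN k rp
  set ph := misPhat k rp
  set fh := misFhat k rp
  set nh := misNhat k rp with hnh
  have hnhat : nh = n * ph + fh * (n - 1) := nhat_eq k rp
  -- decompose into side and offset
  have hoff : ∃ (side : Bool) (off : ℕ), off < nh ∧
      v.val = (bif side then nh else 0) + off := by
    by_cases h : v.val < nh
    · exact ⟨false, v.val, h, by simp⟩
    · exact ⟨true, v.val - nh, by omega, by simp; omega⟩
  obtain ⟨side, off, hoffl, hvval⟩ := hoff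
  by_cases h2 : off < n * ph
  · left
    have hn : 0 < n := by
      rcases Nat.eq_zero_or_pos n with h0 | h0
      · rw [h0] at h2; omega
      · exact h0
    have hi : off / n < ph := by
      rw [Nat.div_lt_iff_lt_mul hn, Nat.mul_comm]
      exact h2
    have ha : off % n < n := Nat.mod_lt _ hn
    refine ⟨encB k rp side ⟨off / n, hi⟩, ⟨off % n, ha⟩, ?_⟩
    rw [blockVert_encB]
    apply Fin.ext
    rw [pVert_val, hvval]
    simp only [Fin.val_mk]
    congr 1
    have hdm := Nat.div_add_mod off n
    rw [Nat.mul_comm (off / n) n]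
    omega
  · right
    have hoff2 : off - n * ph < fh * (n - 1) := by omega
    have hn1 : 0 < n - 1 := by
      rcases Nat.eq_zero_or_pos (n - 1) with h0 | h0
      · rw [h0] at hoff2; omega
      · exact h0
    set off' := off - n * ph with hoff'
    have hj : off' / (n - 1) < fh := by
      rw [Nat.div_lt_iff_lt_mul hn1]
      omega
    have hb : off' % (n - 1) < n - 1 := Nat.mod_lt _ hn1
    refine ⟨encF k rp side ⟨off' / (n - 1), hj⟩, ⟨off' % (n - 1), hb⟩, ?_⟩
    rw [foolVert_encF]
    apply Fin.ext
    rw [fVert_val, hvval]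
    simp only [Fin.val_mk]
    congr 1
    have hdm := Nat.div_add_mod off' (n - 1)
    have e1 : n = misN k rp := rfl
    have e2 : ph = misPhat k rp := rfl
    rw [← e1, ← e2, Nat.mul_comm (off' / (n - 1)) (n - 1)]
    omega

end Vertices

section Classify

variable {k rp : ℕ} (σ : Equiv.Perm (Fin (misN k (rp + 1))))

lemma inBlock_unique {i i' : Fin (misP k rp)} {v}
    (h : inBlock k rp i σ v) (h' : inBlock k rp i' σ v) : i = i' := by
  obtain ⟨a, ha⟩ := h
  obtain ⟨a', ha'⟩ := h'
  rw [ha] at ha'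
  exact ((blockVert_inj k rp (σ.injective ha'.symm)).1).symm

lemma inBlock_isPrincipal {i : Fin (misP k rp)} {v}
    (h : inBlock k rp i σ v) : isPrincipal k rp σ v := by
  obtain ⟨a, ha⟩ := h
  exact ⟨i, a, ha⟩

lemma not_principal_and_fool {v} (h : isPrincipal k rp σ v)
    (h' : isFool k rp σ v) : False := by
  obtain ⟨i, a, ha⟩ := h
  obtain ⟨j, b, hb⟩ := h'
  rw [ha] at hb
  exact blockVert_ne_foolVert k rp i a j b (σ.injective hb)

lemma principal_or_fool (v) :
    isPrincipal k rp σ v ∨ isFool k rp σ v := by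
  rcases vert_cover k rp (σ.symm v) with ⟨I, a, h⟩ | ⟨J, b, h⟩
  · left
    exact ⟨I, a, by rw [← h, Equiv.apply_symm_apply]⟩
  · right
    exact ⟨J, b, by rw [← h, Equiv.apply_symm_apply]⟩

end Classify

end MISIT



namespace MISIT
open Classical Real Finset

section Prob

lemma misQ_nonneg (k : ℕ) : ∀ r (s : misS k r), 0 ≤ misQ k r s := by
  intro r
  induction r with
  | zero =>
    intro s
    unfold misQ
    positivity
  | succ r ih =>
    intro s
    show (0:ℝ) ≤ ((∏ i, misQ k r (s.1.1 i)) * ∏ x, misQ k r (s.1.2 x)) *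
      ((∏ i, misQ k r (s.2.1.1 i)) * ∏ x, misQ k r (s.2.1.2 x)) *
      (1 / (Nat.factorial (misN k (r + 1)) : ℝ))
    have h1 : (0:ℝ) ≤ ∏ i, misQ k r (s.1.1 i) :=
      Finset.prod_nonneg fun i _ => ih _
    have h2 : (0:ℝ) ≤ ∏ x, misQ k r (s.1.2 x) :=
      Finset.prod_nonneg fun i _ => ih _
    have h3 : (0:ℝ) ≤ ∏ i, misQ k r (s.2.1.1 i) :=
      Finset.prod_nonneg fun i _ => ih _
    have h4 : (0:ℝ) ≤ ∏ x, misQ k r (s.2.1.2 x) :=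
      Finset.prod_nonneg fun i _ => ih _
    have h5 : (0:ℝ) ≤ 1 / (Nat.factorial (misN k (r + 1)) : ℝ) := by positivity
    positivity

lemma sum_prod_fun {ι S : Type*} [Fintype ι] [DecidableEq ι] [Fintype S] (q : S → ℝ) :
    ∑ f : ι → S, ∏ i, q (f i) = ∏ _i : ι, ∑ s, q s := by
  rw [Fintype.prod_sum (fun (_ : ι) (s : S) => q s)]

lemma misQ_sum (k : ℕ) : ∀ r, ∑ s : misS k r, misQ k r s = 1 := by
  intro r
  induction r with
  | zero =>
    show ∑ _s : Finset (Fin k), ((1 / 2 : ℝ)) ^ k = 1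
    rw [Finset.sum_const, Finset.card_univ, Fintype.card_finset, Fintype.card_fin,
      nsmul_eq_mul]
    push_cast
    rw [← mul_pow]
    norm_num
  | succ r ih =>
    have hsumT : ∑ x : (Fin (misPhat k r) → misS k r) ×
        ((Fin (misPhat k r) × Fin (misN k r) × Fin (misFhat k r)) → misS k r),
        (∏ i, misQ k r (x.1 i)) * ∏ y, misQ k r (x.2 y) = 1 := by
      rw [Fintype.sum_prod_type]
      have hmul : ∀ x1 : Fin (misPhat k r) → misS k r,
          ∑ x2 : (Fin (misPhat k r) × Fin (misN k r) × Fin (misFhat k r)) → misS k r,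
            (∏ i, misQ k r (x1 i)) * ∏ y, misQ k r (x2 y)
          = (∏ i, misQ k r (x1 i)) *
            ∑ x2 : (Fin (misPhat k r) × Fin (misN k r) × Fin (misFhat k r)) → misS k r,
              ∏ y, misQ k r (x2 y) := fun x1 => by rw [Finset.mul_sum]
      rw [Finset.sum_congr rfl fun x1 _ => hmul x1, ← Finset.sum_mul]
      rw [sum_prod_fun, sum_prod_fun, ih]
      simp
    have hσ : ∑ _σ : Equiv.Perm (Fin (misN k (r + 1))),
        (1 / (Nat.factorial (misN k (r + 1)) : ℝ)) = 1 := by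
      rw [Finset.sum_const, Finset.card_univ, Fintype.card_perm, Fintype.card_fin,
        nsmul_eq_mul]
      rw [mul_one_div, div_self]
      exact_mod_cast Nat.factorial_ne_zero _
    have hconv : ∑ s : misS k (r + 1), misQ k (r + 1) s
        = ∑ x : ((Fin (misPhat k r) → misS k r) ×
            ((Fin (misPhat k r) × Fin (misN k r) × Fin (misFhat k r)) → misS k r)) ×
          (((Fin (misPhat k r) → misS k r) ×
            ((Fin (misPhat k r) × Fin (misN k r) × Fin (misFhat k r)) → misS k r)) ×
            Equiv.Perm (Fin (misN k (r + 1)))),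
          ((∏ i, misQ k r (x.1.1 i)) * ∏ y, misQ k r (x.1.2 y)) *
          ((∏ i, misQ k r (x.2.1.1 i)) * ∏ y, misQ k r (x.2.1.2 y)) *
          (1 / (Nat.factorial (misN k (r + 1)) : ℝ)) :=
      Fintype.sum_equiv (Equiv.refl _) _ _ (fun s => rfl)
    rw [hconv, Fintype.sum_prod_type]
    have hinner : ∀ a : (Fin (misPhat k r) → misS k r) ×
        ((Fin (misPhat k r) × Fin (misN k r) × Fin (misFhat k r)) → misS k r),
        ∑ x : ((Fin (misPhat k r) → misS k r) ×
            ((Fin (misPhat k r) × Fin (misN k r) × Fin (misFhat k r)) → misS k r)) ×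
            Equiv.Perm (Fin (misN k (r + 1))),
          ((∏ i, misQ k r (a.1 i)) * ∏ y, misQ k r (a.2 y)) *
          ((∏ i, misQ k r (x.1.1 i)) * ∏ y, misQ k r (x.1.2 y)) *
          (1 / (Nat.factorial (misN k (r + 1)) : ℝ))
        = ((∏ i, misQ k r (a.1 i)) * ∏ y, misQ k r (a.2 y)) := by
      intro a
      rw [Fintype.sum_prod_type]
      have h1 : ∀ b : (Fin (misPhat k r) → misS k r) ×
          ((Fin (misPhat k r) × Fin (misN k r) × Fin (misFhat k r)) → misS k r),
          ∑ _σ : Equiv.Perm (Fin (misN k (r + 1))),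
            ((∏ i, misQ k r (a.1 i)) * ∏ y, misQ k r (a.2 y)) *
            ((∏ i, misQ k r (b.1 i)) * ∏ y, misQ k r (b.2 y)) *
            (1 / (Nat.factorial (misN k (r + 1)) : ℝ))
          = ((∏ i, misQ k r (a.1 i)) * ∏ y, misQ k r (a.2 y)) *
            (((∏ i, misQ k r (b.1 i)) * ∏ y, misQ k r (b.2 y)) *
            (∑ _σ : Equiv.Perm (Fin (misN k (r + 1))),
              (1 / (Nat.factorial (misN k (r + 1)) : ℝ)))) := by
        intro b
        rw [Finset.mul_sum, Finset.mul_sum]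
        exact Finset.sum_congr rfl fun σ _ => by ring
      rw [Finset.sum_congr rfl fun b _ => h1 b]
      rw [← Finset.mul_sum]
      rw [hσ]
      simp only [mul_one]
      rw [hsumT, mul_one]
    rw [Finset.sum_congr rfl fun a _ => hinner a, hsumT]

end Prob

end MISIT



namespace MISIT
open Classical Real Finset

section Graph

variable {k rp : ℕ}

lemma sigmaRV_def (s : misS k (rp + 1)) : sigmaRV k rp s = s.2.2 := rfl

lemma misG_adj_iff (s : misS k (rp + 1)) (u v : Fin (misN k (rp + 1))) :
    (misG k (rp + 1) s).Adj u v ↔ u ≠ v ∧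
      (misAdj k rp
          (fun side i => misG k rp ((bif side then s.2.1 else s.1).1 i))
          (fun side x => misG k rp ((bif side then s.2.1 else s.1).2 x))
          ((s.2.2)⁻¹ u) ((s.2.2)⁻¹ v) ∨
        misAdj k rp
          (fun side i => misG k rp ((bif side then s.2.1 else s.1).1 i))
          (fun side x => misG k rp ((bif side then s.2.1 else s.1).2 x))
          ((s.2.2)⁻¹ v) ((s.2.2)⁻¹ u)) := by
  show (SimpleGraph.fromRel _).Adj u v ↔ _
  rw [SimpleGraph.fromRel_adj]

lemma inBlock_of_inv_eq {s : misS k (rp + 1)} {u : Fin (misN k (rp + 1))}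
    {side : Bool} {i : Fin (misPhat k rp)} {a : Fin (misN k rp)}
    (h : (s.2.2)⁻¹ u = pVert k rp side i a) :
    inBlock k rp (encB k rp side i) (sigmaRV k rp s) u := by
  refine ⟨a, ?_⟩
  rw [blockVert_encB, sigmaRV_def, ← h]
  exact (Equiv.apply_symm_apply s.2.2 u).symm

lemma isFool_of_inv_eq {s : misS k (rp + 1)} {u : Fin (misN k (rp + 1))}
    {side : Bool} {j : Fin (misFhat k rp)} {b : Fin (misN k rp - 1)}
    (h : (s.2.2)⁻¹ u = fVert k rp side j b) :
    isFool k rp (sigmaRV k rp s) u := by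
  refine ⟨encF k rp side j, b, ?_⟩
  rw [foolVert_encF, sigmaRV_def, ← h]
  exact (Equiv.apply_symm_apply s.2.2 u).symm

/-- Classification of the edges of a level-`(rp+1)` instance. -/
lemma adj_classify {s : misS k (rp + 1)} {u v : Fin (misN k (rp + 1))}
    (h : (misG k (rp + 1) s).Adj u v) :
    (∃ I, inBlock k rp I (sigmaRV k rp s) u ∧ inBlock k rp I (sigmaRV k rp s) v) ∨
    ((∃ I, inBlock k rp I (sigmaRV k rp s) u) ∧ isFool k rp (sigmaRV k rp s) v) ∨
    ((∃ I, inBlock k rp I (sigmaRV k rp s) v) ∧ isFool k rp (sigmaRV k rp s) u) ∨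
    (isFool k rp (sigmaRV k rp s) u ∧ isFool k rp (sigmaRV k rp s) v) := by
  rw [misG_adj_iff] at h
  obtain ⟨hne, hrel⟩ := h
  have main : ∀ u' v' : Fin (misN k (rp + 1)),
      misAdj k rp
        (fun side i => misG k rp ((bif side then s.2.1 else s.1).1 i))
        (fun side x => misG k rp ((bif side then s.2.1 else s.1).2 x))
        ((s.2.2)⁻¹ u') ((s.2.2)⁻¹ v') →
      (∃ I, inBlock k rp I (sigmaRV k rp s) u' ∧ inBlock k rp I (sigmaRV k rp s) v') ∨
      ((∃ I, inBlock k rp I (sigmaRV k rp s) u') ∧ isFool k rp (sigmaRV k rp s) v') ∨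
      (isFool k rp (sigmaRV k rp s) u' ∧ isFool k rp (sigmaRV k rp s) v') := by
    intro u' v' hadj
    rcases hadj with ⟨side, i, a, b, _, hu, hv⟩ | ⟨side, i, a, j, b, _, hu, hv⟩ |
      ⟨jU, bU, jV, bV, hu, hv⟩
    · exact Or.inl ⟨encB k rp side i, inBlock_of_inv_eq hu, inBlock_of_inv_eq hv⟩
    · exact Or.inr (Or.inl ⟨⟨encB k rp side i, inBlock_of_inv_eq hu⟩,
        isFool_of_inv_eq hv⟩)
    · exact Or.inr (Or.inr ⟨isFool_of_inv_eq hu, isFool_of_inv_eq hv⟩)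
  rcases hrel with h1 | h1
  · rcases main u v h1 with h2 | h2 | h2
    · exact Or.inl h2
    · exact Or.inr (Or.inl h2)
    · exact Or.inr (Or.inr (Or.inr h2))
  · rcases main v u h1 with h2 | h2 | h2
    · exact Or.inl ⟨h2.choose, h2.choose_spec.2, h2.choose_spec.1⟩
    · exact Or.inr (Or.inr (Or.inl h2))
    · exact Or.inr (Or.inr (Or.inr ⟨h2.2, h2.1⟩))

lemma no_cross_block {s : misS k (rp + 1)} {u v : Fin (misN k (rp + 1))}
    {I J : Fin (misP k rp)}
    (h : (misG k (rp + 1) s).Adj u v)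
    (hu : inBlock k rp I (sigmaRV k rp s) u)
    (hv : inBlock k rp J (sigmaRV k rp s) v) : I = J := by
  rcases adj_classify h with ⟨I', hu', hv'⟩ | ⟨_, hf⟩ | ⟨_, hf⟩ | ⟨hf, _⟩
  · rw [inBlock_unique _ hu hu', inBlock_unique _ hv hv']
  · exact absurd hf (fun hf => not_principal_and_fool _ (inBlock_isPrincipal _ hv) hf)
  · exact absurd hf (fun hf => not_principal_and_fool _ (inBlock_isPrincipal _ hu) hf)
  · exact absurd hf (fun hf => not_principal_and_fool _ (inBlock_isPrincipal _ hu) hf)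

lemma edge_mem_BT {s : misS k (rp + 1)} {u v : Fin (misN k (rp + 1))}
    {I : Fin (misP k rp)}
    (h : (misG k (rp + 1) s).Adj u v)
    (hv : inBlock k rp I (sigmaRV k rp s) v) :
    s(u, v) ∈ B_RV k rp I s ∨ s(u, v) ∈ T_RV k rp I s := by
  have hedge : s(u, v) ∈ edgesRV k rp s :=
    Finset.mem_filter.mpr ⟨Finset.mem_univ _, (SimpleGraph.mem_edgeSet _).2 h⟩
  rcases principal_or_fool (k := k) (rp := rp) (sigmaRV k rp s) u with hp | hf
  · obtain ⟨J, a, ha⟩ := hp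
    have hu : inBlock k rp J (sigmaRV k rp s) u := ⟨a, ha⟩
    have hIJ : J = I := no_cross_block h hu hv
    subst hIJ
    left
    refine Finset.mem_filter.mpr ⟨hedge, ?_⟩
    intro w hw
    rcases Sym2.mem_iff.1 hw with rfl | rfl
    · exact hu
    · exact hv
  · right
    exact Finset.mem_filter.mpr ⟨hedge, v, u, Sym2.eq_swap, hv, hf⟩

/-- Reconstruction of a principal vertex's neighborhood from `(B_i, T_i)`. -/
def nbhdOfBT (y : Finset (Sym2 (Fin (misN k (rp + 1)))) ×
    Finset (Sym2 (Fin (misN k (rp + 1))))) (v : Fin (misN k (rp + 1))) :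
    Set (Fin (misN k (rp + 1))) :=
  {u | s(u, v) ∈ y.1 ∨ s(u, v) ∈ y.2}

lemma neighborSet_eq {s : misS k (rp + 1)} {v : Fin (misN k (rp + 1))}
    {I : Fin (misP k rp)} (hv : inBlock k rp I (sigmaRV k rp s) v) :
    (misG k (rp + 1) s).neighborSet v
      = nbhdOfBT (B_RV k rp I s, T_RV k rp I s) v := by
  ext u
  simp only [SimpleGraph.mem_neighborSet, nbhdOfBT, Set.mem_setOf_eq]
  constructor
  · intro h
    exact edge_mem_BT h.symm hv
  · intro h
    have hedge : s(u, v) ∈ edgesRV k rp s := by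
      rcases h with h | h
      · exact (Finset.mem_filter.1 h).1
      · exact (Finset.mem_filter.1 h).1
    have := (Finset.mem_filter.1 hedge).2
    exact ((SimpleGraph.mem_edgeSet _).1 this).symm

end Graph

end MISIT



namespace MISIT
open Classical Real Finset

section Protocol

variable (k rp : ℕ)
variable (msgf : Fin (misN k (rp + 1)) → Set (Fin (misN k (rp + 1))) →
  List (Fin (misN k (rp + 1)) → Fin (2 ^ k)) → Fin (2 ^ k))

/-- Building a blackboard from a sequence of round-message functions. -/
def mkBB (f : ℕ → Fin (misN k (rp + 1)) → Fin (2 ^ k)) :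
    ℕ → List (Fin (misN k (rp + 1)) → Fin (2 ^ k))
  | 0 => []
  | t + 1 => mkBB f t ++ [f t]

lemma mkBB_congr (f g : ℕ → Fin (misN k (rp + 1)) → Fin (2 ^ k)) (t : ℕ)
    (h : ∀ u, u < t → f u = g u) : mkBB k rp f t = mkBB k rp g t := by
  induction t with
  | zero => rfl
  | succ t ih =>
    show mkBB k rp f t ++ [f t] = mkBB k rp g t ++ [g t]
    rw [ih (fun u hu => h u (Nat.lt_succ_of_lt hu)), h t (Nat.lt_succ_self t)]

lemma detBB_eq (s : misS k (rp + 1)) (t : ℕ) :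
    detBB k rp msgf s t = mkBB k rp (fun u => roundMsg k rp msgf s u) t := by
  induction t with
  | zero => rfl
  | succ t ih =>
    show detBB k rp msgf s t ++ [roundMsg k rp msgf s t]
      = mkBB k rp (fun u => roundMsg k rp msgf s u) t ++ [roundMsg k rp msgf s t]
    rw [ih]

/-- Reconstructing the round messages from principal and fooling messages. -/
noncomputable def recRound (P F : Fin (misN k (rp + 1)) → Option (Fin (2 ^ k))) :
    Fin (misN k (rp + 1)) → Fin (2 ^ k) :=
  fun v => ((P v).orElse (fun _ => F v)).getD ⟨0, pow_pos (by norm_num) k⟩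

lemma recRound_eq (s : misS k (rp + 1)) (t : ℕ) :
    recRound k rp (MP_RV k rp msgf t s) (MF_RV k rp msgf t s)
      = roundMsg k rp msgf s t := by
  funext v
  rcases principal_or_fool (k := k) (rp := rp) (sigmaRV k rp s) v with hp | hf
  · have h1 : MP_RV k rp msgf t s v = some (roundMsg k rp msgf s t v) := by
      rw [MP_RV, if_pos hp]
    rw [recRound, h1]
    rfl
  · have hnp : ¬ isPrincipal k rp (sigmaRV k rp s) v :=
      fun hp => not_principal_and_fool _ hp hf
    have h1 : MP_RV k rp msgf t s v = none := by
      rw [MP_RV, if_neg hnp]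
    have h2 : MF_RV k rp msgf t s v = some (roundMsg k rp msgf s t v) := by
      rw [MF_RV, if_pos hf]
    rw [recRound, h1, h2]
    rfl

/-- The function computing `M^{(t'+1)}_{P,i}` from `G_i`, the earlier principal and
fooling messages and the permutation. -/
noncomputable def NiFun (i : Fin (misP k rp)) (t' : ℕ)
    (y : Finset (Sym2 (Fin (misN k (rp + 1)))) × Finset (Sym2 (Fin (misN k (rp + 1)))))
    (pre : Fin t' → Fin (misN k (rp + 1)) → Option (Fin (2 ^ k)))
    (fool : Fin t' → Fin (misN k (rp + 1)) → Option (Fin (2 ^ k)))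
    (σ : Equiv.Perm (Fin (misN k (rp + 1)))) :
    Fin (misN k (rp + 1)) → Option (Fin (2 ^ k)) :=
  fun v => if inBlock k rp i σ v then
    some (msgf v (nbhdOfBT y v)
      (mkBB k rp (fun u => if h : u < t' then
        recRound k rp (pre ⟨u, h⟩) (fool ⟨u, h⟩)
        else fun _ => ⟨0, pow_pos (by norm_num) k⟩) t'))
  else none

lemma NiFun_eq (s : misS k (rp + 1)) (i : Fin (misP k rp)) (t' : ℕ) :
    MPi_RV k rp msgf i t' s
      = NiFun k rp msgf i t' (B_RV k rp i s, T_RV k rp i s)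
          (fun u : Fin t' => MP_RV k rp msgf u.val s)
          (fun u : Fin t' => MF_RV k rp msgf u.val s)
          (sigmaRV k rp s) := by
  funext v
  by_cases hb : inBlock k rp i (sigmaRV k rp s) v
  · rw [MPi_RV, if_pos hb, NiFun, if_pos hb]
    congr 1
    show roundMsg k rp msgf s t' v = _
    rw [roundMsg]
    rw [show (misG k (rp + 1) s).neighborSet v
      = nbhdOfBT (B_RV k rp i s, T_RV k rp i s) v from neighborSet_eq hb]
    rw [detBB_eq]
    congr 1
    refine mkBB_congr k rp _ _ t' ?_
    intro u hu
    rw [dif_pos hu]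
    exact (recRound_eq k rp msgf s u).symm
  · rw [MPi_RV, if_neg hb, NiFun, if_neg hb]

/-- Merging the per-block principal messages into `M^{(t'+1)}_P`. -/
noncomputable def mergeFun
    (g : Fin (misP k rp) → Fin (misN k (rp + 1)) → Option (Fin (2 ^ k))) :
    Fin (misN k (rp + 1)) → Option (Fin (2 ^ k)) :=
  fun v => if h : ∃ m, ∃ i, g i v = some m then some (Classical.choose h) else none

lemma merge_eq (s : misS k (rp + 1)) (t' : ℕ) :
    MP_RV k rp msgf t' s
      = mergeFun k rp (fun i => MPi_RV k rp msgf i t' s) := by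
  funext v
  by_cases hp : isPrincipal k rp (sigmaRV k rp s) v
  · obtain ⟨i0, a, ha⟩ := hp
    have hb : inBlock k rp i0 (sigmaRV k rp s) v := ⟨a, ha⟩
    have hex : ∃ m, ∃ i, MPi_RV k rp msgf i t' s v = some m :=
      ⟨roundMsg k rp msgf s t' v, i0, by rw [MPi_RV, if_pos hb]⟩
    rw [MP_RV, if_pos ⟨i0, a, ha⟩, mergeFun, dif_pos hex]
    obtain ⟨i1, hi1⟩ := Classical.choose_spec hex
    congr 1
    by_cases hb1 : inBlock k rp i1 (sigmaRV k rp s) v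
    · rw [MPi_RV, if_pos hb1] at hi1
      exact (Option.some.injEq _ _ ▸ hi1 : _).symm ▸ rfl
    · rw [MPi_RV, if_neg hb1] at hi1
      exact absurd hi1 (by simp)
  · have hnone : ∀ i, MPi_RV k rp msgf i t' s v = none := by
      intro i
      rw [MPi_RV, if_neg]
      intro hb
      exact hp (inBlock_isPrincipal _ hb)
    rw [MP_RV, if_neg hp, mergeFun, dif_neg]
    rintro ⟨m, i, hmi⟩
    rw [hnone i] at hmi
    exact absurd hmi (by simp)

/-- `M^{(t'+1)}_{P,i}` is a projection of `(M^{(t'+1)}_P, Σ)`. -/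
lemma MPi_eq_proj (s : misS k (rp + 1)) (i : Fin (misP k rp)) (t' : ℕ) :
    MPi_RV k rp msgf i t' s
      = fun v => if inBlock k rp i (sigmaRV k rp s) v
          then MP_RV k rp msgf t' s v else none := by
  funext v
  by_cases hb : inBlock k rp i (sigmaRV k rp s) v
  · rw [MPi_RV, if_pos hb, if_pos hb, MP_RV, if_pos (inBlock_isPrincipal _ hb)]
  · rw [MPi_RV, if_neg hb, if_neg hb]

/-- Reconstruction of the whole graph from `(G_1, …, G_p)` and `Σ`. -/
def graphOf (Y : Fin (misP k rp) →
      Finset (Sym2 (Fin (misN k (rp + 1)))) × Finset (Sym2 (Fin (misN k (rp + 1)))))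
    (σ : Equiv.Perm (Fin (misN k (rp + 1)))) : SimpleGraph (Fin (misN k (rp + 1))) :=
  SimpleGraph.fromRel (fun u v =>
    (∃ i, s(u, v) ∈ (Y i).1 ∨ s(u, v) ∈ (Y i).2) ∨
    ((∃ j b, u = σ (fVert k rp false j b)) ∧ (∃ j b, v = σ (fVert k rp true j b))))

lemma graphOf_eq (s : misS k (rp + 1)) :
    misG k (rp + 1) s
      = graphOf k rp (fun i => (B_RV k rp i s, T_RV k rp i s)) (sigmaRV k rp s) := by
  have hBT : ∀ (i : Fin (misP k rp)) (u v : Fin (misN k (rp + 1))),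
      (s(u, v) ∈ B_RV k rp i s ∨ s(u, v) ∈ T_RV k rp i s) →
      ((misG k (rp + 1) s).Adj u v) := by
    intro i u v h
    have hedge : s(u, v) ∈ edgesRV k rp s := by
      rcases h with h | h
      · exact (Finset.mem_filter.1 h).1
      · exact (Finset.mem_filter.1 h).1
    exact (SimpleGraph.mem_edgeSet _).1 (Finset.mem_filter.1 hedge).2
  ext u v
  rw [misG_adj_iff, graphOf, SimpleGraph.fromRel_adj]
  dsimp only
  constructor
  · rintro ⟨hne, hrel⟩
    refine ⟨hne, ?_⟩
    have hadj : (misG k (rp + 1) s).Adj u v := by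
      rw [misG_adj_iff]; exact ⟨hne, hrel⟩
    have main : ∀ u' v' : Fin (misN k (rp + 1)),
        (misG k (rp + 1) s).Adj u' v' →
        misAdj k rp
          (fun side i => misG k rp ((bif side then s.2.1 else s.1).1 i))
          (fun side x => misG k rp ((bif side then s.2.1 else s.1).2 x))
          ((s.2.2)⁻¹ u') ((s.2.2)⁻¹ v') →
        (∃ i, s(u', v') ∈ B_RV k rp i s ∨ s(u', v') ∈ T_RV k rp i s) ∨
        ((∃ j b, u' = (sigmaRV k rp s) (fVert k rp false j b)) ∧
          (∃ j b, v' = (sigmaRV k rp s) (fVert k rp true j b))) := by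
      intro u' v' hadj' hrel'
      rcases hrel' with ⟨side, i, a, b, _, hu, hv⟩ | ⟨side, i, a, j, b, _, hu, hv⟩ |
        ⟨jU, bU, jV, bV, hu, hv⟩
      · exact Or.inl ⟨encB k rp side i,
          edge_mem_BT hadj' (inBlock_of_inv_eq hv)⟩
      · refine Or.inl ⟨encB k rp side i, Or.inr ?_⟩
        refine Finset.mem_filter.mpr ⟨Finset.mem_filter.mpr
          ⟨Finset.mem_univ _, (SimpleGraph.mem_edgeSet _).2 hadj'⟩, ?_⟩
        exact ⟨u', v', rfl, inBlock_of_inv_eq hu, isFool_of_inv_eq hv⟩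
      · refine Or.inr ⟨⟨jU, bU, ?_⟩, ⟨jV, bV, ?_⟩⟩
        · rw [sigmaRV_def, ← hu]; exact (Equiv.apply_symm_apply _ _).symm
        · rw [sigmaRV_def, ← hv]; exact (Equiv.apply_symm_apply _ _).symm
    rcases hrel with h1 | h1
    · rcases main u v hadj h1 with h2 | h2
      · exact Or.inl (Or.inl h2)
      · exact Or.inl (Or.inr h2)
    · rcases main v u hadj.symm h1 with h2 | h2
      · rcases h2 with ⟨i, h3⟩
        refine Or.inl (Or.inl ⟨i, ?_⟩)
        rwa [Sym2.eq_swap] at h3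
      · exact Or.inr (Or.inr h2)
  · rintro ⟨hne, hrel⟩
    refine ⟨hne, ?_⟩
    have hcross : ∀ u' v' : Fin (misN k (rp + 1)),
        ((∃ j b, u' = (sigmaRV k rp s) (fVert k rp false j b)) ∧
          (∃ j b, v' = (sigmaRV k rp s) (fVert k rp true j b))) →
        misAdj k rp
          (fun side i => misG k rp ((bif side then s.2.1 else s.1).1 i))
          (fun side x => misG k rp ((bif side then s.2.1 else s.1).2 x))
          ((s.2.2)⁻¹ u') ((s.2.2)⁻¹ v') := by
      rintro u' v' ⟨⟨j, b, hu⟩, ⟨j', b', hv⟩⟩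
      refine Or.inr (Or.inr ⟨j, b, j', b', ?_, ?_⟩)
      · rw [hu, sigmaRV_def, Equiv.Perm.coe_inv, Equiv.symm_apply_apply]
      · rw [hv, sigmaRV_def, Equiv.Perm.coe_inv, Equiv.symm_apply_apply]
    rcases hrel with (⟨i, hBTi⟩ | hcr) | (⟨i, hBTi⟩ | hcr)
    · exact ((misG_adj_iff s u v).1 (hBT i u v hBTi)).2
    · exact Or.inl (hcross u v hcr)
    · have h3 : s(u, v) ∈ B_RV k rp i s ∨ s(u, v) ∈ T_RV k rp i s := by
        rwa [Sym2.eq_swap] at hBTi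
      exact ((misG_adj_iff s u v).1 (hBT i u v h3)).2
    · exact Or.inr (hcross v u hcr)

end Protocol

end MISIT



namespace MISIT
open Classical Real Finset

section Protocol2

variable (k rp : ℕ)
variable (msgf : Fin (misN k (rp + 1)) → Set (Fin (misN k (rp + 1))) →
  List (Fin (misN k (rp + 1)) → Fin (2 ^ k)) → Fin (2 ^ k))

/-- The blackboard as a function of the graph. -/
def bbOfG (G : SimpleGraph (Fin (misN k (rp + 1)))) :
    ℕ → List (Fin (misN k (rp + 1)) → Fin (2 ^ k))
  | 0 => []
  | t + 1 => bbOfG G t ++ [fun v => msgf v (G.neighborSet v) (bbOfG G t)]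

lemma detBB_eq_bbOfG (s : misS k (rp + 1)) (t : ℕ) :
    detBB k rp msgf s t = bbOfG k rp msgf (misG k (rp + 1) s) t := by
  induction t with
  | zero => rfl
  | succ t ih =>
    show detBB k rp msgf s t ++
        [fun v => msgf v ((misG k (rp + 1) s).neighborSet v) (detBB k rp msgf s t)]
      = bbOfG k rp msgf (misG k (rp + 1) s) t ++
        [fun v => msgf v ((misG k (rp + 1) s).neighborSet v)
          (bbOfG k rp msgf (misG k (rp + 1) s) t)]
    rw [ih]

/-- The principal messages of all rounds, as a function of `(G, Σ)`. -/
noncomputable def XFun (T : ℕ)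
    (Y : Fin (misP k rp) →
      Finset (Sym2 (Fin (misN k (rp + 1)))) × Finset (Sym2 (Fin (misN k (rp + 1)))))
    (σ : Equiv.Perm (Fin (misN k (rp + 1)))) :
    Fin (T + 1) → Fin (misN k (rp + 1)) → Option (Fin (2 ^ k)) :=
  fun t' v => if isPrincipal k rp σ v then
    some (msgf v ((graphOf k rp Y σ).neighborSet v)
      (bbOfG k rp msgf (graphOf k rp Y σ) t'.val))
  else none

lemma XFun_eq (s : misS k (rp + 1)) (T : ℕ) :
    (fun t' : Fin (T + 1) => MP_RV k rp msgf t'.val s)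
      = XFun k rp msgf T (fun i => (B_RV k rp i s, T_RV k rp i s))
          (sigmaRV k rp s) := by
  funext t' v
  show MP_RV k rp msgf t'.val s v = _
  rw [MP_RV, XFun]
  by_cases hp : isPrincipal k rp (sigmaRV k rp s) v
  · rw [if_pos hp, if_pos hp]
    congr 1
    show roundMsg k rp msgf s t'.val v = _
    rw [roundMsg, detBB_eq_bbOfG, graphOf_eq]
  · rw [if_neg hp, if_neg hp]

/-- The random variables of the main theorem, as named functions. -/
noncomputable def LmRV (m : ℕ) (s : misS k (rp + 1)) :
    Fin m → Fin (misN k (rp + 1)) → Option (Fin (2 ^ k)) :=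
  fun t' => MP_RV k rp msgf t'.val s

noncomputable def PmRV (m : ℕ) (s : misS k (rp + 1)) :
    Fin (misN k (rp + 1)) → Option (Fin (2 ^ k)) :=
  MP_RV k rp msgf m s

noncomputable def NiRV (i : Fin (misP k rp)) (m : ℕ) (s : misS k (rp + 1)) :
    Fin (misN k (rp + 1)) → Option (Fin (2 ^ k)) :=
  MPi_RV k rp msgf i m s

noncomputable def YiRV (i : Fin (misP k rp)) (s : misS k (rp + 1)) :
    Finset (Sym2 (Fin (misN k (rp + 1)))) × Finset (Sym2 (Fin (misN k (rp + 1)))) :=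
  (B_RV k rp i s, T_RV k rp i s)

noncomputable def ZRV (T : ℕ) (s : misS k (rp + 1)) :
    (Fin T → Fin (misN k (rp + 1)) → Option (Fin (2 ^ k))) ×
      Equiv.Perm (Fin (misN k (rp + 1))) :=
  ((fun t' : Fin T => MF_RV k rp msgf t'.val s), sigmaRV k rp s)

/-- `M^{(m+1)}_{P,i}` is determined by `(L_m, (G_i, Z))`. -/
lemma Ni_det (T m : ℕ) (hm : m ≤ T) (i : Fin (misP k rp)) (s : misS k (rp + 1)) :
    NiRV k rp msgf i m s
      = (fun w : (Fin m → Fin (misN k (rp + 1)) → Option (Fin (2 ^ k))) ×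
            ((Finset (Sym2 (Fin (misN k (rp + 1)))) ×
              Finset (Sym2 (Fin (misN k (rp + 1))))) ×
            ((Fin T → Fin (misN k (rp + 1)) → Option (Fin (2 ^ k))) ×
              Equiv.Perm (Fin (misN k (rp + 1))))) =>
          NiFun k rp msgf i m w.2.1 w.1
            (fun u : Fin m => w.2.2.1 ⟨u.val, lt_of_lt_of_le u.isLt hm⟩)
            w.2.2.2)
        (LmRV k rp msgf m s, (YiRV k rp i s, ZRV k rp msgf T s)) := by
  exact NiFun_eq k rp msgf s i m

end Protocol2

end MISIT



namespace MISIT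
open Classical Real Finset

section Star

variable (k rp : ℕ)
variable (msgf : Fin (misN k (rp + 1)) → Set (Fin (misN k (rp + 1))) →
  List (Fin (misN k (rp + 1)) → Fin (2 ^ k)) → Fin (2 ^ k))

/-- Key superadditivity: the entropy of the first `m` rounds of principal messages is
at most the total information the individual `G_i` reveal about them. -/
lemma mis_star (T : ℕ) : ∀ m, m ≤ T →
    condEntropy (misQ k (rp + 1)) (LmRV k rp msgf m) (ZRV k rp msgf T)
      ≤ ∑ i : Fin (misP k rp),
          condMI (misQ k (rp + 1)) (LmRV k rp msgf m) (YiRV k rp i)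
            (ZRV k rp msgf T) := by
  have hp0 := misQ_nonneg k (rp + 1)
  have hp1 := misQ_sum k (rp + 1)
  intro m
  induction m with
  | zero =>
    intro _
    rw [condEntropy_eq_zero (misQ k (rp + 1)) (LmRV k rp msgf 0) (ZRV k rp msgf T)
      (fun _ => (fun t' : Fin 0 => t'.elim0))
      (fun s => funext fun t' => t'.elim0)]
    exact Finset.sum_nonneg fun i _ => condMI_nonneg hp0 hp1 _ _ _
  | succ m ih =>
    intro hm1
    have hm : m ≤ T := Nat.le_of_succ_le hm1
    have hIH := ih hm
    -- abbreviations (all definitionally transparent)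
    have e1 : condEntropy (misQ k (rp + 1)) (LmRV k rp msgf (m + 1)) (ZRV k rp msgf T)
        = condEntropy (misQ k (rp + 1))
            (fun s => (LmRV k rp msgf m s, PmRV k rp msgf m s)) (ZRV k rp msgf T) :=
      condEntropy_snoc (misQ k (rp + 1)) m
        (fun j s => MP_RV k rp msgf j.val s) (ZRV k rp msgf T)
    have c1 : condEntropy (misQ k (rp + 1))
          (fun s => (LmRV k rp msgf m s, PmRV k rp msgf m s)) (ZRV k rp msgf T)
        = condEntropy (misQ k (rp + 1)) (LmRV k rp msgf m) (ZRV k rp msgf T)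
          + condEntropy (misQ k (rp + 1)) (PmRV k rp msgf m)
              (fun s => (LmRV k rp msgf m s, ZRV k rp msgf T s)) :=
      condEntropy_chain _ _ _ _
    have e3 : condEntropy (misQ k (rp + 1)) (PmRV k rp msgf m)
          (fun s => (LmRV k rp msgf m s, ZRV k rp msgf T s))
        ≤ ∑ i : Fin (misP k rp), condEntropy (misQ k (rp + 1)) (NiRV k rp msgf i m)
            (fun s => (LmRV k rp msgf m s, ZRV k rp msgf T s)) := by
      have h31 : condEntropy (misQ k (rp + 1)) (PmRV k rp msgf m)
            (fun s => (LmRV k rp msgf m s, ZRV k rp msgf T s))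
          ≤ condEntropy (misQ k (rp + 1))
              (fun s => fun i : Fin (misP k rp) => NiRV k rp msgf i m s)
              (fun s => (LmRV k rp msgf m s, ZRV k rp msgf T s)) :=
        condEntropy_comp_le hp0 _ (mergeFun k rp)
          (fun s => merge_eq k rp msgf s m)
      have h32 := condEntropy_tuple_le hp0 hp1 (misP k rp)
        (fun i => NiRV k rp msgf i m)
        (fun s => (LmRV k rp msgf m s, ZRV k rp msgf T s))
      linarith
    have e4 : ∀ i : Fin (misP k rp),
        condMI (misQ k (rp + 1)) (LmRV k rp msgf m) (YiRV k rp i) (ZRV k rp msgf T)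
          + condEntropy (misQ k (rp + 1)) (NiRV k rp msgf i m)
              (fun s => (LmRV k rp msgf m s, ZRV k rp msgf T s))
        ≤ condMI (misQ k (rp + 1)) (LmRV k rp msgf (m + 1)) (YiRV k rp i)
            (ZRV k rp msgf T) := by
      intro i
      have e1' : condEntropy (misQ k (rp + 1)) (LmRV k rp msgf (m + 1))
            (fun s => (YiRV k rp i s, ZRV k rp msgf T s))
          = condEntropy (misQ k (rp + 1))
              (fun s => (LmRV k rp msgf m s, PmRV k rp msgf m s))
              (fun s => (YiRV k rp i s, ZRV k rp msgf T s)) :=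
        condEntropy_snoc (misQ k (rp + 1)) m
          (fun j s => MP_RV k rp msgf j.val s) _
      have c2 : condEntropy (misQ k (rp + 1))
            (fun s => (LmRV k rp msgf m s, PmRV k rp msgf m s))
            (fun s => (YiRV k rp i s, ZRV k rp msgf T s))
          = condEntropy (misQ k (rp + 1)) (LmRV k rp msgf m)
              (fun s => (YiRV k rp i s, ZRV k rp msgf T s))
            + condEntropy (misQ k (rp + 1)) (PmRV k rp msgf m)
                (fun s => (LmRV k rp msgf m s,
                  (YiRV k rp i s, ZRV k rp msgf T s))) :=
        condEntropy_chain _ _ _ _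
      have swap1 : condEntropy (misQ k (rp + 1))
            (fun s => (NiRV k rp msgf i m s, PmRV k rp msgf m s))
            (fun s => (LmRV k rp msgf m s, ZRV k rp msgf T s))
          = condEntropy (misQ k (rp + 1))
              (fun s => (PmRV k rp msgf m s, NiRV k rp msgf i m s))
              (fun s => (LmRV k rp msgf m s, ZRV k rp msgf T s)) :=
        condEntropy_congr_fst _ _ Prod.swap Prod.swap
          (fun s => rfl) (fun s => rfl)
      have d1 : condEntropy (misQ k (rp + 1))
            (fun s => (PmRV k rp msgf m s, NiRV k rp msgf i m s))
            (fun s => (LmRV k rp msgf m s, ZRV k rp msgf T s))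
          = condEntropy (misQ k (rp + 1)) (PmRV k rp msgf m)
              (fun s => (LmRV k rp msgf m s, ZRV k rp msgf T s)) :=
        condEntropy_pair_det _ _ _ _
          (fun r az => fun v => if inBlock k rp i az.2.2 v then r v else none)
          (fun s => MPi_eq_proj k rp msgf s i m)
      have chainNR : condEntropy (misQ k (rp + 1))
            (fun s => (NiRV k rp msgf i m s, PmRV k rp msgf m s))
            (fun s => (LmRV k rp msgf m s, ZRV k rp msgf T s))
          = condEntropy (misQ k (rp + 1)) (NiRV k rp msgf i m)
              (fun s => (LmRV k rp msgf m s, ZRV k rp msgf T s))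
            + condEntropy (misQ k (rp + 1)) (PmRV k rp msgf m)
                (fun s => (NiRV k rp msgf i m s,
                  (LmRV k rp msgf m s, ZRV k rp msgf T s))) :=
        condEntropy_chain _ _ _ _
      have hfiner : condEntropy (misQ k (rp + 1)) (PmRV k rp msgf m)
            (fun s => (LmRV k rp msgf m s, (YiRV k rp i s, ZRV k rp msgf T s)))
          ≤ condEntropy (misQ k (rp + 1)) (PmRV k rp msgf m)
              (fun s => (NiRV k rp msgf i m s,
                (LmRV k rp msgf m s, ZRV k rp msgf T s))) := by
        refine condEntropy_le_of_det hp0 hp1 (PmRV k rp msgf m)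
          (f := fun w : (Fin m → Fin (misN k (rp + 1)) → Option (Fin (2 ^ k))) ×
              ((Finset (Sym2 (Fin (misN k (rp + 1)))) ×
                Finset (Sym2 (Fin (misN k (rp + 1))))) ×
              ((Fin T → Fin (misN k (rp + 1)) → Option (Fin (2 ^ k))) ×
                Equiv.Perm (Fin (misN k (rp + 1))))) =>
            (NiFun k rp msgf i m w.2.1 w.1
              (fun u : Fin m => w.2.2.1 ⟨u.val, lt_of_lt_of_le u.isLt hm⟩)
              w.2.2.2, (w.1, w.2.2))) ?_
        intro s
        exact congrArg
          (fun x => (x, (LmRV k rp msgf m s, ZRV k rp msgf T s)))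
          (Ni_det k rp msgf T m hm i s)
      have hdef1 : condMI (misQ k (rp + 1)) (LmRV k rp msgf (m + 1)) (YiRV k rp i)
            (ZRV k rp msgf T)
          = condEntropy (misQ k (rp + 1)) (LmRV k rp msgf (m + 1)) (ZRV k rp msgf T)
            - condEntropy (misQ k (rp + 1)) (LmRV k rp msgf (m + 1))
                (fun s => (YiRV k rp i s, ZRV k rp msgf T s)) := rfl
      have hdef2 : condMI (misQ k (rp + 1)) (LmRV k rp msgf m) (YiRV k rp i)
            (ZRV k rp msgf T)
          = condEntropy (misQ k (rp + 1)) (LmRV k rp msgf m) (ZRV k rp msgf T)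
            - condEntropy (misQ k (rp + 1)) (LmRV k rp msgf m)
                (fun s => (YiRV k rp i s, ZRV k rp msgf T s)) := rfl
      linarith
    calc condEntropy (misQ k (rp + 1)) (LmRV k rp msgf (m + 1)) (ZRV k rp msgf T)
        = condEntropy (misQ k (rp + 1)) (LmRV k rp msgf m) (ZRV k rp msgf T)
          + condEntropy (misQ k (rp + 1)) (PmRV k rp msgf m)
              (fun s => (LmRV k rp msgf m s, ZRV k rp msgf T s)) := by
          rw [e1, c1]
      _ ≤ (∑ i : Fin (misP k rp),
            condMI (misQ k (rp + 1)) (LmRV k rp msgf m) (YiRV k rp i)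
              (ZRV k rp msgf T))
          + ∑ i : Fin (misP k rp),
              condEntropy (misQ k (rp + 1)) (NiRV k rp msgf i m)
                (fun s => (LmRV k rp msgf m s, ZRV k rp msgf T s)) :=
          add_le_add hIH e3
      _ = ∑ i : Fin (misP k rp),
            (condMI (misQ k (rp + 1)) (LmRV k rp msgf m) (YiRV k rp i)
              (ZRV k rp msgf T)
            + condEntropy (misQ k (rp + 1)) (NiRV k rp msgf i m)
                (fun s => (LmRV k rp msgf m s, ZRV k rp msgf T s))) :=
          Finset.sum_add_distrib.symm
      _ ≤ ∑ i : Fin (misP k rp),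
            condMI (misQ k (rp + 1)) (LmRV k rp msgf (m + 1)) (YiRV k rp i)
              (ZRV k rp msgf T) :=
          Finset.sum_le_sum fun i _ => e4 i

end Star

end MISIT


/-- Run a deterministic `r`-round protocol with bandwidth `k` on an
input drawn from `D_r^MIS` (`r = rp + 1 ≥ 1`).  For each round `t ∈ [r]`, the total
information revealed by the principal messages of the first `t` rounds about the whole
input `G = (G_1, …, G_{p_r})`, conditioned on the fooling messages of the earlier rounds
and the permutation, is at most the sum over principal blocks of the corresponding
individual information quantities:
`I(M^{(≤t)}_P ; G | M^{(<t)}_F, Σ) ≤ ∑_{i ∈ [p_r]} I(M^{(<t)}_P, M^{(t)}_{P,i} ; G_i | M^{(<t)}_F, Σ)`. -/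
theorem mis_sum_information (k rp : ℕ)
    (msgf : Fin (misN k (rp + 1)) → Set (Fin (misN k (rp + 1))) →
      List (Fin (misN k (rp + 1)) → Fin (2 ^ k)) → Fin (2 ^ k))
    (t : Fin (rp + 1)) :
    condMI (misQ k (rp + 1))
        (fun s => fun t' : Fin (t.val + 1) => MP_RV k rp msgf t'.val s)
        (fun s => fun i : Fin (misP k rp) => (B_RV k rp i s, T_RV k rp i s))
        (fun s => ((fun t' : Fin t.val => MF_RV k rp msgf t'.val s), sigmaRV k rp s)) ≤
      ∑ i : Fin (misP k rp),
        condMI (misQ k (rp + 1))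
          (fun s => ((fun t' : Fin t.val => MP_RV k rp msgf t'.val s),
            MPi_RV k rp msgf i t.val s))
          (fun s => (B_RV k rp i s, T_RV k rp i s))
          (fun s => ((fun t' : Fin t.val => MF_RV k rp msgf t'.val s), sigmaRV k rp s)) := by
  have hp0 := MISIT.misQ_nonneg k (rp + 1)
  have hp1 := MISIT.misQ_sum k (rp + 1)
  show condMI (misQ k (rp + 1)) (MISIT.LmRV k rp msgf (t.val + 1))
      (fun s => fun i : Fin (misP k rp) => MISIT.YiRV k rp i s)
      (MISIT.ZRV k rp msgf t.val)
    ≤ ∑ i : Fin (misP k rp),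
        condMI (misQ k (rp + 1))
          (fun s => (MISIT.LmRV k rp msgf t.val s, MISIT.NiRV k rp msgf i t.val s))
          (MISIT.YiRV k rp i) (MISIT.ZRV k rp msgf t.val)
  -- Step 1: the LHS equals `H(M^{(≤t)}_P | Z)` since the messages are determined
  -- by the input and the permutation.
  have hzero : condEntropy (misQ k (rp + 1)) (MISIT.LmRV k rp msgf (t.val + 1))
      (fun s => ((fun i : Fin (misP k rp) => MISIT.YiRV k rp i s),
        MISIT.ZRV k rp msgf t.val s)) = 0 :=
    MISIT.condEntropy_eq_zero _ _ _
      (fun w => MISIT.XFun k rp msgf t.val w.1 w.2.2)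
      (fun s => MISIT.XFun_eq k rp msgf s t.val)
  have hlhs : condMI (misQ k (rp + 1)) (MISIT.LmRV k rp msgf (t.val + 1))
      (fun s => fun i : Fin (misP k rp) => MISIT.YiRV k rp i s)
      (MISIT.ZRV k rp msgf t.val)
      = condEntropy (misQ k (rp + 1)) (MISIT.LmRV k rp msgf (t.val + 1))
          (MISIT.ZRV k rp msgf t.val) := by
    have hdef : condMI (misQ k (rp + 1)) (MISIT.LmRV k rp msgf (t.val + 1))
        (fun s => fun i : Fin (misP k rp) => MISIT.YiRV k rp i s)
        (MISIT.ZRV k rp msgf t.val)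
        = condEntropy (misQ k (rp + 1)) (MISIT.LmRV k rp msgf (t.val + 1))
            (MISIT.ZRV k rp msgf t.val)
          - condEntropy (misQ k (rp + 1)) (MISIT.LmRV k rp msgf (t.val + 1))
              (fun s => ((fun i : Fin (misP k rp) => MISIT.YiRV k rp i s),
                MISIT.ZRV k rp msgf t.val s)) := rfl
    rw [hdef, hzero]
    ring
  -- Step 2: split off the last round and bound it by the per-block messages.
  have e1 : condEntropy (misQ k (rp + 1)) (MISIT.LmRV k rp msgf (t.val + 1))
      (MISIT.ZRV k rp msgf t.val)
      = condEntropy (misQ k (rp + 1))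
          (fun s => (MISIT.LmRV k rp msgf t.val s, MISIT.PmRV k rp msgf t.val s))
          (MISIT.ZRV k rp msgf t.val) :=
    MISIT.condEntropy_snoc (misQ k (rp + 1)) t.val
      (fun j s => MP_RV k rp msgf j.val s) (MISIT.ZRV k rp msgf t.val)
  have c1 : condEntropy (misQ k (rp + 1))
      (fun s => (MISIT.LmRV k rp msgf t.val s, MISIT.PmRV k rp msgf t.val s))
      (MISIT.ZRV k rp msgf t.val)
      = condEntropy (misQ k (rp + 1)) (MISIT.LmRV k rp msgf t.val)
          (MISIT.ZRV k rp msgf t.val)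
        + condEntropy (misQ k (rp + 1)) (MISIT.PmRV k rp msgf t.val)
            (fun s => (MISIT.LmRV k rp msgf t.val s, MISIT.ZRV k rp msgf t.val s)) :=
    MISIT.condEntropy_chain _ _ _ _
  have e3 : condEntropy (misQ k (rp + 1)) (MISIT.PmRV k rp msgf t.val)
      (fun s => (MISIT.LmRV k rp msgf t.val s, MISIT.ZRV k rp msgf t.val s))
      ≤ ∑ i : Fin (misP k rp),
          condEntropy (misQ k (rp + 1)) (MISIT.NiRV k rp msgf i t.val)
            (fun s => (MISIT.LmRV k rp msgf t.val s, MISIT.ZRV k rp msgf t.val s)) := by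
    have h31 : condEntropy (misQ k (rp + 1)) (MISIT.PmRV k rp msgf t.val)
          (fun s => (MISIT.LmRV k rp msgf t.val s, MISIT.ZRV k rp msgf t.val s))
        ≤ condEntropy (misQ k (rp + 1))
            (fun s => fun i : Fin (misP k rp) => MISIT.NiRV k rp msgf i t.val s)
            (fun s => (MISIT.LmRV k rp msgf t.val s, MISIT.ZRV k rp msgf t.val s)) :=
      MISIT.condEntropy_comp_le hp0 _ (MISIT.mergeFun k rp)
        (fun s => MISIT.merge_eq k rp msgf s t.val)
    have h32 := MISIT.condEntropy_tuple_le hp0 hp1 (misP k rp)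
      (fun i => MISIT.NiRV k rp msgf i t.val)
      (fun s => (MISIT.LmRV k rp msgf t.val s, MISIT.ZRV k rp msgf t.val s))
    linarith
  -- Step 3: each summand on the right-hand side decomposes.
  have rhs_i : ∀ i : Fin (misP k rp),
      condMI (misQ k (rp + 1))
        (fun s => (MISIT.LmRV k rp msgf t.val s, MISIT.NiRV k rp msgf i t.val s))
        (MISIT.YiRV k rp i) (MISIT.ZRV k rp msgf t.val)
      = condMI (misQ k (rp + 1)) (MISIT.LmRV k rp msgf t.val) (MISIT.YiRV k rp i)
          (MISIT.ZRV k rp msgf t.val)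
        + condEntropy (misQ k (rp + 1)) (MISIT.NiRV k rp msgf i t.val)
            (fun s => (MISIT.LmRV k rp msgf t.val s, MISIT.ZRV k rp msgf t.val s)) := by
    intro i
    have c1' : condEntropy (misQ k (rp + 1))
        (fun s => (MISIT.LmRV k rp msgf t.val s, MISIT.NiRV k rp msgf i t.val s))
        (MISIT.ZRV k rp msgf t.val)
        = condEntropy (misQ k (rp + 1)) (MISIT.LmRV k rp msgf t.val)
            (MISIT.ZRV k rp msgf t.val)
          + condEntropy (misQ k (rp + 1)) (MISIT.NiRV k rp msgf i t.val)
              (fun s => (MISIT.LmRV k rp msgf t.val s, MISIT.ZRV k rp msgf t.val s)) :=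
      MISIT.condEntropy_chain _ _ _ _
    have c2' : condEntropy (misQ k (rp + 1))
        (fun s => (MISIT.LmRV k rp msgf t.val s, MISIT.NiRV k rp msgf i t.val s))
        (fun s => (MISIT.YiRV k rp i s, MISIT.ZRV k rp msgf t.val s))
        = condEntropy (misQ k (rp + 1)) (MISIT.LmRV k rp msgf t.val)
            (fun s => (MISIT.YiRV k rp i s, MISIT.ZRV k rp msgf t.val s))
          + condEntropy (misQ k (rp + 1)) (MISIT.NiRV k rp msgf i t.val)
              (fun s => (MISIT.LmRV k rp msgf t.val s,
                (MISIT.YiRV k rp i s, MISIT.ZRV k rp msgf t.val s))) :=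
      MISIT.condEntropy_chain _ _ _ _
    have hz : condEntropy (misQ k (rp + 1)) (MISIT.NiRV k rp msgf i t.val)
        (fun s => (MISIT.LmRV k rp msgf t.val s,
          (MISIT.YiRV k rp i s, MISIT.ZRV k rp msgf t.val s))) = 0 :=
      MISIT.condEntropy_eq_zero _ _ _
        (fun w => MISIT.NiFun k rp msgf i t.val w.2.1 w.1
          (fun u : Fin t.val => w.2.2.1 ⟨u.val, lt_of_lt_of_le u.isLt le_rfl⟩)
          w.2.2.2)
        (fun s => MISIT.Ni_det k rp msgf t.val t.val le_rfl i s)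
    have hdef1 : condMI (misQ k (rp + 1))
        (fun s => (MISIT.LmRV k rp msgf t.val s, MISIT.NiRV k rp msgf i t.val s))
        (MISIT.YiRV k rp i) (MISIT.ZRV k rp msgf t.val)
        = condEntropy (misQ k (rp + 1))
            (fun s => (MISIT.LmRV k rp msgf t.val s, MISIT.NiRV k rp msgf i t.val s))
            (MISIT.ZRV k rp msgf t.val)
          - condEntropy (misQ k (rp + 1))
              (fun s => (MISIT.LmRV k rp msgf t.val s, MISIT.NiRV k rp msgf i t.val s))
              (fun s => (MISIT.YiRV k rp i s, MISIT.ZRV k rp msgf t.val s)) := rfl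
    have hdef2 : condMI (misQ k (rp + 1)) (MISIT.LmRV k rp msgf t.val)
        (MISIT.YiRV k rp i) (MISIT.ZRV k rp msgf t.val)
        = condEntropy (misQ k (rp + 1)) (MISIT.LmRV k rp msgf t.val)
            (MISIT.ZRV k rp msgf t.val)
          - condEntropy (misQ k (rp + 1)) (MISIT.LmRV k rp msgf t.val)
              (fun s => (MISIT.YiRV k rp i s, MISIT.ZRV k rp msgf t.val s)) := rfl
    linarith
  -- Step 4: the key superadditivity bound.
  have hstar := MISIT.mis_star k rp msgf t.val t.val le_rfl
  -- Conclusion.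
  have hsum : ∑ i : Fin (misP k rp),
      condMI (misQ k (rp + 1))
        (fun s => (MISIT.LmRV k rp msgf t.val s, MISIT.NiRV k rp msgf i t.val s))
        (MISIT.YiRV k rp i) (MISIT.ZRV k rp msgf t.val)
      = (∑ i : Fin (misP k rp),
          condMI (misQ k (rp + 1)) (MISIT.LmRV k rp msgf t.val) (MISIT.YiRV k rp i)
            (MISIT.ZRV k rp msgf t.val))
        + ∑ i : Fin (misP k rp),
            condEntropy (misQ k (rp + 1)) (MISIT.NiRV k rp msgf i t.val)
              (fun s => (MISIT.LmRV k rp msgf t.val s,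
                MISIT.ZRV k rp msgf t.val s)) := by
    rw [← Finset.sum_add_distrib]
    exact Finset.sum_congr rfl fun i _ => rhs_i i
  rw [hlhs, e1, c1, hsum]
  linarith
end
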